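/- arXiv:math/0504497 — 10 statements merged into one kernel-verified Lean document; each statement's English description precedes it below -/
import Mathlib

section
/- For every 0 ≤ σ < 1 there exists a constant C_σ such that for every radial function f ∈ H¹(ℝ²), one has ∫₀^∞ f(r)²/r^{2σ} · r dr ≤ C_σ (∫₀^∞ f(r)² r dr)^{1-σ} (∫₀^∞ f'(r)² r dr)^σ. -/
open MeasureTheory Real Set

section WIRhelpers
variable {f : ℝ → ℝ}

lemma myContOn (hdiff : ∀ r ∈ Ioi (0:ℝ), DifferentiableAt ℝ f r) :
    ContinuousOn f (Ioi 0) :=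
  fun r hr => ((hdiff r hr).continuousAt).continuousWithinAt

lemma myAESM (hdiff : ∀ r ∈ Ioi (0:ℝ), DifferentiableAt ℝ f r) :
    AEStronglyMeasurable f (volume.restrict (Ioi 0)) :=
  (myContOn hdiff).aestronglyMeasurable measurableSet_Ioi

lemma myAESM' : AEStronglyMeasurable (deriv f) (volume.restrict (Ioi 0)) :=
  (measurable_deriv f).aestronglyMeasurable

-- integrability of f^2 * r on Ioi 0

lemma intA (hdiff : ∀ r ∈ Ioi (0:ℝ), DifferentiableAt ℝ f r)
    (hint : IntegrableOn (fun r => (f r ^ 2 + (deriv f r)^2) * r) (Ioi 0)) :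
    IntegrableOn (fun r => f r ^ 2 * r) (Ioi 0) := by
  refine hint.mono' (((myAESM hdiff).pow 2).mul aestronglyMeasurable_id) ?_
  filter_upwards [ae_restrict_mem measurableSet_Ioi] with r hr
  have hr0 : (0:ℝ) < r := hr
  have h1 : f r ^ 2 * r ≤ (f r ^ 2 + deriv f r ^ 2) * r := by nlinarith [sq_nonneg (deriv f r)]
  rw [Real.norm_eq_abs, abs_of_nonneg (by positivity)]
  exact h1

lemma intB (hdiff : ∀ r ∈ Ioi (0:ℝ), DifferentiableAt ℝ f r)
    (hint : IntegrableOn (fun r => (f r ^ 2 + (deriv f r)^2) * r) (Ioi 0)) :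
    IntegrableOn (fun r => (deriv f r) ^ 2 * r) (Ioi 0) := by
  refine hint.mono' ((myAESM'.pow 2).mul aestronglyMeasurable_id) ?_
  filter_upwards [ae_restrict_mem measurableSet_Ioi] with r hr
  have hr0 : (0:ℝ) < r := hr
  rw [Real.norm_eq_abs, abs_of_nonneg (by positivity)]
  nlinarith [sq_nonneg (f r)]

lemma intK (hdiff : ∀ r ∈ Ioi (0:ℝ), DifferentiableAt ℝ f r)
    (hint : IntegrableOn (fun r => (f r ^ 2 + (deriv f r)^2) * r) (Ioi 0)) :
    IntegrableOn (fun r => |f r * deriv f r| * r) (Ioi 0) := by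
  refine hint.mono' ((((myAESM hdiff).mul myAESM').norm).mul aestronglyMeasurable_id) ?_
  filter_upwards [ae_restrict_mem measurableSet_Ioi] with r hr
  have hr0 : (0:ℝ) < r := hr
  rw [Real.norm_eq_abs, abs_of_nonneg (by positivity)]
  have : |f r * deriv f r| ≤ f r ^ 2 + deriv f r ^ 2 := by
    rw [abs_mul]
    nlinarith [sq_nonneg (|f r| - |deriv f r|), sq_abs (f r), sq_abs (deriv f r), abs_nonneg (f r), abs_nonneg (deriv f r), sq_nonneg (|f r| + |deriv f r|)]
  nlinarith


-- interval integrability of 2 f f' on [a,b] ⊂ Ioi 0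

lemma intFF (hdiff : ∀ r ∈ Ioi (0:ℝ), DifferentiableAt ℝ f r)
    (hint : IntegrableOn (fun r => (f r ^ 2 + (deriv f r)^2) * r) (Ioi 0))
    {a b : ℝ} (ha : 0 < a) (hab : a ≤ b) :
    IntervalIntegrable (fun s => 2 * f s * deriv f s) volume a b := by
  rw [intervalIntegrable_iff_integrableOn_Ioc_of_le hab]
  have hsub : Ioc a b ⊆ Ioi (0:ℝ) := fun x hx => lt_of_lt_of_le ha hx.1.le
  have hbd : IntegrableOn (fun s => ((f s ^ 2 + (deriv f s)^2) * s) * a⁻¹) (Ioc a b) :=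
    (hint.mono_set hsub).mul_const _
  refine hbd.mono' ?_ ?_
  · exact ((aestronglyMeasurable_const.mul ((myAESM hdiff).mono_measure
      (Measure.restrict_mono hsub le_rfl))).mul (myAESM'.mono_measure
      (Measure.restrict_mono hsub le_rfl)))
  · filter_upwards [ae_restrict_mem measurableSet_Ioc] with s hs
    have hs0 : a ≤ s := hs.1.le
    have hspos : 0 < s := lt_of_lt_of_le ha hs0
    rw [Real.norm_eq_abs]
    have h1 : |2 * f s * deriv f s| ≤ f s ^ 2 + deriv f s ^ 2 := by
      rw [abs_mul, abs_mul, abs_two]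
      nlinarith [sq_nonneg (|f s| - |deriv f s|), sq_abs (f s), sq_abs (deriv f s)]
    have h2 : f s ^ 2 + deriv f s ^ 2 ≤ ((f s ^ 2 + deriv f s ^ 2) * s) * a⁻¹ := by
      rw [mul_assoc]
      have hsa : 1 ≤ s * a⁻¹ := by rw [← div_eq_mul_inv]; exact (one_le_div ha).mpr hs0
      nlinarith [sq_nonneg (f s), sq_nonneg (deriv f s)]
    linarith

lemma ftcSq (hdiff : ∀ r ∈ Ioi (0:ℝ), DifferentiableAt ℝ f r)
    (hint : IntegrableOn (fun r => (f r ^ 2 + (deriv f r)^2) * r) (Ioi 0))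
    {a b : ℝ} (ha : 0 < a) (hab : a ≤ b) :
    f b ^ 2 - f a ^ 2 = ∫ s in a..b, 2 * f s * deriv f s := by
  refine (intervalIntegral.integral_eq_sub_of_hasDerivAt (f := fun s => f s ^ 2) (fun x hx => ?_)
    (intFF hdiff hint ha hab)).symm
  rw [uIcc_of_le hab] at hx
  have hx0 : (0:ℝ) < x := lt_of_lt_of_le ha hx.1
  have h := (hdiff x hx0).hasDerivAt
  have := h.fun_pow 2
  simpa [mul_comm, mul_assoc] using this

-- no escape to infinity: for every ε > 0 and M, there is s > M with f s ^ 2 < ε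

lemma smallSeq (hdiff : ∀ r ∈ Ioi (0:ℝ), DifferentiableAt ℝ f r)
    (hint : IntegrableOn (fun r => (f r ^ 2 + (deriv f r)^2) * r) (Ioi 0))
    {ε : ℝ} (hε : 0 < ε) (M : ℝ) : ∃ s, max M 1 < s ∧ f s ^ 2 < ε := by
  by_contra h
  push_neg at h
  set M' := max M 1 with hM'
  have hM'pos : (0:ℝ) < M' := lt_of_lt_of_le one_pos (le_max_right _ _)
  have hsub : Ioi M' ⊆ Ioi (0:ℝ) := fun x hx => lt_trans hM'pos hx
  have hintM : IntegrableOn (fun r => f r ^ 2 * r) (Ioi M') := by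
    have := (intA hdiff hint).mono_set hsub
    exact this
  have hmono : IntegrableOn (fun r => ε * r) (Ioi M') := by
    refine hintM.mono' (aestronglyMeasurable_const.mul aestronglyMeasurable_id) ?_
    filter_upwards [ae_restrict_mem measurableSet_Ioi] with s hs
    have hs0 : (0:ℝ) < s := hsub hs
    rw [Real.norm_eq_abs, abs_of_nonneg (by positivity)]
    have := h s hs
    nlinarith
  have hid : IntegrableOn (fun r : ℝ => r) (Ioi M') := by
    have := hmono.const_mul ε⁻¹
    simpa [IntegrableOn, ← mul_assoc, inv_mul_cancel₀ hε.ne'] using this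
  have : IntegrableOn (fun r : ℝ => r ^ (1:ℝ)) (Ioi M') := by
    refine hid.congr_fun (fun x hx => ?_) measurableSet_Ioi
    rw [Real.rpow_one]
  rw [integrableOn_Ioi_rpow_iff hM'pos] at this
  linarith


lemma strauss (hdiff : ∀ r ∈ Ioi (0:ℝ), DifferentiableAt ℝ f r)
    (hint : IntegrableOn (fun r => (f r ^ 2 + (deriv f r)^2) * r) (Ioi 0))
    {r : ℝ} (hr : 0 < r) :
    f r ^ 2 * r ≤ 2 * ∫ s in Ioi (0:ℝ), |f s * deriv f s| * s := by
  set K := ∫ s in Ioi (0:ℝ), |f s * deriv f s| * s with hK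
  have hmain : ∀ ε > 0, f r ^ 2 ≤ 2 * K / r + ε := by
    intro ε hε
    obtain ⟨s, hs1, hs2⟩ := smallSeq hdiff hint hε r
    have hrs : r ≤ s := le_of_lt (lt_of_le_of_lt (le_max_left _ _) hs1)
    have hIK : IntegrableOn (fun u => |f u * deriv f u| * u) (Ioi 0) := intK hdiff hint
    have hsub : Ioc r s ⊆ Ioi (0:ℝ) := fun x hx => lt_trans hr hx.1
    have key : f r ^ 2 - f s ^ 2 ≤ (2 / r) * K := by
      have hftc := ftcSq hdiff hint hr hrs
      have h1 : f r ^ 2 - f s ^ 2 = ∫ u in r..s, -(2 * f u * deriv f u) := by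
        rw [intervalIntegral.integral_neg]; linarith
      rw [h1]
      have hII : IntervalIntegrable (fun u => -(2 * f u * deriv f u)) volume r s :=
        (intFF hdiff hint hr hrs).neg
      have hII2 : IntervalIntegrable (fun u => (2 / r) * (|f u * deriv f u| * u)) volume r s := by
        rw [intervalIntegrable_iff_integrableOn_Ioc_of_le hrs]
        exact (hIK.mono_set hsub).const_mul _
      have hmono := intervalIntegral.integral_mono_on hrs hII hII2 (fun u hu => ?_)
      · calc (∫ u in r..s, -(2 * f u * deriv f u))
            ≤ ∫ u in r..s, (2 / r) * (|f u * deriv f u| * u) := hmono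
          _ = (2 / r) * ∫ u in r..s, |f u * deriv f u| * u := by
              rw [intervalIntegral.integral_const_mul]
          _ ≤ (2 / r) * K := by
              gcongr
              rw [intervalIntegral.integral_of_le hrs]
              refine setIntegral_mono_set hIK ?_ ?_
              · filter_upwards [ae_restrict_mem measurableSet_Ioi] with x hx
                exact mul_nonneg (abs_nonneg _) (le_of_lt hx)
              · exact HasSubset.Subset.eventuallyLE hsub
      · have hu0 : 0 < u := lt_of_lt_of_le hr hu.1
        have : -(2 * f u * deriv f u) ≤ 2 * |f u * deriv f u| := by
          rw [mul_assoc]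
          have := neg_abs_le (2 * (f u * deriv f u))
          rw [abs_mul, abs_two] at this
          linarith
        calc -(2 * f u * deriv f u) ≤ 2 * |f u * deriv f u| := this
          _ ≤ (2 / r) * (|f u * deriv f u| * u) := by
              rw [div_mul_eq_mul_div, mul_comm (|f u * deriv f u|) u, ← mul_assoc]
              rw [le_div_iff₀ hr]
              have : r ≤ u := hu.1
              nlinarith [abs_nonneg (f u * deriv f u)]
    have : f r ^ 2 ≤ f s ^ 2 + (2/r) * K := by linarith
    calc f r ^ 2 ≤ f s ^ 2 + (2/r) * K := this
      _ ≤ ε + 2 * K / r := by rw [div_mul_eq_mul_div]; linarith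
      _ = 2 * K / r + ε := by ring
  have h2 : f r ^ 2 ≤ 2 * K / r := le_of_forall_pos_le_add hmain
  calc f r ^ 2 * r ≤ (2 * K / r) * r := by nlinarith
    _ = 2 * K := by field_simp


lemma amgm {X P Q c : ℝ} (hX : 0 ≤ X) (hP : 0 ≤ P) (hQ : 0 ≤ Q) (hc : 0 < c)
    (h : X^2 ≤ P*Q) : 2*X ≤ c*P + Q/c := by
  have h1 : X ≤ Real.sqrt P * Real.sqrt Q := by
    rw [← Real.sqrt_mul hP]
    exact (Real.le_sqrt hX (mul_nonneg hP hQ)).mpr h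
  have hsP := Real.sq_sqrt hP
  have hsQ := Real.sq_sqrt hQ
  have h2 : 2 * c * (Real.sqrt P * Real.sqrt Q) ≤ c^2 * P + Q := by
    nlinarith [sq_nonneg (c * Real.sqrt P - Real.sqrt Q)]
  have hXle : 2*X ≤ 2*(Real.sqrt P * Real.sqrt Q) := by linarith
  have : (c^2*P + Q)/c = c*P + Q/c := by field_simp
  rw [← this]
  calc 2*X ≤ 2*(Real.sqrt P * Real.sqrt Q) := hXle
    _ = (2*c*(Real.sqrt P * Real.sqrt Q))/c := by field_simp
    _ ≤ (c^2*P+Q)/c := by gcongr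

lemma cauchyK (hdiff : ∀ r ∈ Ioi (0:ℝ), DifferentiableAt ℝ f r)
    (hint : IntegrableOn (fun r => (f r ^ 2 + (deriv f r)^2) * r) (Ioi 0)) :
    (∫ s in Ioi (0:ℝ), |f s * deriv f s| * s) ≤
      (∫ s in Ioi (0:ℝ), f s ^ 2 * s) ^ ((1:ℝ)/2)
        * (∫ s in Ioi (0:ℝ), (deriv f s) ^ 2 * s) ^ ((1:ℝ)/2) := by
  set A := ∫ s in Ioi (0:ℝ), f s ^ 2 * s with hAdef
  set B := ∫ s in Ioi (0:ℝ), (deriv f s) ^ 2 * s with hBdef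
  set K := ∫ s in Ioi (0:ℝ), |f s * deriv f s| * s with hKdef
  have hA0 : 0 ≤ A := setIntegral_nonneg measurableSet_Ioi
    (fun x hx => mul_nonneg (sq_nonneg _) (le_of_lt hx))
  have hB0 : 0 ≤ B := setIntegral_nonneg measurableSet_Ioi
    (fun x hx => mul_nonneg (sq_nonneg _) (le_of_lt hx))
  rcases eq_or_lt_of_le hA0 with hA | hA
  · -- A = 0 : f = 0 a.e., K = 0
    have hae : (fun s => f s ^ 2 * s) =ᵐ[volume.restrict (Ioi 0)] 0 := by
      refine (integral_eq_zero_iff_of_nonneg_ae ?_ (intA hdiff hint)).mp hA.symm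
      filter_upwards [ae_restrict_mem measurableSet_Ioi] with x hx
      exact mul_nonneg (sq_nonneg _) (le_of_lt hx)
    have hK0 : K = 0 := by
      rw [hKdef]
      rw [integral_eq_zero_iff_of_nonneg_ae ?_ (intK hdiff hint)]
      · filter_upwards [hae, ae_restrict_mem measurableSet_Ioi] with x h1 h2
        have hx0 : (0:ℝ) < x := h2
        have hf0 : f x = 0 := by
          have h3 : f x ^ 2 * x = 0 := h1
          rcases mul_eq_zero.mp h3 with h4 | h4
          · exact (pow_eq_zero_iff two_ne_zero).mp h4
          · exact absurd h4 hx0.ne' 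
        simp [hf0]
      · filter_upwards [ae_restrict_mem measurableSet_Ioi] with x hx
        exact mul_nonneg (abs_nonneg _) (le_of_lt hx)
    rw [hK0, ← hA, Real.zero_rpow (by norm_num : (1:ℝ)/2 ≠ 0), zero_mul]
  rcases eq_or_lt_of_le hB0 with hB | hB
  · have hae : (fun s => (deriv f s) ^ 2 * s) =ᵐ[volume.restrict (Ioi 0)] 0 := by
      refine (integral_eq_zero_iff_of_nonneg_ae ?_ (intB hdiff hint)).mp hB.symm
      filter_upwards [ae_restrict_mem measurableSet_Ioi] with x hx
      exact mul_nonneg (sq_nonneg _) (le_of_lt hx)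
    have hK0 : K = 0 := by
      rw [hKdef]
      rw [integral_eq_zero_iff_of_nonneg_ae ?_ (intK hdiff hint)]
      · filter_upwards [hae, ae_restrict_mem measurableSet_Ioi] with x h1 h2
        have hx0 : (0:ℝ) < x := h2
        have hf0 : deriv f x = 0 := by
          have h3 : deriv f x ^ 2 * x = 0 := h1
          rcases mul_eq_zero.mp h3 with h4 | h4
          · exact (pow_eq_zero_iff two_ne_zero).mp h4
          · exact absurd h4 hx0.ne' 
        simp [hf0]
      · filter_upwards [ae_restrict_mem measurableSet_Ioi] with x hx
        exact mul_nonneg (abs_nonneg _) (le_of_lt hx)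
    rw [hK0, ← hB, Real.zero_rpow (by norm_num : (1:ℝ)/2 ≠ 0), mul_zero]
  -- main case
  set u := A ^ ((1:ℝ)/2) with hudef
  set v := B ^ ((1:ℝ)/2) with hvdef
  have hu : 0 < u := Real.rpow_pos_of_pos hA _
  have hv : 0 < v := Real.rpow_pos_of_pos hB _
  have huu : u * u = A := by
    rw [hudef, ← Real.rpow_add hA]; norm_num
  have hvv : v * v = B := by
    rw [hvdef, ← Real.rpow_add hB]; norm_num
  have ht : 0 < v / u := by positivity
  have h2K : 2 * K ≤ (v/u) * A + B / (v/u) := by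
    have hptw : ∀ s ∈ Ioi (0:ℝ), 2 * (|f s * deriv f s| * s)
        ≤ (v/u) * (f s ^2 * s) + ((deriv f s)^2 * s) / (v/u) := by
      intro s hs
      have hs0 : (0:ℝ) < s := hs
      refine amgm (mul_nonneg (abs_nonneg _) hs0.le)
        (mul_nonneg (sq_nonneg _) hs0.le) (mul_nonneg (sq_nonneg _) hs0.le) ht ?_
      have : (|f s * deriv f s| * s)^2 = (f s ^2 * s) * ((deriv f s)^2 * s) := by
        rw [mul_pow, sq_abs]; ring
      exact this.le
    have hIrhs : IntegrableOn (fun s => (v/u) * (f s ^2 * s) + ((deriv f s)^2 * s) / (v/u))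
        (Ioi 0) :=
      ((intA hdiff hint).const_mul (v/u)).add ((intB hdiff hint).div_const (v/u))
    have hm := setIntegral_mono_on
      ((intK hdiff hint).const_mul 2) hIrhs measurableSet_Ioi hptw
    rwa [integral_add ((intA hdiff hint).const_mul _) ((intB hdiff hint).div_const _),
      integral_const_mul, integral_div, integral_const_mul] at hm
  have heq : (v/u) * A + B / (v/u) = 2 * (u * v) := by
    rw [← huu, ← hvv]
    field_simp
    ring
  rw [heq] at h2K
  rw [← hudef, ← hvdef] at *
  linarith

lemma rpowAESM {c : ℝ} {s : Set ℝ} (hs : MeasurableSet s) (h : ∀ x ∈ s, x ≠ 0) :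
    AEStronglyMeasurable (fun x : ℝ => x ^ c) (volume.restrict s) :=
  (ContinuousOn.rpow_const continuousOn_id (fun x hx => Or.inl (h x hx))).aestronglyMeasurable hs

lemma wI1 {σ : ℝ} (hσ0 : 0 ≤ σ)
    (hdiff : ∀ r ∈ Ioi (0:ℝ), DifferentiableAt ℝ f r)
    (hint : IntegrableOn (fun r => (f r ^ 2 + (deriv f r)^2) * r) (Ioi 0))
    {ε R : ℝ} (hε : 0 < ε) (hεR : ε ≤ R) :
    IntegrableOn (fun s => f s ^ 2 * s ^ (1-2*σ)) (Ioc ε R) := by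
  have hsub : Ioc ε R ⊆ Ioi (0:ℝ) := fun x hx => lt_of_lt_of_le hε hx.1.le
  have hbd : IntegrableOn (fun s => ((f s ^ 2 + (deriv f s)^2) * s) * ε^(-(2*σ))) (Ioc ε R) :=
    (hint.mono_set hsub).mul_const _
  refine hbd.mono' ?_ ?_
  · exact (((myAESM hdiff).mono_measure (Measure.restrict_mono hsub le_rfl)).pow 2).mul
      (rpowAESM measurableSet_Ioc (fun x hx => (lt_of_lt_of_le hε hx.1.le).ne'))
  · filter_upwards [ae_restrict_mem measurableSet_Ioc] with s hs
    have hs0 : (0:ℝ) < s := lt_of_lt_of_le hε hs.1.le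
    have hw : s ^ (1-2*σ) = s * s^(-(2*σ)) := by
      rw [show (1-2*σ) = 1 + (-(2*σ)) by ring, Real.rpow_add hs0, Real.rpow_one]
    have hwle : s^(-(2*σ)) ≤ ε^(-(2*σ)) :=
      Real.rpow_le_rpow_of_nonpos hε hs.1.le (by linarith)
    have e2 : (0:ℝ) ≤ ε^(-(2*σ)) := Real.rpow_nonneg hε.le _
    rw [Real.norm_eq_abs, abs_of_nonneg (by positivity)]
    have h0 : f s ^ 2 * s ^ (1-2*σ) = (f s ^2 * s) * s^(-(2*σ)) := by rw [hw]; ring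
    rw [h0]
    calc (f s ^2 * s) * s^(-(2*σ)) ≤ (f s ^2 * s) * ε^(-(2*σ)) :=
          mul_le_mul_of_nonneg_left hwle (by positivity)
      _ ≤ ((f s ^2 + deriv f s ^2) * s) * ε^(-(2*σ)) := by
          refine mul_le_mul_of_nonneg_right ?_ e2
          nlinarith [sq_nonneg (deriv f s)]

lemma wI2 {σ : ℝ} (hσ0 : 0 ≤ σ)
    (hdiff : ∀ r ∈ Ioi (0:ℝ), DifferentiableAt ℝ f r)
    (hint : IntegrableOn (fun r => (f r ^ 2 + (deriv f r)^2) * r) (Ioi 0))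
    {ε R : ℝ} (hε : 0 < ε) (hεR : ε ≤ R) :
    IntegrableOn (fun s => f s * deriv f s * s ^ (2-2*σ)) (Ioc ε R) := by
  have hsub : Ioc ε R ⊆ Ioi (0:ℝ) := fun x hx => lt_of_lt_of_le hε hx.1.le
  have hbd : IntegrableOn (fun s => ((f s ^ 2 + (deriv f s)^2) * s) * (R * ε^(-(2*σ)))) (Ioc ε R) :=
    (hint.mono_set hsub).mul_const _
  refine hbd.mono' ?_ ?_
  · exact (((myAESM hdiff).mono_measure (Measure.restrict_mono hsub le_rfl)).mul
      (myAESM'.mono_measure (Measure.restrict_mono hsub le_rfl))).mul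
      (rpowAESM measurableSet_Ioc (fun x hx => (lt_of_lt_of_le hε hx.1.le).ne'))
  · filter_upwards [ae_restrict_mem measurableSet_Ioc] with s hs
    have hs0 : (0:ℝ) < s := lt_of_lt_of_le hε hs.1.le
    have hw : s ^ (2-2*σ) = s * (s * s^(-(2*σ))) := by
      rw [show (2-2*σ) = 1 + (1 + (-(2*σ))) by ring, Real.rpow_add hs0, Real.rpow_add hs0,
        Real.rpow_one]
    have hwle : s^(-(2*σ)) ≤ ε^(-(2*σ)) :=
      Real.rpow_le_rpow_of_nonpos hε hs.1.le (by linarith)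
    have e1 : (0:ℝ) ≤ s^(-(2*σ)) := Real.rpow_nonneg hs0.le _
    have e2 : (0:ℝ) ≤ ε^(-(2*σ)) := Real.rpow_nonneg hε.le _
    rw [Real.norm_eq_abs, abs_mul, abs_of_nonneg (Real.rpow_nonneg hs0.le _)]
    have habs : |f s * deriv f s| ≤ f s ^2 + deriv f s ^2 := by
      rw [abs_mul]
      nlinarith [sq_nonneg (|f s| - |deriv f s|), sq_abs (f s), sq_abs (deriv f s)]
    have hfd : (0:ℝ) ≤ f s ^2 + deriv f s ^2 := by positivity
    have hwle2 : s * s^(-(2*σ)) ≤ R * ε^(-(2*σ)) := by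
      have := hs.2
      nlinarith
    calc |f s * deriv f s| * s ^ (2-2*σ)
        ≤ (f s ^2 + deriv f s ^2) * s ^ (2-2*σ) :=
          mul_le_mul_of_nonneg_right habs (Real.rpow_nonneg hs0.le _)
      _ = ((f s ^2 + deriv f s ^2) * s) * (s * s^(-(2*σ))) := by rw [hw]; ring
      _ ≤ ((f s ^2 + deriv f s ^2) * s) * (R * ε^(-(2*σ))) :=
          mul_le_mul_of_nonneg_left hwle2 (by positivity)

lemma ibp {σ : ℝ} (hσ0 : 0 ≤ σ) (hσ1 : σ < 1)
    (hdiff : ∀ r ∈ Ioi (0:ℝ), DifferentiableAt ℝ f r)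
    (hint : IntegrableOn (fun r => (f r ^ 2 + (deriv f r)^2) * r) (Ioi 0))
    {ε R : ℝ} (hε : 0 < ε) (hεR : ε ≤ R) :
    ∫ s in Ioc ε R, f s ^ 2 * s ^ (1-2*σ) ≤
      f R ^ 2 * R ^ (2-2*σ) / (1-σ)
        + R ^ (2-2*σ) * (∫ s in Ioi (0:ℝ), (deriv f s)^2 * s) / (1-σ)^2 := by
  have hσ1' : (0:ℝ) < 1 - σ := by linarith
  have h2σ : (0:ℝ) < 2 - 2*σ := by linarith
  have hsub : Ioc ε R ⊆ Ioi (0:ℝ) := fun x hx => lt_of_lt_of_le hε hx.1.le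
  have hI1 := wI1 hσ0 hdiff hint hε hεR
  have hI2 := wI2 hσ0 hdiff hint hε hεR
  have hIB : IntegrableOn (fun s => (deriv f s)^2 * s) (Ioc ε R) :=
    (intB hdiff hint).mono_set hsub
  set J := ∫ s in Ioc ε R, f s ^ 2 * s ^ (1-2*σ) with hJdef
  set B := ∫ s in Ioi (0:ℝ), (deriv f s)^2 * s with hBdef
  set W := R ^ (2-2*σ) with hWdef
  have hW0 : 0 ≤ W := Real.rpow_nonneg (hε.trans_le hεR).le _
  -- FTC
  have key : ∫ s in ε..R, (f s ^ 2 * s ^ (1-2*σ) + f s * deriv f s * s ^ (2-2*σ) / (1-σ))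
      = f R ^2 * R ^ (2-2*σ) / (2-2*σ) - f ε ^2 * ε ^ (2-2*σ) / (2-2*σ) := by
    refine intervalIntegral.integral_eq_sub_of_hasDerivAt
      (f := fun s => f s ^2 * s ^ (2-2*σ) / (2-2*σ)) (fun x hx => ?_) ?_
    · rw [uIcc_of_le hεR] at hx
      have hx0 : (0:ℝ) < x := lt_of_lt_of_le hε hx.1
      have h1 : HasDerivAt (fun s => f s ^ 2) (2 * f x * deriv f x) x := by
        have := ((hdiff x hx0).hasDerivAt).fun_pow 2
        simpa [mul_comm, mul_assoc] using this
      have h2 : HasDerivAt (fun s : ℝ => s ^ (2-2*σ)) ((2-2*σ) * x ^ (1-2*σ)) x := by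
        have h := Real.hasDerivAt_rpow_const (p := 2-2*σ) (Or.inl hx0.ne')
        rw [show (2-2*σ-1) = 1-2*σ by ring] at h
        exact h
      have h3 := (h1.mul h2).div_const (2-2*σ)
      refine h3.congr_deriv ?_
      field_simp
      ring
    · rw [intervalIntegrable_iff_integrableOn_Ioc_of_le hεR]
      exact hI1.add (hI2.div_const _)
  rw [intervalIntegral.integral_of_le hεR] at key
  have hsplit : ∫ s in Ioc ε R, (f s ^ 2 * s ^ (1-2*σ) + f s * deriv f s * s ^ (2-2*σ) / (1-σ))
      = J + (∫ s in Ioc ε R, f s * deriv f s * s ^ (2-2*σ)) / (1-σ) := by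
    rw [integral_add hI1 (hI2.div_const _), integral_div]
  rw [hsplit] at key
  set I2 := ∫ s in Ioc ε R, f s * deriv f s * s ^ (2-2*σ) with hI2def
  set Iabs := ∫ s in Ioc ε R, |f s * deriv f s * s ^ (2-2*σ)| with hIabsdef
  have habs : |I2| ≤ Iabs := by
    rw [hI2def, hIabsdef]
    have h := norm_integral_le_integral_norm (μ := volume.restrict (Ioc ε R))
      (fun s => f s * deriv f s * s ^ (2-2*σ))
    simpa only [Real.norm_eq_abs] using h
  have hIabs : IntegrableOn (fun s => |f s * deriv f s * s ^ (2-2*σ)|) (Ioc ε R) := hI2.abs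
  have hIrhs : IntegrableOn (fun s => (1-σ)/2 * (f s ^2 * s ^ (1-2*σ))
      + W / (2*(1-σ)) * ((deriv f s)^2 * s)) (Ioc ε R) :=
    (hI1.const_mul _).add (hIB.const_mul _)
  have hptw : ∀ s ∈ Ioc ε R, |f s * deriv f s * s ^ (2-2*σ)|
      ≤ (1-σ)/2 * (f s ^2 * s ^ (1-2*σ)) + W / (2*(1-σ)) * ((deriv f s)^2 * s) := by
    intro s hs
    have hs0 : (0:ℝ) < s := lt_of_lt_of_le hε hs.1.le
    have hXP : (|f s * deriv f s * s ^ (2-2*σ)|) ^ 2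
        = (f s ^2 * s ^ (1-2*σ)) * ((deriv f s)^2 * s ^ (3-2*σ)) := by
      rw [sq_abs]
      have hsq : s ^ (2-2*σ) * s ^ (2-2*σ) = s ^ (1-2*σ) * s ^ (3-2*σ) := by
        rw [← Real.rpow_add hs0, ← Real.rpow_add hs0]; congr 1; ring
      linear_combination (f s ^2 * (deriv f s)^2) * hsq
    have hamgm := amgm (abs_nonneg _)
      (mul_nonneg (sq_nonneg _) (Real.rpow_nonneg hs0.le _))
      (mul_nonneg (sq_nonneg _) (Real.rpow_nonneg hs0.le _)) hσ1' hXP.le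
    have hQle : (deriv f s)^2 * s ^ (3-2*σ) ≤ W * ((deriv f s)^2 * s) := by
      have hw3 : s ^ (3-2*σ) = s * s ^ (2-2*σ) := by
        rw [show (3-2*σ) = 1 + (2-2*σ) by ring, Real.rpow_add hs0, Real.rpow_one]
      have hrle : s ^ (2-2*σ) ≤ R ^ (2-2*σ) := Real.rpow_le_rpow hs0.le hs.2 h2σ.le
      calc (deriv f s)^2 * s ^ (3-2*σ) = ((deriv f s)^2 * s) * s ^ (2-2*σ) := by rw [hw3]; ring
        _ ≤ ((deriv f s)^2 * s) * R ^ (2-2*σ) :=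
            mul_le_mul_of_nonneg_left hrle (mul_nonneg (sq_nonneg _) hs0.le)
        _ = W * ((deriv f s)^2 * s) := by rw [hWdef]; ring
    have h2X : 2 * |f s * deriv f s * s ^ (2-2*σ)|
        ≤ (1-σ) * (f s ^2 * s ^ (1-2*σ)) + (W * ((deriv f s)^2 * s)) / (1-σ) := by
      have hdiv : (deriv f s)^2 * s ^ (3-2*σ) / (1-σ) ≤ W * ((deriv f s)^2 * s) / (1-σ) := by
        gcongr
      linarith
    have heq : W / (2*(1-σ)) * ((deriv f s)^2 * s)
        = ((W * ((deriv f s)^2 * s)) / (1-σ)) / 2 := by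
      rw [div_mul_eq_mul_div, div_div, mul_comm (2:ℝ) (1-σ)]
    rw [heq]
    linarith
  have hstep : Iabs ≤ (1-σ)/2 * J + W/(2*(1-σ)) * (∫ s in Ioc ε R, (deriv f s)^2 * s) := by
    have hm := setIntegral_mono_on hIabs hIrhs measurableSet_Ioc hptw
    rwa [integral_add (hI1.const_mul _) (hIB.const_mul _), integral_const_mul,
      integral_const_mul] at hm
  set IB' := ∫ s in Ioc ε R, (deriv f s)^2 * s with hIB'def
  have htail : IB' ≤ B := by
    refine setIntegral_mono_set (intB hdiff hint) ?_ (HasSubset.Subset.eventuallyLE hsub)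
    filter_upwards [ae_restrict_mem measurableSet_Ioi] with x hx
    exact mul_nonneg (sq_nonneg _) (le_of_lt hx)
  have hIB'0 : 0 ≤ IB' := by
    refine setIntegral_nonneg measurableSet_Ioc (fun x hx => ?_)
    exact mul_nonneg (sq_nonneg _) (hε.trans_le hx.1.le).le
  -- combine
  have hεterm : 0 ≤ f ε ^2 * ε ^ (2-2*σ) / (2-2*σ) := by positivity
  have hJle : J ≤ f R ^2 * W / (2-2*σ) + Iabs / (1-σ) := by
    have h1 : -I2 ≤ Iabs := (neg_le_abs I2).trans habs
    have h2 : -I2/(1-σ) ≤ Iabs/(1-σ) := by gcongr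
    have h3 : J = (f R ^2 * W / (2-2*σ) - f ε ^2 * ε ^ (2-2*σ) / (2-2*σ)) + (-I2)/(1-σ) := by
      rw [neg_div]; linarith [key]
    rw [h3]
    linarith
  have heq2 : ((1-σ)/2 * J + W/(2*(1-σ)) * IB') / (1-σ) = J/2 + W/(2*(1-σ)^2) * IB' := by
    field_simp
  have hJle2 : J ≤ f R ^2 * W / (2-2*σ) + (J/2 + W/(2*(1-σ)^2) * IB') := by
    have h4 : Iabs/(1-σ) ≤ ((1-σ)/2 * J + W/(2*(1-σ)) * IB') / (1-σ) := by gcongr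
    rw [heq2] at h4
    linarith
  have heq3 : 2*(f R ^2 * W / (2-2*σ)) = f R ^2 * W / (1-σ) := by
    field_simp
  have h5 : W/(2*(1-σ)^2) * IB' ≤ W/(2*(1-σ)^2) * B :=
    mul_le_mul_of_nonneg_left htail (by positivity)
  have heq4 : 2*(W/(2*(1-σ)^2) * B) = W * B/(1-σ)^2 := by
    field_simp
  linarith


lemma leftPiece {σ : ℝ} (hσ0 : 0 ≤ σ) (hσ1 : σ < 1)
    (hdiff : ∀ r ∈ Ioi (0:ℝ), DifferentiableAt ℝ f r)
    (hint : IntegrableOn (fun r => (f r ^ 2 + (deriv f r)^2) * r) (Ioi 0))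
    {R : ℝ} (hR : 0 < R) :
    IntegrableOn (fun s => f s ^ 2 * s ^ (1-2*σ)) (Ioc 0 R) ∧
    ∫ s in Ioc 0 R, f s ^ 2 * s ^ (1-2*σ) ≤
      f R ^ 2 * R ^ (2-2*σ) / (1-σ)
        + R ^ (2-2*σ) * (∫ s in Ioi (0:ℝ), (deriv f s)^2 * s) / (1-σ)^2 := by
  set M := f R ^ 2 * R ^ (2-2*σ) / (1-σ)
      + R ^ (2-2*σ) * (∫ s in Ioi (0:ℝ), (deriv f s)^2 * s) / (1-σ)^2 with hMdef
  set a : ℕ → ℝ := fun n => R / (n+1) with hadef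
  have ha0 : ∀ n : ℕ, 0 < a n := fun n => by positivity
  have haR : ∀ n : ℕ, a n ≤ R := by
    intro n
    rw [hadef]
    rw [div_le_iff₀ (by positivity)]
    nlinarith [Nat.cast_nonneg (α := ℝ) n]
  have hfi : ∀ n : ℕ, IntegrableOn (fun s => f s ^ 2 * s ^ (1-2*σ)) (Ioc (a n) R) :=
    fun n => wI1 hσ0 hdiff hint (ha0 n) (haR n)
  have hten : Filter.Tendsto a Filter.atTop (nhds 0) := by
    have hcomp : (fun n : ℕ => R / ((n:ℝ)+1)) = (fun n : ℕ => R / (n:ℝ)) ∘ (fun n => n + 1) := by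
      funext n; simp only [Function.comp_apply]; push_cast; ring_nf
    rw [hadef, hcomp]
    exact (tendsto_const_div_atTop_nhds_zero_nat R).comp (Filter.tendsto_add_atTop_nat 1)
  have hbound : ∀ n : ℕ, (∫ s in Ioc (a n) R, ‖f s ^ 2 * s ^ (1-2*σ)‖) ≤ M := by
    intro n
    have heq : (∫ s in Ioc (a n) R, ‖f s ^ 2 * s ^ (1-2*σ)‖)
        = ∫ s in Ioc (a n) R, f s ^ 2 * s ^ (1-2*σ) := by
      refine setIntegral_congr_fun measurableSet_Ioc (fun x hx => ?_)
      have hx0 : (0:ℝ) < x := lt_of_lt_of_le (ha0 n) hx.1.le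
      rw [Real.norm_eq_abs, abs_of_nonneg (mul_nonneg (sq_nonneg _) (Real.rpow_nonneg hx0.le _))]
    rw [heq]
    exact ibp hσ0 hσ1 hdiff hint (ha0 n) (haR n)
  have hInt : IntegrableOn (fun s => f s ^ 2 * s ^ (1-2*σ)) (Ioc 0 R) :=
    integrableOn_Ioc_of_intervalIntegral_norm_bounded_left hfi hten
      (Filter.Eventually.of_forall hbound)
  refine ⟨hInt, ?_⟩
  -- monotone limit of integrals
  have hU : (⋃ n : ℕ, Ioc (a n) R) = Ioc 0 R := by
    ext x
    simp only [mem_iUnion, mem_Ioc]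
    constructor
    · rintro ⟨n, h1, h2⟩
      exact ⟨lt_of_lt_of_le (ha0 n) h1.le, h2⟩
    · rintro ⟨hx0, hxR⟩
      obtain ⟨n, hn⟩ := exists_nat_gt (R / x)
      refine ⟨n, ?_, hxR⟩
      rw [hadef]
      rw [div_lt_iff₀ (by positivity)]
      have : R / x < n + 1 := hn.trans (by linarith)
      rw [div_lt_iff₀ hx0] at this
      linarith
  have hmono : Monotone (fun n : ℕ => Ioc (a n) R) := by
    intro n m hnm
    refine Ioc_subset_Ioc_left ?_
    rw [hadef]
    refine div_le_div_of_nonneg_left hR.le (by positivity) ?_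
    have : (n:ℝ) ≤ (m:ℝ) := by exact_mod_cast hnm
    linarith
  have htend := tendsto_setIntegral_of_monotone (fun n : ℕ => measurableSet_Ioc) hmono
    (by rw [hU]; exact hInt) (f := fun s => f s ^ 2 * s ^ (1-2*σ)) (μ := volume)
  rw [hU] at htend
  exact le_of_tendsto htend (Filter.Eventually.of_forall (fun n => by
    have := hbound n
    have heq : (∫ s in Ioc (a n) R, ‖f s ^ 2 * s ^ (1-2*σ)‖)
        = ∫ s in Ioc (a n) R, f s ^ 2 * s ^ (1-2*σ) := by
      refine setIntegral_congr_fun measurableSet_Ioc (fun x hx => ?_)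
      have hx0 : (0:ℝ) < x := lt_of_lt_of_le (ha0 n) hx.1.le
      rw [Real.norm_eq_abs, abs_of_nonneg (mul_nonneg (sq_nonneg _) (Real.rpow_nonneg hx0.le _))]
    rw [heq] at this
    exact this))

lemma tailPiece {σ : ℝ} (hσ0 : 0 ≤ σ)
    (hdiff : ∀ r ∈ Ioi (0:ℝ), DifferentiableAt ℝ f r)
    (hint : IntegrableOn (fun r => (f r ^ 2 + (deriv f r)^2) * r) (Ioi 0))
    {R : ℝ} (hR : 0 < R) :
    IntegrableOn (fun s => f s ^ 2 * s ^ (1-2*σ)) (Ioi R) ∧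
    ∫ s in Ioi R, f s ^ 2 * s ^ (1-2*σ) ≤
      R ^ (-(2*σ)) * ∫ s in Ioi (0:ℝ), f s ^ 2 * s := by
  have hsub : Ioi R ⊆ Ioi (0:ℝ) := fun x hx => lt_trans hR hx
  have hbd : IntegrableOn (fun s => R ^ (-(2*σ)) * (f s ^ 2 * s)) (Ioi R) :=
    ((intA hdiff hint).mono_set hsub).const_mul _
  have hptw : ∀ s ∈ Ioi R, f s ^ 2 * s ^ (1-2*σ) ≤ R ^ (-(2*σ)) * (f s ^ 2 * s) := by
    intro s hs
    have hs0 : (0:ℝ) < s := hsub hs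
    have hw : s ^ (1-2*σ) = s * s ^ (-(2*σ)) := by
      rw [show (1-2*σ) = 1 + (-(2*σ)) by ring, Real.rpow_add hs0, Real.rpow_one]
    have hwle : s ^ (-(2*σ)) ≤ R ^ (-(2*σ)) :=
      Real.rpow_le_rpow_of_nonpos hR (le_of_lt hs) (by linarith)
    calc f s ^ 2 * s ^ (1-2*σ) = (f s ^2 * s) * s ^ (-(2*σ)) := by rw [hw]; ring
      _ ≤ (f s ^2 * s) * R ^ (-(2*σ)) :=
          mul_le_mul_of_nonneg_left hwle (by positivity)
      _ = R ^ (-(2*σ)) * (f s ^ 2 * s) := by ring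
  have hInt : IntegrableOn (fun s => f s ^ 2 * s ^ (1-2*σ)) (Ioi R) := by
    refine hbd.mono' ?_ ?_
    · exact (((myAESM hdiff).mono_measure (Measure.restrict_mono hsub le_rfl)).pow 2).mul
        (rpowAESM measurableSet_Ioi (fun x hx => (hsub hx).ne'))
    · filter_upwards [ae_restrict_mem measurableSet_Ioi] with s hs
      have hs0 : (0:ℝ) < s := hsub hs
      rw [Real.norm_eq_abs, abs_of_nonneg (mul_nonneg (sq_nonneg _) (Real.rpow_nonneg hs0.le _))]
      exact hptw s hs
  refine ⟨hInt, ?_⟩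
  have hm := setIntegral_mono_on hInt hbd measurableSet_Ioi hptw
  rw [integral_const_mul] at hm
  refine hm.trans ?_
  have h1 : (∫ s in Ioi R, f s ^ 2 * s) ≤ ∫ s in Ioi (0:ℝ), f s ^ 2 * s := by
    refine setIntegral_mono_set (intA hdiff hint) ?_ (HasSubset.Subset.eventuallyLE hsub)
    filter_upwards [ae_restrict_mem measurableSet_Ioi] with x hx
    exact mul_nonneg (sq_nonneg _) (le_of_lt hx)
  exact mul_le_mul_of_nonneg_left h1 (Real.rpow_nonneg hR.le _)

lemma rpowR {A B : ℝ} (hA : 0 < A) (hB : 0 < B) (t : ℝ) :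
    ((A/B) ^ ((1:ℝ)/2)) ^ t = A ^ (t/2) * B ^ (-(t/2)) := by
  rw [← Real.rpow_mul (div_pos hA hB).le, show (1:ℝ)/2*t = t/2 by ring,
    Real.div_rpow hA.le hB.le, div_eq_mul_inv, ← Real.rpow_neg hB.le]

end WIRhelpers

/-- Weighted interpolation inequality for radial H¹(ℝ²) profiles:
for 0 ≤ σ < 1, ∫₀^∞ f²/r^{2σ} r dr ≤ C_σ (∫ f² r dr)^{1-σ} (∫ f'² r dr)^σ. -/
theorem weighted_interpolation_radial (σ : ℝ) (hσ0 : 0 ≤ σ) (hσ1 : σ < 1) :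
    ∃ C : ℝ, 0 < C ∧ ∀ f : ℝ → ℝ,
      (∀ r ∈ Set.Ioi (0:ℝ), DifferentiableAt ℝ f r) →
      IntegrableOn (fun r => (f r ^ 2 + (deriv f r) ^ 2) * r) (Set.Ioi 0) →
      IntegrableOn (fun r => f r ^ 2 / r ^ (2 * σ) * r) (Set.Ioi 0) ∧
      (∫ r in Set.Ioi (0:ℝ), f r ^ 2 / r ^ (2 * σ) * r) ≤
        C * (∫ r in Set.Ioi (0:ℝ), f r ^ 2 * r) ^ (1 - σ) *
          (∫ r in Set.Ioi (0:ℝ), (deriv f r) ^ 2 * r) ^ σ := by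
  have hσ1' : (0:ℝ) < 1 - σ := by linarith
  refine ⟨1 + 2/(1-σ) + 1/(1-σ)^2, ?_, ?_⟩
  · have h1 : 0 < 2/(1-σ) := by positivity
    have h2 : 0 < 1/(1-σ)^2 := by positivity
    linarith
  intro f hdiff hint
  set A := ∫ r in Set.Ioi (0:ℝ), f r ^ 2 * r with hAdef
  set B := ∫ r in Set.Ioi (0:ℝ), (deriv f r) ^ 2 * r with hBdef
  have hA0 : 0 ≤ A := setIntegral_nonneg measurableSet_Ioi
    (fun x hx => mul_nonneg (sq_nonneg _) (le_of_lt hx))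
  have hB0 : 0 ≤ B := setIntegral_nonneg measurableSet_Ioi
    (fun x hx => mul_nonneg (sq_nonneg _) (le_of_lt hx))
  have hEq : Set.EqOn (fun r => f r ^ 2 / r ^ (2 * σ) * r)
      (fun r => f r ^ 2 * r ^ (1-2*σ)) (Set.Ioi 0) := by
    intro r hr
    have hr0 : (0:ℝ) < r := hr
    have hw : r ^ (1-2*σ) = r / r ^ (2*σ) := by
      rw [Real.rpow_sub hr0, Real.rpow_one]
    simp only
    rw [hw]
    ring
  by_cases hz : A = 0 ∨ B = 0
  · -- degenerate case : f vanishes on Ioi 0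
    have hKle := cauchyK hdiff hint
    have hzero : A ^ ((1:ℝ)/2) * B ^ ((1:ℝ)/2) = 0 := by
      rcases hz with h | h
      · rw [← hAdef] at *
        rw [h, Real.zero_rpow (by norm_num : (1:ℝ)/2 ≠ 0), zero_mul]
      · rw [← hBdef] at *
        rw [h, Real.zero_rpow (by norm_num : (1:ℝ)/2 ≠ 0), mul_zero]
    have hK0 : (∫ s in Set.Ioi (0:ℝ), |f s * deriv f s| * s) ≤ 0 := by
      rw [← hAdef, ← hBdef] at hKle
      rw [hzero] at hKle
      exact hKle
    have hf0 : ∀ r ∈ Set.Ioi (0:ℝ), f r = 0 := by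
      intro r hr
      have hr0 : (0:ℝ) < r := hr
      have h1 := strauss hdiff hint hr0
      have h2 : f r ^ 2 * r ≤ 0 := by linarith
      have h3 : 0 ≤ f r ^ 2 * r := mul_nonneg (sq_nonneg _) hr0.le
      have h4 : f r ^ 2 * r = 0 := le_antisymm h2 h3
      rcases mul_eq_zero.mp h4 with h5 | h5
      · exact (pow_eq_zero_iff two_ne_zero).mp h5
      · exact absurd h5 hr0.ne'
    have hEq0 : Set.EqOn (fun r => f r ^ 2 / r ^ (2 * σ) * r)
        (fun _ => (0:ℝ)) (Set.Ioi 0) := by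
      intro r hr
      simp only
      rw [hf0 r hr]
      ring
    constructor
    · exact (integrableOn_zero (ε' := ℝ)).congr_fun (fun x hx => (hEq0 hx).symm) measurableSet_Ioi
    · rw [setIntegral_congr_fun measurableSet_Ioi hEq0, integral_zero]
      have hC : (0:ℝ) < 1 + 2/(1-σ) + 1/(1-σ)^2 := by
        have h1 : 0 < 2/(1-σ) := by positivity
        have h2 : 0 < 1/(1-σ)^2 := by positivity
        linarith
      exact mul_nonneg (mul_nonneg hC.le (Real.rpow_nonneg hA0 _)) (Real.rpow_nonneg hB0 _)
  -- main case
  push_neg at hz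
  have hA : 0 < A := lt_of_le_of_ne hA0 (Ne.symm hz.1)
  have hB : 0 < B := lt_of_le_of_ne hB0 (Ne.symm hz.2)
  set R := ((A/B) ^ ((1:ℝ)/2)) with hRdef
  have hR : 0 < R := Real.rpow_pos_of_pos (div_pos hA hB) _
  obtain ⟨hInt1, hle1⟩ := leftPiece hσ0 hσ1 hdiff hint hR
  obtain ⟨hInt2, hle2⟩ := tailPiece hσ0 hdiff hint hR
  rw [← hBdef] at hle1
  rw [← hAdef] at hle2
  have hU : Set.Ioc (0:ℝ) R ∪ Set.Ioi R = Set.Ioi 0 := Ioc_union_Ioi_eq_Ioi hR.le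
  have hIntφ : IntegrableOn (fun s => f s ^ 2 * s ^ (1-2*σ)) (Set.Ioi 0) := by
    rw [← hU]
    exact hInt1.union hInt2
  have hIntψ : IntegrableOn (fun r => f r ^ 2 / r ^ (2 * σ) * r) (Set.Ioi 0) :=
    hIntφ.congr_fun (fun x hx => (hEq hx).symm) measurableSet_Ioi
  refine ⟨hIntψ, ?_⟩
  have hsplit : (∫ r in Set.Ioi (0:ℝ), f r ^ 2 / r ^ (2 * σ) * r)
      = (∫ s in Set.Ioc (0:ℝ) R, f s ^ 2 * s ^ (1-2*σ))
        + ∫ s in Set.Ioi R, f s ^ 2 * s ^ (1-2*σ) := by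
    rw [setIntegral_congr_fun measurableSet_Ioi hEq, ← hU,
      setIntegral_union (Ioc_disjoint_Ioi le_rfl) measurableSet_Ioi hInt1 hInt2]
  rw [hsplit]
  -- rpow algebra
  set E := A ^ (1-σ) * B ^ σ with hEdef
  have lem1 : A ^ ((1:ℝ)/2) * B ^ ((1:ℝ)/2) * R ^ (1-2*σ) = E := by
    rw [hRdef, rpowR hA hB, hEdef]
    calc A ^ ((1:ℝ)/2) * B ^ ((1:ℝ)/2) * (A ^ ((1-2*σ)/2) * B ^ (-((1-2*σ)/2)))
        = (A ^ ((1:ℝ)/2) * A ^ ((1-2*σ)/2)) * (B ^ ((1:ℝ)/2) * B ^ (-((1-2*σ)/2))) := by ring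
      _ = A ^ ((1:ℝ)/2 + (1-2*σ)/2) * B ^ ((1:ℝ)/2 + -((1-2*σ)/2)) := by
          rw [← Real.rpow_add hA, ← Real.rpow_add hB]
      _ = A ^ (1-σ) * B ^ σ := by
          rw [show (1:ℝ)/2 + (1-2*σ)/2 = 1-σ by ring, show (1:ℝ)/2 + -((1-2*σ)/2) = σ by ring]
  have lem2 : R ^ (2-2*σ) * B = E := by
    rw [hRdef, rpowR hA hB, hEdef]
    calc A ^ ((2-2*σ)/2) * B ^ (-((2-2*σ)/2)) * B
        = A ^ ((2-2*σ)/2) * (B ^ (-((2-2*σ)/2)) * B ^ (1:ℝ)) := by rw [Real.rpow_one]; ring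
      _ = A ^ ((2-2*σ)/2) * B ^ (-((2-2*σ)/2) + 1) := by rw [← Real.rpow_add hB]
      _ = A ^ (1-σ) * B ^ σ := by
          rw [show (2-2*σ)/2 = 1-σ by ring]
          rw [show -(1-σ) + 1 = σ by ring]
  have lem3 : R ^ (-(2*σ)) * A = E := by
    rw [hRdef, rpowR hA hB, hEdef]
    calc A ^ (-(2*σ)/2) * B ^ (-(-(2*σ)/2)) * A
        = (A ^ (-(2*σ)/2) * A ^ (1:ℝ)) * B ^ (-(-(2*σ)/2)) := by rw [Real.rpow_one]; ring
      _ = A ^ (-(2*σ)/2 + 1) * B ^ (-(-(2*σ)/2)) := by rw [← Real.rpow_add hA]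
      _ = A ^ (1-σ) * B ^ σ := by
          rw [show -(2*σ)/2 + 1 = 1-σ by ring, show -(-(2*σ)/2) = σ by ring]
  -- Strauss at R
  have hfR : f R ^ 2 * R ≤ 2 * (A ^ ((1:ℝ)/2) * B ^ ((1:ℝ)/2)) := by
    have h1 := strauss hdiff hint hR
    have h2 := cauchyK hdiff hint
    rw [← hAdef, ← hBdef] at h2
    linarith
  have hterm1 : f R ^ 2 * R ^ (2-2*σ) / (1-σ) ≤ 2*E/(1-σ) := by
    have hsplitR : R ^ (2-2*σ) = R * R ^ (1-2*σ) := by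
      rw [show (2-2*σ) = 1 + (1-2*σ) by ring, Real.rpow_add hR, Real.rpow_one]
    have hnum : f R ^ 2 * R ^ (2-2*σ) ≤ 2*E := by
      rw [hsplitR]
      calc f R ^2 * (R * R ^ (1-2*σ)) = (f R ^2 * R) * R ^ (1-2*σ) := by ring
        _ ≤ (2 * (A ^ ((1:ℝ)/2) * B ^ ((1:ℝ)/2))) * R ^ (1-2*σ) :=
            mul_le_mul_of_nonneg_right hfR (Real.rpow_nonneg hR.le _)
        _ = 2 * (A ^ ((1:ℝ)/2) * B ^ ((1:ℝ)/2) * R ^ (1-2*σ)) := by ring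
        _ = 2 * E := by rw [lem1]
    gcongr
  have hterm2 : R ^ (2-2*σ) * B / (1-σ)^2 = E/(1-σ)^2 := by rw [lem2]
  have hfinal : (∫ s in Set.Ioc (0:ℝ) R, f s ^ 2 * s ^ (1-2*σ))
      + (∫ s in Set.Ioi R, f s ^ 2 * s ^ (1-2*σ))
      ≤ 2*E/(1-σ) + E/(1-σ)^2 + E := by
    rw [lem3] at hle2
    rw [hterm2] at hle1
    linarith
  refine hfinal.trans ?_
  have hEeq : 2*E/(1-σ) + E/(1-σ)^2 + E = (1 + 2/(1-σ) + 1/(1-σ)^2) * E := by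
    field_simp
    ring
  rw [hEeq, hEdef]
  rw [show (1 + 2/(1-σ) + 1/(1-σ)^2) * (A ^ (1-σ) * B ^ σ)
    = (1 + 2/(1-σ) + 1/(1-σ)^2) * A ^ (1-σ) * B ^ σ by ring]
end

section
/- There is a constant C such that for every radial function f on ℝ² with f_r, f/r ∈ L²(r dr), one has ‖f‖_{L^∞(ℝ²)}² ≤ C ∫₀^∞ (|f'(r)|² + f(r)²/r²) r dr. -/
open MeasureTheory Real Set

/-- L^∞ bound for radial functions on ℝ² with f_r, f/r ∈ L²:
‖f‖_∞² ≤ C ∫₀^∞ (f'² + f²/r²) r dr. -/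
theorem radial_sup_bound :
    ∃ C : ℝ, 0 < C ∧ ∀ f : ℝ → ℝ,
      (∀ r ∈ Set.Ioi (0:ℝ), DifferentiableAt ℝ f r) →
      IntegrableOn (fun r => ((deriv f r) ^ 2 + f r ^ 2 / r ^ 2) * r) (Set.Ioi 0) →
      ∀ r ∈ Set.Ioi (0:ℝ),
        f r ^ 2 ≤ C * ∫ s in Set.Ioi (0:ℝ), ((deriv f s) ^ 2 + f s ^ 2 / s ^ 2) * s := by
  refine ⟨1, one_pos, fun f hdiff hint r hr => ?_⟩
  simp only [Set.mem_Ioi] at hr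
  set g : ℝ → ℝ := fun s => ((deriv f s) ^ 2 + f s ^ 2 / s ^ 2) * s with hgdef
  have hg0 : ∀ s ∈ Set.Ioi (0:ℝ), 0 ≤ g s := by
    intro s hs
    have hs' : (0:ℝ) < s := hs
    positivity
  rw [one_mul]
  -- pointwise bound |2 f f'| ≤ g on (0,∞)
  have hbound : ∀ t : ℝ, 0 < t → |2 * f t * deriv f t| ≤ g t := by
    intro t ht
    have h1 : f t ^ 2 / t ^ 2 * t = f t ^ 2 / t := by field_simp
    have h2 : f t ^ 2 / t * t = f t ^ 2 := by field_simp
    rw [abs_le]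
    constructor
    · simp only [hgdef]
      nlinarith [sq_nonneg (deriv f t * t + f t), ht, sq_nonneg (deriv f t), sq_nonneg (f t)]
    · simp only [hgdef]
      nlinarith [sq_nonneg (deriv f t * t - f t), ht, sq_nonneg (deriv f t), sq_nonneg (f t)]
  have hcont : ContinuousOn f (Set.Ioi 0) := fun x hx =>
    (hdiff x hx).continuousAt.continuousWithinAt
  refine le_of_forall_pos_le_add fun ε hε => ?_
  -- find s ∈ (0, r) with f s ^ 2 < ε
  obtain ⟨s, hs, hfs⟩ : ∃ s ∈ Set.Ioo (0:ℝ) r, f s ^ 2 < ε := by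
    by_contra hcon
    push_neg at hcon
    have hginteg : IntegrableOn g (Set.Ioo 0 r) :=
      hint.mono_set (fun x hx => hx.1)
    have hInv : IntegrableOn (fun x : ℝ => ε * x⁻¹) (Set.Ioo 0 r) := by
      refine Integrable.mono' hginteg ?_ ?_
      · exact ((measurable_id.inv.const_mul ε).aestronglyMeasurable : AEStronglyMeasurable _ _)
      · filter_upwards [ae_restrict_mem measurableSet_Ioo] with x hx
        have hx0 : (0:ℝ) < x := hx.1
        have h1 : ε ≤ f x ^ 2 := hcon x hx
        have h2 : ε * x⁻¹ ≤ f x ^ 2 / x := by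
          rw [div_eq_mul_inv]
          exact mul_le_mul_of_nonneg_right h1 (inv_nonneg.2 hx0.le)
        have h3 : f x ^ 2 / x ≤ g x := by
          have hq : f x ^ 2 / x ^ 2 * x = f x ^ 2 / x := by field_simp
          simp only [hgdef]
          nlinarith [sq_nonneg (deriv f x), hx0]
        rw [Real.norm_eq_abs, abs_of_nonneg (by positivity)]
        linarith
    have hInv' : IntegrableOn (fun x : ℝ => x⁻¹) (Set.Ioo 0 r) := by
      have h : IntegrableOn (fun x : ℝ => ε⁻¹ * (ε * x⁻¹)) (Set.Ioo 0 r) := hInv.const_mul ε⁻¹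
      refine IntegrableOn.congr_fun h (fun x hx => ?_) measurableSet_Ioo
      field_simp
    have hII : IntervalIntegrable (fun x : ℝ => x⁻¹) volume 0 r := by
      rw [intervalIntegrable_iff_integrableOn_Ioo_of_le hr.le]
      exact hInv'
    rcases intervalIntegrable_inv_iff.mp hII with h | h
    · exact hr.ne h
    · exact h (Set.left_mem_uIcc)
  obtain ⟨hs0, hsr⟩ := hs
  -- FTC on [s, r]
  have hderiv : ∀ t ∈ Set.uIcc s r, HasDerivAt (fun t => f t ^ 2) (2 * f t * deriv f t) t := by
    intro t ht
    rw [Set.uIcc_of_le hsr.le] at ht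
    have ht0 : 0 < t := lt_of_lt_of_le hs0 ht.1
    have h := ((hdiff t ht0).hasDerivAt).fun_pow 2
    simpa [mul_comm, mul_assoc, mul_left_comm] using h
  have hgIoc : IntegrableOn g (Set.Ioc s r) :=
    hint.mono_set (fun x hx => lt_trans hs0 hx.1)
  have hmeas : AEStronglyMeasurable (fun t => 2 * f t * deriv f t)
      (volume.restrict (Set.Ioc s r)) := by
    have hf : AEStronglyMeasurable f (volume.restrict (Set.Ioc s r)) :=
      (hcont.mono (fun x hx => lt_trans hs0 hx.1)).aestronglyMeasurable measurableSet_Ioc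
    exact ((hf.const_mul 2).mul (measurable_deriv f).aestronglyMeasurable.restrict)
  have hintderiv : IntervalIntegrable (fun t => 2 * f t * deriv f t) volume s r := by
    rw [intervalIntegrable_iff_integrableOn_Ioc_of_le hsr.le]
    refine Integrable.mono' hgIoc hmeas ?_
    filter_upwards [ae_restrict_mem measurableSet_Ioc] with x hx
    have hx0 : (0:ℝ) < x := lt_trans hs0 hx.1
    rw [Real.norm_eq_abs]; exact hbound x hx0
  have hFTC : ∫ t in s..r, 2 * f t * deriv f t = f r ^ 2 - f s ^ 2 :=
    intervalIntegral.integral_eq_sub_of_hasDerivAt hderiv hintderiv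
  have hgInterval : IntervalIntegrable g volume s r := by
    rw [intervalIntegrable_iff_integrableOn_Ioc_of_le hsr.le]
    exact hgIoc
  have hmono : ∫ t in s..r, 2 * f t * deriv f t ≤ ∫ t in s..r, g t := by
    refine intervalIntegral.integral_mono_on hsr.le hintderiv hgInterval ?_
    intro t ht
    have ht0 : 0 < t := lt_of_lt_of_le hs0 ht.1
    exact le_trans (le_abs_self _) (hbound t ht0)
  have hsub : ∫ t in s..r, g t ≤ ∫ t in Set.Ioi (0:ℝ), g t := by
    rw [intervalIntegral.integral_of_le hsr.le]
    refine setIntegral_mono_set hint ?_ ?_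
    · filter_upwards [ae_restrict_mem measurableSet_Ioi] with x hx using hg0 x hx
    · exact HasSubset.Subset.eventuallyLE (fun x hx => lt_trans hs0 hx.1)
  have : f r ^ 2 = f s ^ 2 + ∫ t in s..r, 2 * f t * deriv f t := by
    rw [hFTC]; ring
  rw [this]
  have : (∫ t in s..r, 2 * f t * deriv f t) ≤ ∫ t in Set.Ioi (0:ℝ), g t :=
    le_trans hmono hsub
  linarith
end

section
/- Let 2 < p < ∞ and m ≥ 1. Let g : (0,∞) → ℂ be radial, bounded, with g, g' ∈ L^p_loc, and suppose (∂_r − m/r) g ∈ L^p(ℝ²) (with respect to the 2‑dimensional measure r dr). Then g(r)/r ∈ L^p(ℝ²) and ‖g/r‖_{L^p(ℝ²)} ≤ C ‖g' − (m/r) g‖_{L^p(ℝ²)}, where one may take C = (m − 1 + 2/p)^{-1}. -/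
open MeasureTheory Real Set



lemma hardy_aux_deriv {p : ℝ} (hp : 2 < p) {g : ℝ → ℂ} (m : ℕ) {r : ℝ} (hr : 0 < r)
    (hg : HasDerivAt g (deriv g r) r) :
    HasDerivAt (fun s => ((‖g s‖^2 : ℝ) ^ (p/2)) * s ^ (2-p))
      (p * ‖g r‖ ^ (p-2) *
          ((starRingEnd ℂ) (g r) * (deriv g r - (m:ℂ)/(r:ℂ) * g r)).re * r ^ (2-p)
        + (p*m + 2 - p) * ‖g r‖ ^ p * r ^ (1-p)) r := by
  set a := deriv g r with ha
  have hu : HasDerivAt (fun s => (g s).re) a.re r := by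
    exact (Complex.reCLM.hasFDerivAt.comp_hasDerivAt r hg :)
  have hv : HasDerivAt (fun s => (g s).im) a.im r := by
    exact (Complex.imCLM.hasFDerivAt.comp_hasDerivAt r hg :)
  have hN : HasDerivAt (fun s => (‖g s‖^2 : ℝ))
      (2*((g r).re*a.re + (g r).im*a.im)) r := by
    have he : (fun s => (‖g s‖^2 : ℝ)) = fun s => (g s).re*(g s).re + (g s).im*(g s).im := by
      funext s
      simp [Complex.sq_norm, Complex.normSq_apply]
    rw [he]
    exact ((hu.mul hu).add (hv.mul hv)).congr_deriv (by ring)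
  have hP := hN.rpow_const (p := p/2) (Or.inr (by linarith))
  have hQ : HasDerivAt (fun s : ℝ => s ^ (2-p)) ((2-p) * r^(2-p-1)) r :=
    Real.hasDerivAt_rpow_const (Or.inl hr.ne')
  have hG := hP.mul hQ
  refine hG.congr_deriv ?_
  set z := g r with hz
  set x := ‖z‖ with hx
  have hxn : (0:ℝ) ≤ x := norm_nonneg _
  have hxsq : x^2 = z.re*z.re + z.im*z.im := by
    simp [hx, Complex.sq_norm, Complex.normSq_apply]
  have hre : ((starRingEnd ℂ) z * (a - (m:ℂ)/(r:ℂ) * z)).re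
      = (z.re*a.re + z.im*a.im) - ((m:ℝ)/r) * (x^2) := by
    have hc : (m:ℂ)/(r:ℂ) = (((m:ℝ)/r : ℝ) : ℂ) := by push_cast; ring
    rw [hc, hxsq]
    simp [Complex.mul_re, Complex.mul_im, Complex.sub_re, Complex.sub_im]
    ring
  rw [hre]
  rcases eq_or_lt_of_le hxn with h0 | hpos
  · have hz0 : z = 0 := by rw [← norm_eq_zero]; exact h0.symm
    rw [← h0]
    simp [hz0, Real.zero_rpow (by linarith : p ≠ 0),
      Real.zero_rpow (by linarith : p - 2 ≠ 0),
      Real.zero_rpow (by linarith : p/2 ≠ 0)]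
  · have hx2 : (x^2 : ℝ) ^ (p/2 - 1) = x ^ (p - 2) := by
      rw [← Real.rpow_natCast x 2, ← Real.rpow_mul hxn]
      congr 1; push_cast; ring
    have hx2' : (x^2 : ℝ) ^ (p/2) = x ^ p := by
      rw [← Real.rpow_natCast x 2, ← Real.rpow_mul hxn]
      congr 1; push_cast; ring
    have hxp2 : x^(p-2) * x^2 = x^p := by
      rw [← Real.rpow_natCast x 2, ← Real.rpow_add hpos]
      congr 1; push_cast; ring
    have hr1 : r ^ (2-p-1) = r ^ (1-p) := by congr 1; ring
    have hr2 : r ^ (2-p) = r * r ^ (1-p) := by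
      rw [show (2:ℝ)-p = 1 + (1-p) by ring, Real.rpow_add hr, Real.rpow_one]
    have key : ((m:ℝ)/r) * x^2 * (x^(p-2) * r^(2-p)) = (m:ℝ) * x^p * r^(1-p) := by
      rw [hr2]
      field_simp
      linear_combination (m:ℝ) * hxp2
    rw [hx2, hx2', hr1]
    linear_combination p * key

lemma hardy_memLp_of_int {q : ℝ} (hq : 0 < q) {f : ℝ → ℝ} {μ : Measure ℝ}
    (hmeas : AEStronglyMeasurable f μ) (hnn : 0 ≤ᵐ[μ] f)
    (hint : Integrable (fun x => f x ^ q) μ) :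
    MemLp f (ENNReal.ofReal q) μ := by
  have hq0 : ENNReal.ofReal q ≠ 0 := by simp [ENNReal.ofReal_eq_zero, not_le, hq]
  have := (memLp_norm_rpow_iff (q := ENNReal.ofReal q) (p := ENNReal.ofReal q) hmeas
    hq0 ENNReal.ofReal_ne_top).mp
  rw [ENNReal.div_self hq0 ENNReal.ofReal_ne_top] at this
  apply this
  rw [memLp_one_iff_integrable]
  apply hint.congr
  filter_upwards [hnn] with x hx
  rw [ENNReal.toReal_ofReal hq.le, Real.norm_of_nonneg hx]

lemma hardy_sq_rpow_half (x : ℝ) (hx : 0 ≤ x) (p : ℝ) : ((x^2 : ℝ)) ^ (p/2) = x ^ p := by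
  rw [← Real.rpow_natCast x 2, ← Real.rpow_mul hx]
  congr 1; push_cast; ring

lemma hardy_key {p : ℝ} (hp : 2 < p) (m : ℕ) {g : ℝ → ℂ} {M : ℝ} (hM0 : 0 ≤ M)
    (hdiff : ∀ r ∈ Ioi (0:ℝ), DifferentiableAt ℝ g r)
    (hbdd : ∀ r ∈ Ioi (0:ℝ), ‖g r‖ ≤ M)
    (hloc : ∀ a b : ℝ, 0 < a →
      IntegrableOn (fun r => ‖g r‖ ^ p + ‖deriv g r‖ ^ p) (Ioc a b))
    (hLp : IntegrableOn (fun r => ‖deriv g r - ((m : ℂ) / (r : ℂ)) * g r‖ ^ p * r) (Ioi 0))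
    {ε R : ℝ} (hε : 0 < ε) (hεR : ε ≤ R) :
    (p*m+2-p) * (∫ r in Ioc ε R, ‖g r / (r:ℂ)‖^p * r)
      ≤ M^p * R^(2-p) + p * (∫ r in Ioc ε R, ‖g r / (r:ℂ)‖^p * r)^(1-1/p)
          * (∫ r in Ioi (0:ℝ), ‖deriv g r - ((m : ℂ) / (r : ℂ)) * g r‖ ^ p * r)^(1/p) := by
  have hp0 : (0:ℝ) < p := by linarith
  have hp1 : (1:ℝ) < p := by linarith
  set H : ℝ → ℂ := fun r => deriv g r - (m:ℂ)/(r:ℂ) * g r with hHdef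
  set f₀ : ℝ → ℝ := fun r => ‖g r / (r:ℂ)‖^p * r with hf₀def
  have hsub : Ioc ε R ⊆ Ioi (0:ℝ) := fun x hx => hε.trans hx.1
  have hgc : ContinuousOn g (Ioi 0) := fun x hx => (hdiff x hx).continuousAt.continuousWithinAt
  have hgm : AEStronglyMeasurable g (volume.restrict (Ioc ε R)) :=
    (hgc.mono hsub).aestronglyMeasurable measurableSet_Ioc
  have hdm : Measurable (deriv g) := measurable_deriv g
  have hcm : Measurable (fun r : ℝ => (m:ℂ)/(r:ℂ)) := by
    have he : (fun r : ℝ => (m:ℂ)/(r:ℂ)) = fun r => (((m:ℝ)/r : ℝ) : ℂ) := by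
      funext r; push_cast; ring
    rw [he]; exact Complex.measurable_ofReal.comp (measurable_const.div measurable_id)
  have hHm : AEMeasurable H (volume.restrict (Ioc ε R)) :=
    hdm.aemeasurable.sub (hcm.aemeasurable.mul hgm.aemeasurable)
  -- pointwise form of f₀
  have hf₀eq : ∀ r : ℝ, r ∈ Ioi (0:ℝ) → f₀ r = ‖g r‖^p * r^(1-p) := by
    intro r hr
    rw [mem_Ioi] at hr
    have h1 : ‖g r / (r:ℂ)‖ = ‖g r‖ / r := by
      rw [norm_div, Complex.norm_real, Real.norm_of_nonneg hr.le]
    have hrp : (0:ℝ) < r ^ p := Real.rpow_pos_of_pos hr p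
    have h2 : r^(1-p) = r / r^p := by
      rw [Real.rpow_sub hr, Real.rpow_one]
    simp only [hf₀def, h1, Real.div_rpow (norm_nonneg _) hr.le, h2]
    field_simp
  have hf₀nn : ∀ r ∈ Ioc ε R, 0 ≤ f₀ r := by
    intro r hr
    exact mul_nonneg (Real.rpow_nonneg (norm_nonneg _) _) ((hε.trans hr.1).le)
  set A := ∫ r in Ioc ε R, f₀ r with hAdef
  have hAnn : 0 ≤ A := setIntegral_nonneg measurableSet_Ioc hf₀nn
  set Bp := ∫ r in Ioi (0:ℝ), ‖H r‖^p * r with hBpdef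
  have hBpnn : 0 ≤ Bp := setIntegral_nonneg measurableSet_Ioi
    (fun r hr => mul_nonneg (Real.rpow_nonneg (norm_nonneg _) _) (le_of_lt hr))
  -- integrability of ‖deriv g‖ and ‖H‖ on Ioc ε R
  have hIocfin : volume (Ioc ε R) < ⊤ := measure_Ioc_lt_top
  have hDgp : IntegrableOn (fun r => ‖deriv g r‖^p) (Ioc ε R) := by
    refine (hloc ε R hε).mono' ((hdm.norm.pow measurable_const).aestronglyMeasurable) ?_
    filter_upwards with r
    rw [Real.norm_of_nonneg (Real.rpow_nonneg (norm_nonneg _) _)]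
    exact le_add_of_nonneg_left (Real.rpow_nonneg (norm_nonneg _) _)
  have hDg1 : IntegrableOn (fun r => ‖deriv g r‖) (Ioc ε R) := by
    refine ((integrableOn_const_iff (C := (1:ℝ))).2 (Or.inr hIocfin)).add hDgp |>.mono'
      hdm.norm.aestronglyMeasurable ?_
    filter_upwards with r
    rw [Real.norm_of_nonneg (norm_nonneg _)]
    rcases le_total (‖deriv g r‖) 1 with h | h
    · exact h.trans (le_add_of_nonneg_right (Real.rpow_nonneg (norm_nonneg _) _))
    · have : ‖deriv g r‖ ≤ ‖deriv g r‖ ^ p := by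
        nth_rewrite 1 [← Real.rpow_one (‖deriv g r‖)]
        exact Real.rpow_le_rpow_of_exponent_le h (by linarith)
      simp only [Pi.add_apply]
      linarith
  have hH1 : IntegrableOn (fun r => ‖H r‖) (Ioc ε R) := by
    refine (hDg1.add ((integrableOn_const_iff (C := (m:ℝ)*M/ε)).2 (Or.inr hIocfin))).mono'
      hHm.norm.aestronglyMeasurable ?_
    rw [ae_restrict_iff' measurableSet_Ioc]
    filter_upwards with r hr
    have hr0 : 0 < r := hε.trans hr.1
    rw [Real.norm_of_nonneg (norm_nonneg _)]
    have h1 : ‖H r‖ ≤ ‖deriv g r‖ + ‖(m:ℂ)/(r:ℂ) * g r‖ := norm_sub_le _ _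
    have h2 : ‖(m:ℂ)/(r:ℂ) * g r‖ ≤ (m:ℝ) * M / ε := by
      rw [norm_mul, norm_div, Complex.norm_natCast, Complex.norm_real,
        Real.norm_of_nonneg hr0.le]
      rw [show (m:ℝ)*M/ε = ((m:ℝ)/ε) * M by ring]
      exact mul_le_mul (div_le_div_of_nonneg_left (Nat.cast_nonneg m) hε hr.1.le)
        (hbdd r (hsub hr)) (norm_nonneg _) (div_nonneg (Nat.cast_nonneg m) hε.le)
    simp only [Pi.add_apply]
    linarith
  -- D1, D2 and their integrability
  set D1 : ℝ → ℝ := fun r => p * ‖g r‖^(p-2) * ((starRingEnd ℂ) (g r) * H r).re * r^(2-p)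
    with hD1def
  set D2 : ℝ → ℝ := fun r => (p*m+2-p) * ‖g r‖^p * r^(1-p) with hD2def
  have hrm : Measurable (fun r : ℝ => r ^ (2-p)) := measurable_id.pow measurable_const
  have hrm' : Measurable (fun r : ℝ => r ^ (1-p)) := measurable_id.pow measurable_const
  have hD1m : AEStronglyMeasurable D1 (volume.restrict (Ioc ε R)) := by
    apply AEMeasurable.aestronglyMeasurable
    exact ((aemeasurable_const.mul (hgm.norm.aemeasurable.pow aemeasurable_const)).mul
      (Complex.measurable_re.comp_aemeasurable
        ((continuous_star.measurable.comp_aemeasurable hgm.aemeasurable).mul hHm))).mul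
      hrm.aemeasurable
  have hgnorm_le : ∀ r, r ∈ Ioc ε R → ‖g r‖ ≤ M := fun r hr => hbdd r (hsub hr)
  have hD1bound : ∀ r ∈ Ioc ε R, ‖D1 r‖ ≤ (p * M^(p-2) * M * ε^(2-p)) * ‖H r‖ := by
    intro r hr
    have hr0 : 0 < r := hε.trans hr.1
    have h1 : ‖D1 r‖ = p * ‖g r‖^(p-2) * |((starRingEnd ℂ) (g r) * H r).re| * r^(2-p) := by
      rw [hD1def]
      simp only [Real.norm_eq_abs, abs_mul]
      rw [abs_of_nonneg hp0.le, abs_of_nonneg (Real.rpow_nonneg (norm_nonneg _) _),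
        abs_of_nonneg (Real.rpow_nonneg hr0.le _)]
    have h2 : |((starRingEnd ℂ) (g r) * H r).re| ≤ M * ‖H r‖ := by
      calc |((starRingEnd ℂ) (g r) * H r).re| ≤ ‖(starRingEnd ℂ) (g r) * H r‖ :=
            Complex.abs_re_le_norm _
        _ = ‖g r‖ * ‖H r‖ := by rw [norm_mul, RCLike.norm_conj]
        _ ≤ M * ‖H r‖ := mul_le_mul_of_nonneg_right (hgnorm_le r hr) (norm_nonneg _)
    calc ‖D1 r‖ = p * ‖g r‖^(p-2) * |((starRingEnd ℂ) (g r) * H r).re| * r^(2-p) := h1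
      _ ≤ p * M^(p-2) * (M * ‖H r‖) * ε^(2-p) := by
          have t1 : ‖g r‖^(p-2) ≤ M^(p-2) :=
            Real.rpow_le_rpow (norm_nonneg _) (hgnorm_le r hr) (by linarith)
          have t3 : r^(2-p) ≤ ε^(2-p) :=
            Real.rpow_le_rpow_of_nonpos hε hr.1.le (by linarith)
          have n1 : (0:ℝ) ≤ p * M^(p-2) := mul_nonneg hp0.le (Real.rpow_nonneg hM0 _)
          have n2 : (0:ℝ) ≤ p * M^(p-2) * (M * ‖H r‖) :=
            mul_nonneg n1 (mul_nonneg hM0 (norm_nonneg _))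
          exact mul_le_mul
            (mul_le_mul (mul_le_mul_of_nonneg_left t1 hp0.le) h2 (abs_nonneg _) n1)
            t3 (Real.rpow_nonneg hr0.le _) n2
      _ = (p * M^(p-2) * M * ε^(2-p)) * ‖H r‖ := by ring
  have hD1int : IntegrableOn D1 (Ioc ε R) := by
    refine (hH1.const_mul (p * M^(p-2) * M * ε^(2-p))).mono' hD1m ?_
    rw [ae_restrict_iff' measurableSet_Ioc]
    filter_upwards with r hr
    exact hD1bound r hr
  have hD2m : AEStronglyMeasurable D2 (volume.restrict (Ioc ε R)) := by
    apply AEMeasurable.aestronglyMeasurable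
    exact (aemeasurable_const.mul (hgm.norm.aemeasurable.pow aemeasurable_const)).mul
      hrm'.aemeasurable
  have hD2int : IntegrableOn D2 (Ioc ε R) := by
    refine (integrableOn_const_iff (C := |p*m+2-p| * M^p * ε^(1-p))).2 (Or.inr hIocfin)
      |>.mono' hD2m ?_
    rw [ae_restrict_iff' measurableSet_Ioc]
    filter_upwards with r hr
    have hr0 : 0 < r := hε.trans hr.1
    rw [hD2def, Real.norm_eq_abs, abs_mul, abs_mul,
      abs_of_nonneg (Real.rpow_nonneg (norm_nonneg _) _),
      abs_of_nonneg (Real.rpow_nonneg hr0.le _)]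
    have t1 : ‖g r‖^p ≤ M^p := Real.rpow_le_rpow (norm_nonneg _) (hgnorm_le r hr) hp0.le
    have t3 : r^(1-p) ≤ ε^(1-p) :=
      Real.rpow_le_rpow_of_nonpos hε hr.1.le (by linarith)
    exact mul_le_mul (mul_le_mul_of_nonneg_left t1 (abs_nonneg _)) t3
      (Real.rpow_nonneg hr0.le _) (mul_nonneg (abs_nonneg _) (Real.rpow_nonneg hM0 _))
  -- FTC
  have hFTC : ∫ r in Ioc ε R, (D1 r + D2 r) =
      (‖g R‖^2 : ℝ)^(p/2) * R^(2-p) - (‖g ε‖^2 : ℝ)^(p/2) * ε^(2-p) := by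
    rw [← intervalIntegral.integral_of_le hεR]
    apply intervalIntegral.integral_eq_sub_of_hasDerivAt
    · intro x hx
      rw [uIcc_of_le hεR] at hx
      have hx0 : 0 < x := lt_of_lt_of_le hε hx.1
      exact hardy_aux_deriv hp m hx0 (hdiff x hx0).hasDerivAt
    · rw [intervalIntegrable_iff_integrableOn_Ioc_of_le hεR]
      exact hD1int.add hD2int
  have hsplit : ∫ r in Ioc ε R, (D1 r + D2 r) = (∫ r in Ioc ε R, D1 r) + (p*m+2-p) * A := by
    rw [integral_add hD1int hD2int]
    congr 1
    have he : EqOn D2 (fun r => (p*m+2-p) * f₀ r) (Ioc ε R) := by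
      intro r hr
      simp only
      rw [hf₀eq r (hsub hr), hD2def]
      ring
    rw [setIntegral_congr_fun measurableSet_Ioc he, integral_const_mul]
  -- G bounds
  have hR0 : 0 < R := hε.trans_le hεR
  have hGR : (‖g R‖^2 : ℝ)^(p/2) * R^(2-p) ≤ M^p * R^(2-p) := by
    apply mul_le_mul_of_nonneg_right _ (Real.rpow_nonneg hR0.le _)
    rw [hardy_sq_rpow_half _ (norm_nonneg _)]
    exact Real.rpow_le_rpow (norm_nonneg _) (hbdd R hR0) hp0.le
  have hGε : 0 ≤ (‖g ε‖^2 : ℝ)^(p/2) * ε^(2-p) :=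
    mul_nonneg (Real.rpow_nonneg (sq_nonneg _) _) (Real.rpow_nonneg hε.le _)
  -- Hölder setup
  have hp1' : (0:ℝ) < p - 1 := by linarith
  have hq'conj : (p/(p-1)).HolderConjugate p := by
    exact (Real.HolderConjugate.conjExponent hp1).symm
  set f : ℝ → ℝ := fun r => (f₀ r)^((p-1)/p) with hfd
  set k : ℝ → ℝ := fun r => (‖H r‖^p * r)^(1/p) with hkd
  have hne : ∀ x ∈ Ioc ε R, (x:ℂ) ≠ 0 := by
    intro x hx
    exact_mod_cast ne_of_gt (hε.trans hx.1)
  have hf₀c : ContinuousOn f₀ (Ioc ε R) := by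
    apply ContinuousOn.mul _ continuousOn_id
    apply ContinuousOn.rpow_const
    · exact (((hgc.mono hsub).div (Complex.continuous_ofReal.continuousOn) hne)).norm
    · intro x _; exact Or.inr hp0.le
  have hIf₀ : IntegrableOn f₀ (Ioc ε R) := by
    refine (integrableOn_const_iff (C := (M/ε)^p * R)).2 (Or.inr hIocfin) |>.mono'
      (hf₀c.aestronglyMeasurable measurableSet_Ioc) ?_
    rw [ae_restrict_iff' measurableSet_Ioc]
    filter_upwards with r hr
    have hr0 : 0 < r := hε.trans hr.1
    rw [Real.norm_of_nonneg (hf₀nn r hr)]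
    have h1 : ‖g r / (r:ℂ)‖ = ‖g r‖ / r := by
      rw [norm_div, Complex.norm_real, Real.norm_of_nonneg hr0.le]
    rw [hf₀def]
    simp only [h1]
    have h2 : ‖g r‖ / r ≤ M / ε := div_le_div₀ hM0 (hbdd r (hsub hr)) hε hr.1.le
    exact mul_le_mul (Real.rpow_le_rpow (div_nonneg (norm_nonneg _) hr0.le) h2 hp0.le)
      hr.2 hr0.le (Real.rpow_nonneg (div_nonneg hM0 hε.le) _)
  have hfm : AEStronglyMeasurable f (volume.restrict (Ioc ε R)) :=
    (hf₀c.rpow_const (fun x hx => Or.inr (by positivity))).aestronglyMeasurable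
      measurableSet_Ioc
  have hfnn : 0 ≤ᵐ[volume.restrict (Ioc ε R)] f := by
    refine (ae_restrict_iff' measurableSet_Ioc).2 (Filter.Eventually.of_forall
      fun r hr => ?_)
    simp only [Pi.zero_apply]
    exact Real.rpow_nonneg (hf₀nn r hr) _
  have hknn : 0 ≤ᵐ[volume.restrict (Ioc ε R)] k := by
    refine (ae_restrict_iff' measurableSet_Ioc).2 (Filter.Eventually.of_forall
      fun r hr => ?_)
    simp only [Pi.zero_apply]
    exact Real.rpow_nonneg (mul_nonneg (Real.rpow_nonneg (norm_nonneg _) _)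
      (hε.trans hr.1).le) _
  have hkm : AEStronglyMeasurable k (volume.restrict (Ioc ε R)) := by
    apply AEMeasurable.aestronglyMeasurable
    exact ((hHm.norm.pow aemeasurable_const).mul aemeasurable_id).pow aemeasurable_const
  have hfq'eq : EqOn (fun r => f r ^ (p/(p-1))) f₀ (Ioc ε R) := by
    intro r hr
    simp only [hfd]
    rw [← Real.rpow_mul (hf₀nn r hr), show (p-1)/p*(p/(p-1)) = 1 by
      field_simp, Real.rpow_one]
  have hfint : Integrable (fun r => f r ^ (p/(p-1))) (volume.restrict (Ioc ε R)) := by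
    apply hIf₀.congr
    rw [Filter.eventuallyEq_iff_exists_mem]
    exact ⟨Ioc ε R, self_mem_ae_restrict measurableSet_Ioc, fun r hr => (hfq'eq hr).symm⟩
  have hfmem : MemLp f (ENNReal.ofReal (p/(p-1))) (volume.restrict (Ioc ε R)) :=
    hardy_memLp_of_int (div_pos hp0 hp1') hfm hfnn hfint
  have hkpeq : EqOn (fun r => k r ^ p) (fun r => ‖H r‖^p * r) (Ioc ε R) := by
    intro r hr
    simp only [hkd]
    rw [← Real.rpow_mul (mul_nonneg (Real.rpow_nonneg (norm_nonneg _) _)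
      (hε.trans hr.1).le), show 1/p*p = 1 by field_simp, Real.rpow_one]
  have hkint : Integrable (fun r => k r ^ p) (volume.restrict (Ioc ε R)) := by
    apply (hLp.mono_set hsub).congr
    rw [Filter.eventuallyEq_iff_exists_mem]
    exact ⟨Ioc ε R, self_mem_ae_restrict measurableSet_Ioc, fun r hr => (hkpeq hr).symm⟩
  have hkmem : MemLp k (ENNReal.ofReal p) (volume.restrict (Ioc ε R)) :=
    hardy_memLp_of_int hp0 hkm hknn hkint
  have hHold := integral_mul_le_Lp_mul_Lq_of_nonneg (μ := volume.restrict (Ioc ε R))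
    hq'conj hfnn hknn hfmem hkmem
  have hfq'A : ∫ r in Ioc ε R, f r ^ (p/(p-1)) = A := by
    rw [hAdef]
    exact setIntegral_congr_fun measurableSet_Ioc hfq'eq
  have hkpint_nonneg : 0 ≤ ∫ r in Ioc ε R, k r ^ p := by
    apply setIntegral_nonneg measurableSet_Ioc
    intro r hr
    exact Real.rpow_nonneg (Real.rpow_nonneg (mul_nonneg
      (Real.rpow_nonneg (norm_nonneg _) _) (hε.trans hr.1).le) _) _
  have hkpBp : ∫ r in Ioc ε R, k r ^ p ≤ Bp := by
    rw [setIntegral_congr_fun measurableSet_Ioc hkpeq, hBpdef]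
    apply setIntegral_mono_set hLp
    · refine (ae_restrict_iff' measurableSet_Ioi).2 (Filter.Eventually.of_forall
        fun r hr => ?_)
      simp only [Pi.zero_apply]
      exact mul_nonneg (Real.rpow_nonneg (norm_nonneg _) _) (le_of_lt hr)
    · exact HasSubset.Subset.eventuallyLE hsub
  have hfkr_all : ∀ r ∈ Ioc ε R, f r * k r = ‖g r‖^(p-1) * ‖H r‖ * r^(2-p) := by
    intro r hr
    have hr0 : 0 < r := hε.trans hr.1
    simp only [hfd, hkd]
    rw [hf₀eq r (hsub hr)]
    rw [Real.mul_rpow (Real.rpow_nonneg (norm_nonneg _) _) (Real.rpow_nonneg hr0.le _),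
      Real.mul_rpow (Real.rpow_nonneg (norm_nonneg _) _) hr0.le,
      ← Real.rpow_mul (norm_nonneg _), ← Real.rpow_mul hr0.le,
      ← Real.rpow_mul (norm_nonneg _),
      show p*((p-1)/p) = p-1 by field_simp,
      show p*(1/p) = 1 by field_simp, Real.rpow_one]
    have hre : r ^ ((1-p)*((p-1)/p)) * r ^ (1/p) = r ^ (2-p) := by
      rw [← Real.rpow_add hr0]
      congr 1
      field_simp
      ring
    linear_combination (‖g r‖^(p-1) * ‖H r‖) * hre
  -- pointwise : ‖D1 r‖ ≤ p * (f r * k r)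
  have hfk : ∀ r ∈ Ioc ε R, ‖D1 r‖ ≤ p * (f r * k r) := by
    intro r hr
    have hr0 : 0 < r := hε.trans hr.1
    have hxx : ‖g r‖^(p-2) * ‖g r‖ = ‖g r‖^(p-1) := by
      rcases eq_or_lt_of_le (norm_nonneg (g r)) with h0 | h0
      · rw [← h0, Real.zero_rpow (by linarith : p-2 ≠ 0),
          Real.zero_rpow (by linarith : p-1 ≠ 0), zero_mul]
      · nth_rewrite 2 [← Real.rpow_one (‖g r‖)]
        rw [← Real.rpow_add h0]
        congr 1; ring
    have hfkr := hfkr_all r hr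
    have h1 : ‖D1 r‖ = p * ‖g r‖^(p-2) * |((starRingEnd ℂ) (g r) * H r).re| * r^(2-p) := by
      rw [hD1def]
      simp only [Real.norm_eq_abs, abs_mul]
      rw [abs_of_nonneg hp0.le, abs_of_nonneg (Real.rpow_nonneg (norm_nonneg _) _),
        abs_of_nonneg (Real.rpow_nonneg hr0.le _)]
    have h2 : |((starRingEnd ℂ) (g r) * H r).re| ≤ ‖g r‖ * ‖H r‖ := by
      calc |((starRingEnd ℂ) (g r) * H r).re| ≤ ‖(starRingEnd ℂ) (g r) * H r‖ :=
            Complex.abs_re_le_norm _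
        _ = ‖g r‖ * ‖H r‖ := by rw [norm_mul, RCLike.norm_conj]
    calc ‖D1 r‖ = p * ‖g r‖^(p-2) * |((starRingEnd ℂ) (g r) * H r).re| * r^(2-p) := h1
      _ ≤ p * ‖g r‖^(p-2) * (‖g r‖ * ‖H r‖) * r^(2-p) := by
          apply mul_le_mul_of_nonneg_right (mul_le_mul_of_nonneg_left h2
            (mul_nonneg hp0.le (Real.rpow_nonneg (norm_nonneg _) _)))
            (Real.rpow_nonneg hr0.le _)
      _ = p * (‖g r‖^(p-2) * ‖g r‖) * ‖H r‖ * r^(2-p) := by ring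
      _ = p * (f r * k r) := by rw [hxx, hfkr]; ring
  have hIfk : IntegrableOn (fun r => p * (f r * k r)) (Ioc ε R) := by
    refine (hH1.const_mul (p * M^(p-1) * R^(2-p) + p * M^(p-1) * ε^(2-p))).mono'
      ((aemeasurable_const.mul (hfm.aemeasurable.mul hkm.aemeasurable)).aestronglyMeasurable)
      ?_
    rw [ae_restrict_iff' measurableSet_Ioc]
    filter_upwards with r hr
    have hr0 : 0 < r := hε.trans hr.1
    have hfkr := hfkr_all r hr
    rw [Real.norm_of_nonneg (mul_nonneg hp0.le (mul_nonneg
      (Real.rpow_nonneg (hf₀nn r hr) _)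
      (Real.rpow_nonneg (mul_nonneg (Real.rpow_nonneg (norm_nonneg _) _) hr0.le) _))),
      hfkr]
    have t1 : ‖g r‖^(p-1) ≤ M^(p-1) :=
      Real.rpow_le_rpow (norm_nonneg _) (hgnorm_le r hr) (by linarith)
    have t3 : r^(2-p) ≤ ε^(2-p) :=
      Real.rpow_le_rpow_of_nonpos hε hr.1.le (by linarith)
    calc p * (‖g r‖^(p-1) * ‖H r‖ * r^(2-p))
        ≤ p * (M^(p-1) * ‖H r‖ * ε^(2-p)) := by
          apply mul_le_mul_of_nonneg_left _ hp0.le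
          exact mul_le_mul (mul_le_mul_of_nonneg_right t1 (norm_nonneg _)) t3
            (Real.rpow_nonneg hr0.le _)
            (mul_nonneg (Real.rpow_nonneg hM0 _) (norm_nonneg _))
      _ = (p * M^(p-1) * ε^(2-p)) * ‖H r‖ := by ring
      _ ≤ (p * M^(p-1) * R^(2-p) + p * M^(p-1) * ε^(2-p)) * ‖H r‖ := by
          apply mul_le_mul_of_nonneg_right _ (norm_nonneg _)
          have : 0 ≤ p * M^(p-1) * R^(2-p) :=
            mul_nonneg (mul_nonneg hp0.le (Real.rpow_nonneg hM0 _))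
              (Real.rpow_nonneg hR0.le _)
          linarith
  have hD1intbound : -(∫ r in Ioc ε R, D1 r) ≤ p * (A^(1-1/p) * Bp^(1/p)) := by
    have step1 : -(∫ r in Ioc ε R, D1 r) ≤ ‖∫ r in Ioc ε R, D1 r‖ := by
      rw [Real.norm_eq_abs]; exact neg_le_abs _
    have step2 : ‖∫ r in Ioc ε R, D1 r‖ ≤ ∫ r in Ioc ε R, ‖D1 r‖ :=
      norm_integral_le_integral_norm _
    have step3 : ∫ r in Ioc ε R, ‖D1 r‖ ≤ ∫ r in Ioc ε R, p * (f r * k r) :=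
      setIntegral_mono_on hD1int.norm hIfk measurableSet_Ioc hfk
    have step4 : ∫ r in Ioc ε R, p * (f r * k r) = p * ∫ r in Ioc ε R, f r * k r :=
      integral_const_mul _ _
    have step5 : p * (∫ r in Ioc ε R, f r * k r) ≤
        p * ((∫ r in Ioc ε R, f r ^ (p/(p-1))) ^ (1/(p/(p-1))) *
          (∫ r in Ioc ε R, k r ^ p) ^ (1/p)) :=
      mul_le_mul_of_nonneg_left hHold hp0.le
    have hexp : 1/(p/(p-1)) = 1 - 1/p := by field_simp
    have step6 : (∫ r in Ioc ε R, f r ^ (p/(p-1))) ^ (1/(p/(p-1))) *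
        (∫ r in Ioc ε R, k r ^ p) ^ (1/p) ≤ A^(1-1/p) * Bp^(1/p) := by
      rw [hfq'A, hexp]
      apply mul_le_mul_of_nonneg_left
        (Real.rpow_le_rpow hkpint_nonneg hkpBp (by positivity))
        (Real.rpow_nonneg hAnn _)
    calc -(∫ r in Ioc ε R, D1 r) ≤ ∫ r in Ioc ε R, ‖D1 r‖ := step1.trans step2
      _ ≤ p * ∫ r in Ioc ε R, f r * k r := step3.trans_eq step4
      _ ≤ p * ((∫ r in Ioc ε R, f r ^ (p/(p-1))) ^ (1/(p/(p-1))) *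
          (∫ r in Ioc ε R, k r ^ p) ^ (1/p)) := step5
      _ ≤ p * (A^(1-1/p) * Bp^(1/p)) := mul_le_mul_of_nonneg_left step6 hp0.le
  -- assemble
  have hmain : (p*m+2-p) * A ≤ M^p * R^(2-p) + p * (A^(1-1/p) * Bp^(1/p)) := by
    have e1 : (p*(m:ℝ)+2-p) * A = (∫ r in Ioc ε R, (D1 r + D2 r)) - ∫ r in Ioc ε R, D1 r := by
      rw [hsplit]; ring
    rw [e1, hFTC]
    linarith [hGR, hGε, hD1intbound]
  show (p*(m:ℝ)+2-p) * A ≤ M^p * R^(2-p) + p * A^(1-1/p) * Bp^(1/p)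
  rw [mul_assoc]
  exact hmain

lemma hardy_f0_int {p : ℝ} (hp : 2 < p) {g : ℝ → ℂ} {M : ℝ} (hM0 : 0 ≤ M)
    (hdiff : ∀ r ∈ Ioi (0:ℝ), DifferentiableAt ℝ g r)
    (hbdd : ∀ r ∈ Ioi (0:ℝ), ‖g r‖ ≤ M)
    {ε R : ℝ} (hε : 0 < ε) :
    IntegrableOn (fun r => ‖g r / (r:ℂ)‖^p * r) (Ioc ε R) := by
  have hp0 : (0:ℝ) < p := by linarith
  have hsub : Ioc ε R ⊆ Ioi (0:ℝ) := fun x hx => hε.trans hx.1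
  have hgc : ContinuousOn g (Ioi 0) := fun x hx => (hdiff x hx).continuousAt.continuousWithinAt
  have hne : ∀ x ∈ Ioc ε R, (x:ℂ) ≠ 0 := by
    intro x hx
    exact_mod_cast ne_of_gt (hε.trans hx.1)
  have hf₀c : ContinuousOn (fun r => ‖g r / (r:ℂ)‖^p * r) (Ioc ε R) := by
    apply ContinuousOn.mul _ continuousOn_id
    apply ContinuousOn.rpow_const
    · exact (((hgc.mono hsub).div (Complex.continuous_ofReal.continuousOn) hne)).norm
    · intro x _; exact Or.inr hp0.le
  refine (integrableOn_const_iff (C := (M/ε)^p * R)).2 (Or.inr measure_Ioc_lt_top) |>.mono'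
    (hf₀c.aestronglyMeasurable measurableSet_Ioc) ?_
  rw [ae_restrict_iff' measurableSet_Ioc]
  filter_upwards with r hr
  have hr0 : 0 < r := hε.trans hr.1
  rw [Real.norm_of_nonneg (mul_nonneg (Real.rpow_nonneg (norm_nonneg _) _) hr0.le)]
  have h1 : ‖g r / (r:ℂ)‖ = ‖g r‖ / r := by
    rw [norm_div, Complex.norm_real, Real.norm_of_nonneg hr0.le]
  simp only [h1]
  have h2 : ‖g r‖ / r ≤ M / ε := div_le_div₀ hM0 (hbdd r (hsub hr)) hε hr.1.le
  exact mul_le_mul (Real.rpow_le_rpow (div_nonneg (norm_nonneg _) hr0.le) h2 hp0.le)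
    hr.2 hr0.le (Real.rpow_nonneg (div_nonneg hM0 hε.le) _)

lemma hardy_selfbound {p x c d : ℝ} (hp : 1 < p) (hx : 0 ≤ x) (hc : 0 ≤ c) (hd : 0 ≤ d)
    (h : x ≤ c + d * x^(1-1/p)) : x ≤ max (2*c) ((2*d)^p) := by
  by_cases h1 : d * x^(1-1/p) ≤ x/2
  · have : x ≤ 2*c := by linarith
    exact this.trans (le_max_left _ _)
  · push_neg at h1
    rcases eq_or_lt_of_le hx with h0 | h0
    · rw [← h0]; exact le_trans (by linarith) (le_max_left _ _)
    · have hxe : x^(1/p) * x^(1-1/p) = x := by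
        rw [← Real.rpow_add h0, show 1/p + (1-1/p) = 1 by ring, Real.rpow_one]
      have hx1 : 0 < x^(1-1/p) := Real.rpow_pos_of_pos h0 _
      have h2 : x^(1/p) < 2*d := by
        have h3 : x^(1/p) * x^(1-1/p) < 2*d * x^(1-1/p) := by
          rw [hxe]; linarith
        exact lt_of_mul_lt_mul_right h3 hx1.le
      have h4 : x ≤ (2*d)^p := by
        have h5 : (x^(1/p))^p ≤ (2*d)^p :=
          Real.rpow_le_rpow (Real.rpow_nonneg hx _) h2.le (by linarith)
        rwa [← Real.rpow_mul hx, show 1/p*p = 1 by field_simp, Real.rpow_one] at h5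
      exact h4.trans (le_max_right _ _)

/-- Hardy-type inequality: if g : (0,∞) → ℂ is radial, bounded, g, g' ∈ L^p_loc, and
(∂_r − m/r)g ∈ L^p(ℝ²) (measure r dr), then g/r ∈ L^p(ℝ²) and
‖g/r‖_{L^p(ℝ²)} ≤ (m − 1 + 2/p)⁻¹ ‖g' − (m/r)g‖_{L^p(ℝ²)}. -/
theorem hardy_type_Lp (p : ℝ) (hp : 2 < p) (m : ℕ) (hm : 1 ≤ m)
    (g : ℝ → ℂ)
    (hdiff : ∀ r ∈ Set.Ioi (0:ℝ), DifferentiableAt ℝ g r)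
    (hbdd : ∃ M : ℝ, ∀ r ∈ Set.Ioi (0:ℝ), ‖g r‖ ≤ M)
    (hloc : ∀ a b : ℝ, 0 < a →
      IntegrableOn (fun r => ‖g r‖ ^ p + ‖deriv g r‖ ^ p) (Set.Ioc a b))
    (hLp : IntegrableOn (fun r => ‖deriv g r - ((m : ℂ) / (r : ℂ)) * g r‖ ^ p * r)
      (Set.Ioi 0)) :
    IntegrableOn (fun r => ‖g r / (r : ℂ)‖ ^ p * r) (Set.Ioi 0) ∧
    (2 * π * ∫ r in Set.Ioi (0:ℝ), ‖g r / (r : ℂ)‖ ^ p * r) ^ (1 / p) ≤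
      ((m : ℝ) - 1 + 2 / p)⁻¹ *
        (2 * π * ∫ r in Set.Ioi (0:ℝ),
          ‖deriv g r - ((m : ℂ) / (r : ℂ)) * g r‖ ^ p * r) ^ (1 / p) := by
  obtain ⟨M₀, hM₀⟩ := hbdd
  set M := max M₀ 0 with hMdef
  have hM0 : 0 ≤ M := le_max_right _ _
  have hbdd' : ∀ r ∈ Set.Ioi (0:ℝ), ‖g r‖ ≤ M := fun r hr => (hM₀ r hr).trans (le_max_left _ _)
  have hp0 : (0:ℝ) < p := by linarith
  have hp1 : (1:ℝ) < p := by linarith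
  have hm1 : (1:ℝ) ≤ (m:ℝ) := by exact_mod_cast hm
  have hc' : (0:ℝ) < p*m+2-p := by nlinarith
  set f₀ : ℝ → ℝ := fun r => ‖g r / (r:ℂ)‖^p * r with hf₀def
  set Bp := ∫ r in Set.Ioi (0:ℝ), ‖deriv g r - ((m:ℂ)/(r:ℂ)) * g r‖^p * r with hBpdef
  have hBpnn : 0 ≤ Bp := setIntegral_nonneg measurableSet_Ioi
    (fun r hr => mul_nonneg (Real.rpow_nonneg (norm_nonneg _) _) (le_of_lt hr))
  set B := Bp^(1/p) with hBdef
  have hBnn : 0 ≤ B := Real.rpow_nonneg hBpnn _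
  set a : ℕ → ℝ := fun n => 1/((n:ℝ)+1) with hadef
  set b : ℕ → ℝ := fun n => (n:ℝ)+1 with hbdef
  have han : ∀ n, 0 < a n := fun n => by positivity
  have hbn1 : ∀ n, (1:ℝ) ≤ b n := fun n => by
    simp only [hbdef]
    have : (0:ℝ) ≤ (n:ℝ) := Nat.cast_nonneg n
    linarith
  have habn : ∀ n, a n ≤ b n := fun n => by
    have h2 : a n ≤ 1 := by
      rw [hadef, div_le_one (by positivity)]
      have : (0:ℝ) ≤ (n:ℝ) := Nat.cast_nonneg n
      linarith
    exact h2.trans (hbn1 n)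
  set A : ℕ → ℝ := fun n => ∫ r in Set.Ioc (a n) (b n), f₀ r with hAdef
  have hsubn : ∀ n, Set.Ioc (a n) (b n) ⊆ Set.Ioi (0:ℝ) :=
    fun n x hx => (han n).trans hx.1
  have hint : ∀ n, IntegrableOn f₀ (Set.Ioc (a n) (b n)) :=
    fun n => hardy_f0_int hp hM0 hdiff hbdd' (han n)
  have hAnn : ∀ n, 0 ≤ A n := fun n => setIntegral_nonneg measurableSet_Ioc
    (fun r hr => mul_nonneg (Real.rpow_nonneg (norm_nonneg _) _) (((han n).trans hr.1).le))
  have hkey : ∀ n, (p*m+2-p) * A n ≤ M^p * (b n)^(2-p) + p * (A n)^(1-1/p) * B :=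
    fun n => hardy_key hp m hM0 hdiff hbdd' hloc hLp (han n) (habn n)
  -- uniform bound
  have hAK : ∀ n, A n ≤ max (2*(M^p/(p*m+2-p))) ((2*(p*B/(p*m+2-p)))^p) := by
    intro n
    apply hardy_selfbound hp1 (hAnn n)
      (div_nonneg (Real.rpow_nonneg hM0 _) hc'.le)
      (div_nonneg (mul_nonneg hp0.le hBnn) hc'.le)
    have h1 := hkey n
    have h2 : (b n)^(2-p) ≤ 1 :=
      Real.rpow_le_one_of_one_le_of_nonpos (hbn1 n) (by linarith)
    have h3 : M^p * (b n)^(2-p) ≤ M^p := by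
      calc M^p * (b n)^(2-p) ≤ M^p * 1 :=
            mul_le_mul_of_nonneg_left h2 (Real.rpow_nonneg hM0 _)
        _ = M^p := mul_one _
    have h4 : A n ≤ (M^p + p * (A n)^(1-1/p) * B)/(p*m+2-p) := by
      rw [le_div_iff₀ hc']
      nlinarith [h1, h3]
    calc A n ≤ (M^p + p * (A n)^(1-1/p) * B)/(p*m+2-p) := h4
      _ = M^p/(p*m+2-p) + (p*B/(p*m+2-p)) * (A n)^(1-1/p) := by ring
  -- AECover
  have hcov : AECover (volume.restrict (Set.Ioi (0:ℝ))) Filter.atTop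
      (fun n => Set.Ioc (a n) (b n)) := by
    refine ⟨?_, fun n => measurableSet_Ioc⟩
    filter_upwards [ae_restrict_mem measurableSet_Ioi] with x hx
    have hx0 : (0:ℝ) < x := hx
    have h1 : ∀ᶠ n : ℕ in Filter.atTop, a n < x := by
      have ht : Filter.Tendsto a Filter.atTop (nhds 0) := by
        rw [hadef]
        exact tendsto_one_div_add_atTop_nhds_zero_nat
      exact ht.eventually_lt_const hx0
    have h2 : ∀ᶠ n : ℕ in Filter.atTop, x ≤ b n := by
      rw [Filter.eventually_atTop]
      refine ⟨⌈x⌉₊, fun n hn => ?_⟩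
      have : ((⌈x⌉₊:ℕ):ℝ) ≤ (n:ℝ) := Nat.cast_le.2 hn
      have h5 := Nat.le_ceil x
      simp only [hbdef]
      linarith
    filter_upwards [h1, h2] with n hn1 hn2
    exact ⟨hn1, hn2⟩
  have hint' : ∀ n, IntegrableOn f₀ (Set.Ioc (a n) (b n)) (volume.restrict (Set.Ioi 0)) := by
    intro n
    rw [IntegrableOn, Measure.restrict_restrict measurableSet_Ioc,
      inter_eq_self_of_subset_left (hsubn n)]
    exact hint n
  have hIf₀' : Integrable f₀ (volume.restrict (Set.Ioi 0)) := by
    apply hcov.integrable_of_integral_norm_bounded _ hint'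
    filter_upwards with n
    rw [Measure.restrict_restrict measurableSet_Ioc,
      inter_eq_self_of_subset_left (hsubn n)]
    have he : ∫ r in Set.Ioc (a n) (b n), ‖f₀ r‖ = A n := by
      rw [hAdef]
      apply setIntegral_congr_fun measurableSet_Ioc
      intro r hr
      exact Real.norm_of_nonneg (mul_nonneg (Real.rpow_nonneg (norm_nonneg _) _)
        (((han n).trans hr.1).le))
    rw [he]
    exact hAK n
  refine ⟨hIf₀', ?_⟩
  -- tendsto
  have hAtend : Filter.Tendsto A Filter.atTop (nhds (∫ r in Set.Ioi (0:ℝ), f₀ r)) := by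
    have ht := hcov.integral_tendsto_of_countably_generated hIf₀'
    refine ht.congr fun n => ?_
    rw [Measure.restrict_restrict measurableSet_Ioc,
      inter_eq_self_of_subset_left (hsubn n)]
  set Ainf := ∫ r in Set.Ioi (0:ℝ), f₀ r with hAinfdef
  have hAinfnn : 0 ≤ Ainf := setIntegral_nonneg measurableSet_Ioi
    (fun r hr => mul_nonneg (Real.rpow_nonneg (norm_nonneg _) _) (le_of_lt hr))
  -- limit inequality
  have hlim : (p*m+2-p) * Ainf ≤ p * Ainf^(1-1/p) * B := by
    have hL : Filter.Tendsto (fun n => (p*(m:ℝ)+2-p) * A n) Filter.atTop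
        (nhds ((p*m+2-p) * Ainf)) := tendsto_const_nhds.mul hAtend
    have ht1 : Filter.Tendsto (fun n => (b n)^(2-p)) Filter.atTop (nhds 0) := by
      have hb : Filter.Tendsto b Filter.atTop Filter.atTop := by
        rw [hbdef]
        exact Filter.tendsto_atTop_add_const_right _ 1 tendsto_natCast_atTop_atTop
      have := (tendsto_rpow_neg_atTop (by linarith : (0:ℝ) < p-2)).comp hb
      simpa [Function.comp_def, show -(p-2) = 2-p from by ring] using this
    have ht2 : Filter.Tendsto (fun n => (A n)^(1-1/p)) Filter.atTop
        (nhds (Ainf^(1-1/p))) := by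
      have hcont : ContinuousAt (fun x : ℝ => x^(1-1/p)) Ainf := by
        apply Real.continuousAt_rpow_const
        right
        have : 1/p < 1 := by rw [div_lt_one hp0]; linarith
        linarith
      exact hcont.tendsto.comp hAtend
    have hR : Filter.Tendsto (fun n => M^p * (b n)^(2-p) + p * (A n)^(1-1/p) * B)
        Filter.atTop (nhds (M^p * 0 + p * Ainf^(1-1/p) * B)) :=
      (tendsto_const_nhds.mul ht1).add ((tendsto_const_nhds.mul ht2).mul tendsto_const_nhds)
    rw [mul_zero, zero_add] at hR
    exact le_of_tendsto_of_tendsto' hL hR hkey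
  -- conclude
  have hfinal : Ainf^(1/p) ≤ p/(p*m+2-p) * B := by
    rcases eq_or_lt_of_le hAinfnn with h0 | h0
    · rw [← h0, Real.zero_rpow (one_div_ne_zero (ne_of_gt hp0))]
      exact mul_nonneg (div_nonneg hp0.le hc'.le) hBnn
    · have hxe : Ainf^(1/p) * Ainf^(1-1/p) = Ainf := by
        rw [← Real.rpow_add h0, show 1/p + (1-1/p) = 1 by ring, Real.rpow_one]
      have h2 : 0 < Ainf^(1-1/p) := Real.rpow_pos_of_pos h0 _
      have h3 : (p*(m:ℝ)+2-p) * Ainf^(1/p) ≤ p * B := by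
        apply le_of_mul_le_mul_right _ h2
        calc (p*(m:ℝ)+2-p) * Ainf^(1/p) * Ainf^(1-1/p)
            = (p*(m:ℝ)+2-p) * Ainf := by rw [mul_assoc, hxe]
          _ ≤ p * Ainf^(1-1/p) * B := hlim
          _ = p * B * Ainf^(1-1/p) := by ring
      rw [show p/(p*(m:ℝ)+2-p)*B = (p*B)/(p*(m:ℝ)+2-p) by ring, le_div_iff₀ hc']
      calc Ainf^(1/p) * (p*(m:ℝ)+2-p) = (p*(m:ℝ)+2-p) * Ainf^(1/p) := by ring
        _ ≤ p * B := h3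
  have h2π : (0:ℝ) ≤ 2*π := by positivity
  rw [Real.mul_rpow h2π hAinfnn, Real.mul_rpow h2π hBpnn]
  have hmp : (0:ℝ) < (m:ℝ)-1+2/p := by
    have : (0:ℝ) < 2/p := div_pos (by norm_num) hp0
    linarith
  have hconst : ((m:ℝ)-1+2/p)⁻¹ = p/(p*m+2-p) := by
    rw [eq_div_iff (ne_of_gt hc'), inv_mul_eq_div, div_eq_iff (ne_of_gt hmp)]
    field_simp
    ring
  calc (2*π)^(1/p) * Ainf^(1/p)
      ≤ (2*π)^(1/p) * (p/(p*(m:ℝ)+2-p) * B) :=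
        mul_le_mul_of_nonneg_left hfinal (Real.rpow_nonneg h2π _)
    _ = ((m:ℝ)-1+2/p)⁻¹ * ((2*π)^(1/p) * Bp^(1/p)) := by rw [hconst, hBdef]; ring
end

section
/- If g : (0,∞) → ℂ is radial with g(r) = o(1) as r → ∞ and (∂_r − m/r) g ∈ L²(r dr) for some m ≥ 1, then ‖g/r‖_{L²(ℝ²)} ≤ (1/m) ‖g' − (m/r) g‖_{L²(ℝ²)}. -/
open MeasureTheory Real Set Filter Topology

private lemma amgm_s5 (m r x y : ℝ) (hm : 0 < m) (hr : 0 < r) :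
    2*(x*y) ≤ m*(x^2/r) + (1/m)*(y^2*r) := by
  have key : m*(x^2/r) + (1/m)*(y^2*r) - 2*(x*y) = (m*x - y*r)^2 / (m*r) := by
    field_simp; ring
  have h2 : 0 ≤ (m*x - y*r)^2/(m*r) := by positivity
  linarith

private lemma le_one_add_sq (t : ℝ) : t ≤ 1 + t^2 := by nlinarith [sq_nonneg (t-1)]

set_option maxHeartbeats 2000000 in
/-- If g : (0,∞) → ℂ is radial with g(r) = o(1) as r → ∞ and (∂_r − m/r)g ∈ L²(r dr),
m ≥ 1, then ‖g/r‖_{L²(ℝ²)} ≤ (1/m) ‖g' − (m/r) g‖_{L²(ℝ²)}. -/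
theorem hardy_type_L2 (m : ℕ) (hm : 1 ≤ m) (g : ℝ → ℂ)
    (hdiff : ∀ r ∈ Set.Ioi (0:ℝ), DifferentiableAt ℝ g r)
    (hdecay : Tendsto g atTop (nhds 0))
    (hL2 : IntegrableOn (fun r => ‖deriv g r - ((m : ℂ) / (r : ℂ)) * g r‖ ^ 2 * r)
      (Set.Ioi 0)) :
    IntegrableOn (fun r => ‖g r / (r : ℂ)‖ ^ 2 * r) (Set.Ioi 0) ∧
    Real.sqrt (2 * π * ∫ r in Set.Ioi (0:ℝ), ‖g r / (r : ℂ)‖ ^ 2 * r) ≤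
      (1 / (m : ℝ)) * Real.sqrt (2 * π * ∫ r in Set.Ioi (0:ℝ),
        ‖deriv g r - ((m : ℂ) / (r : ℂ)) * g r‖ ^ 2 * r) := by
  have hm1 : (1:ℝ) ≤ (m:ℝ) := by exact_mod_cast hm
  have hm0 : (0:ℝ) < (m:ℝ) := by linarith
  set F : ℝ → ℂ := fun r => deriv g r - ((m : ℂ) / (r : ℂ)) * g r with hFdef
  set q : ℝ → ℝ := fun r => ‖g r / (r : ℂ)‖ ^ 2 * r with hqdef
  set B : ℝ := ∫ r in Set.Ioi (0:ℝ),
    ‖deriv g r - ((m : ℂ) / (r : ℂ)) * g r‖ ^ 2 * r with hBdef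
  have hBF : B = ∫ r in Set.Ioi (0:ℝ), ‖F r‖ ^ 2 * r := by
    rw [hBdef]
  have hL2' : IntegrableOn (fun r => ‖F r‖ ^ 2 * r) (Set.Ioi 0) := by
    simp only [hFdef]; exact hL2
  have hBnn : 0 ≤ B := by
    rw [hBF]
    exact setIntegral_nonneg measurableSet_Ioi
      (fun r hr => mul_nonneg (sq_nonneg _) (le_of_lt hr))
  -- continuity of g on Ioi 0
  have hgc : ContinuousOn g (Set.Ioi 0) :=
    fun r hr => (hdiff r hr).continuousAt.continuousWithinAt
  -- q equals ‖g r‖²/r on Ioi 0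
  have hqval : ∀ r ∈ Set.Ioi (0:ℝ), q r = ‖g r‖^2 / r := by
    intro r hr
    have hr0 : (0:ℝ) < r := hr
    simp only [hqdef, norm_div, Complex.norm_real, Real.norm_eq_abs, abs_of_pos hr0]
    field_simp
  have hqnn : ∀ r ∈ Set.Ioi (0:ℝ), 0 ≤ q r := by
    intro r hr
    have hr0 : (0:ℝ) < r := hr
    rw [hqval r hr]
    exact div_nonneg (sq_nonneg _) hr0.le
  have hqcont : ContinuousOn q (Set.Ioi 0) := by
    apply ContinuousOn.mul _ continuousOn_id
    apply ContinuousOn.pow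
    apply ContinuousOn.norm
    apply hgc.div (Complex.continuous_ofReal.continuousOn)
    intro x hx
    exact_mod_cast (ne_of_gt (show (0:ℝ) < x from hx))
  -- derivative of ‖g‖²
  set D : ℝ → ℝ := fun r => 2*((g r).re*(deriv g r).re + (g r).im*(deriv g r).im)
    with hDdef
  have hD : ∀ r ∈ Set.Ioi (0:ℝ), HasDerivAt (fun s => ‖g s‖^2) (D r) r := by
    intro r hr
    have h1 : HasDerivAt g (deriv g r) r := (hdiff r hr).hasDerivAt
    have hre : HasDerivAt (fun s => (g s).re) ((deriv g r).re) r :=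
      (Complex.reCLM.hasFDerivAt.comp_hasDerivAt r h1)
    have him : HasDerivAt (fun s => (g s).im) ((deriv g r).im) r :=
      (Complex.imCLM.hasFDerivAt.comp_hasDerivAt r h1)
    have h2 := (hre.mul hre).add (him.mul him)
    have h3 : (fun s => ‖g s‖^2) = ((fun s => (g s).re) * fun s => (g s).re)
        + (fun s => (g s).im) * fun s => (g s).im := by
      funext s
      simp only [Pi.add_apply, Pi.mul_apply]
      rw [Complex.sq_norm, Complex.normSq_apply]
    rw [h3]
    refine h2.congr_deriv ?_
    show _ = 2*((g r).re*(deriv g r).re + (g r).im*(deriv g r).im)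
    ring
  set P : ℝ → ℝ := fun r => (g r).re*(F r).re + (g r).im*(F r).im with hPdef
  have hPabs : ∀ r, |P r| ≤ ‖g r‖ * ‖F r‖ := by
    intro r
    have h1 : P r = ((starRingEnd ℂ) (g r) * F r).re := by
      simp only [hPdef, Complex.mul_re, Complex.conj_re, Complex.conj_im]; ring
    rw [h1]
    calc |((starRingEnd ℂ) (g r) * F r).re| ≤ ‖(starRingEnd ℂ) (g r) * F r‖ :=
          Complex.abs_re_le_norm _
      _ = ‖g r‖ * ‖F r‖ := by rw [norm_mul, RCLike.norm_conj]
  have hnormsq : ∀ z : ℂ, ‖z‖^2 = z.re*z.re + z.im*z.im := by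
    intro z; rw [Complex.sq_norm, Complex.normSq_apply]
  have hDval : ∀ r ∈ Set.Ioi (0:ℝ), D r = 2*P r + 2*((m:ℝ)*(‖g r‖^2/r)) := by
    intro r hr
    have hr0 : (0:ℝ) < r := hr
    have hd : deriv g r = F r + (((m:ℝ)/r : ℝ) : ℂ) * g r := by
      simp only [hFdef]; push_cast; ring
    simp only [hDdef, hPdef, hd, Complex.add_re, Complex.add_im, Complex.mul_re,
      Complex.mul_im, Complex.ofReal_re, Complex.ofReal_im, hnormsq (g r)]
    field_simp
    ring
  -- measurability on Ioi 0
  have hgm0 : AEStronglyMeasurable g (volume.restrict (Set.Ioi 0)) :=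
    hgc.aestronglyMeasurable measurableSet_Ioi
  have hFm0 : AEStronglyMeasurable F (volume.restrict (Set.Ioi 0)) := by
    apply AEStronglyMeasurable.sub
    · exact (measurable_deriv g).aestronglyMeasurable
    · exact ((Complex.measurable_ofReal.comp measurable_const).div
        Complex.measurable_ofReal).aestronglyMeasurable.mul hgm0
  have hPm0 : AEStronglyMeasurable (fun r => 2 * P r)
      (volume.restrict (Set.Ioi 0)) := by
    apply AEStronglyMeasurable.const_mul
    simp only [hPdef]
    exact ((Complex.continuous_re.comp_aestronglyMeasurable hgm0).mul
        (Complex.continuous_re.comp_aestronglyMeasurable hFm0)).add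
      ((Complex.continuous_im.comp_aestronglyMeasurable hgm0).mul
        (Complex.continuous_im.comp_aestronglyMeasurable hFm0))
  clear_value F q B D P
  clear hqdef hFdef hBdef hDdef hPdef hL2
  -- pointwise lower bound for D
  have hDlow : ∀ r ∈ Set.Ioi (0:ℝ),
      (m:ℝ)*(‖g r‖^2/r) - (1/(m:ℝ))*(‖F r‖^2*r) ≤ D r := by
    intro r hr
    have h1 := amgm_s5 (m:ℝ) r ‖g r‖ ‖F r‖ hm0 hr
    have h2 := hPabs r
    have h3 := neg_abs_le (P r)
    rw [hDval r hr]
    linarith [h1, h2, h3]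
  -- integrability of q on compact subintervals
  have hIntq : ∀ a b : ℝ, 0 < a → IntegrableOn q (Set.Ioc a b) := by
    intro a b ha
    rcases le_or_gt b a with hba | hba
    · rw [Set.Ioc_eq_empty (not_lt.mpr hba)]; exact integrableOn_empty
    · have hIcc : Set.Icc a b ⊆ Set.Ioi 0 := fun x hx => lt_of_lt_of_le ha hx.1
      exact ((hqcont.mono hIcc).integrableOn_Icc).mono_set Set.Ioc_subset_Icc_self
  -- KEY interval inequality
  have key : ∀ a b : ℝ, 0 < a → a ≤ b →
      (m:ℝ) * ∫ r in Set.Ioc a b, q r ≤ ‖g b‖^2 + (1/(m:ℝ))*B := by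
    intro a b ha hab
    have hIoc : Set.Ioc a b ⊆ Set.Ioi 0 := fun x hx => lt_trans ha hx.1
    have hIcc : Set.Icc a b ⊆ Set.Ioi 0 := fun x hx => lt_of_lt_of_le ha hx.1
    have hgcont : ContinuousOn g (Set.Icc a b) := hgc.mono hIcc
    have hle : volume.restrict (Set.Ioc a b) ≤ volume.restrict (Set.Ioi 0) :=
      Measure.restrict_mono hIoc le_rfl
    have hIntF2 : IntegrableOn (fun r => ‖F r‖^2*r) (Set.Ioc a b) := hL2'.mono_set hIoc
    obtain ⟨M, hM⟩ := isCompact_Icc.exists_bound_of_continuousOn hgcont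
    have hMnn : 0 ≤ M := le_trans (norm_nonneg (g a)) (hM a ⟨le_refl a, hab⟩)
    have hPm : AEStronglyMeasurable (fun r => 2 * P r)
        (volume.restrict (Set.Ioc a b)) := hPm0.mono_measure hle
    have hIntP : IntegrableOn (fun r => 2 * P r) (Set.Ioc a b) := by
      have hbound : IntegrableOn (fun r => 2*M*(1 + (1/a)*(‖F r‖^2*r)))
          (Set.Ioc a b) :=
        (((integrable_const 1).add (hIntF2.const_mul (1/a))).const_mul (2*M))
      apply Integrable.mono' hbound hPm
      rw [ae_restrict_iff' measurableSet_Ioc]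
      apply ae_of_all
      intro r hr
      have hra : a < r := hr.1
      have hr0 : 0 < r := lt_trans ha hra
      have h1 : |P r| ≤ M * ‖F r‖ :=
        le_trans (hPabs r) (mul_le_mul_of_nonneg_right
          (hM r (Set.Ioc_subset_Icc_self hr)) (norm_nonneg _))
      have h2 : ‖F r‖ ≤ 1 + ‖F r‖^2 := le_one_add_sq _
      have h3 : ‖F r‖^2 ≤ (1/a)*(‖F r‖^2*r) := by
        rw [one_div, inv_mul_eq_div, le_div_iff₀ ha]
        nlinarith [sq_nonneg ‖F r‖, hra.le]
      have h4 : ‖2 * P r‖ = 2 * |P r| := by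
        rw [Real.norm_eq_abs, abs_mul]; norm_num
      rw [h4]
      nlinarith [norm_nonneg (F r), h1, h2, h3, hMnn]
    have hq2cont : ContinuousOn (fun r => ‖g r‖^2/r) (Set.Icc a b) :=
      (hgcont.norm.pow 2).div continuousOn_id (fun x hx => ne_of_gt (hIcc hx))
    have hIntq2 : IntegrableOn (fun r => ‖g r‖^2/r) (Set.Ioc a b) :=
      hq2cont.integrableOn_Icc.mono_set Set.Ioc_subset_Icc_self
    have hIntcont : IntegrableOn (fun r => 2*((m:ℝ)*(‖g r‖^2/r))) (Set.Ioc a b) :=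
      (hIntq2.const_mul (m:ℝ)).const_mul 2
    have hIntD : IntegrableOn D (Set.Ioc a b) := by
      have hsum : IntegrableOn (fun r => 2*P r + 2*((m:ℝ)*(‖g r‖^2/r)))
          (Set.Ioc a b) := hIntP.add hIntcont
      exact hsum.congr_fun (fun r hr => (hDval r (hIoc hr)).symm) measurableSet_Ioc
    -- FTC
    have hftc : ∫ r in a..b, D r = ‖g b‖^2 - ‖g a‖^2 := by
      apply intervalIntegral.integral_eq_sub_of_hasDerivAt
      · intro r hr
        rw [Set.uIcc_of_le hab] at hr
        exact hD r (hIcc hr)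
      · rw [intervalIntegrable_iff_integrableOn_Ioc_of_le hab]
        exact hIntD
    have hint_eq : ∫ r in a..b, D r = ∫ r in Set.Ioc a b, D r :=
      intervalIntegral.integral_of_le hab
    have hIntlhs : IntegrableOn
        (fun r => (m:ℝ)*(‖g r‖^2/r) - (1/(m:ℝ))*(‖F r‖^2*r)) (Set.Ioc a b) :=
      (hIntq2.const_mul (m:ℝ)).sub (hIntF2.const_mul _)
    have hmono : ∫ r in Set.Ioc a b,
          ((m:ℝ)*(‖g r‖^2/r) - (1/(m:ℝ))*(‖F r‖^2*r)) ≤ ∫ r in Set.Ioc a b, D r :=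
      setIntegral_mono_on hIntlhs hIntD measurableSet_Ioc
        (fun r hr => hDlow r (hIoc hr))
    have hsplit : ∫ r in Set.Ioc a b,
          ((m:ℝ)*(‖g r‖^2/r) - (1/(m:ℝ))*(‖F r‖^2*r))
        = (m:ℝ) * (∫ r in Set.Ioc a b, ‖g r‖^2/r)
          - (1/(m:ℝ)) * ∫ r in Set.Ioc a b, ‖F r‖^2*r := by
      rw [integral_sub (hIntq2.const_mul (m:ℝ)) (hIntF2.const_mul _),
        integral_const_mul, integral_const_mul]
    have hqeq : ∫ r in Set.Ioc a b, ‖g r‖^2/r = ∫ r in Set.Ioc a b, q r :=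
      setIntegral_congr_fun measurableSet_Ioc (fun r hr => (hqval r (hIoc hr)).symm)
    have hF2B : ∫ r in Set.Ioc a b, ‖F r‖^2*r ≤ B := by
      rw [hBF]
      apply setIntegral_mono_set hL2'
      · filter_upwards [ae_restrict_mem measurableSet_Ioi] with r hr
        simpa using mul_nonneg (sq_nonneg ‖F r‖) (le_of_lt hr)
      · exact HasSubset.Subset.eventuallyLE hIoc
    have hga : (0:ℝ) ≤ ‖g a‖^2 := sq_nonneg _
    calc (m:ℝ) * ∫ r in Set.Ioc a b, q r
        = (m:ℝ) * (∫ r in Set.Ioc a b, ‖g r‖^2/r) := by rw [hqeq]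
      _ = ((m:ℝ) * (∫ r in Set.Ioc a b, ‖g r‖^2/r)
            - (1/(m:ℝ)) * ∫ r in Set.Ioc a b, ‖F r‖^2*r)
            + (1/(m:ℝ)) * ∫ r in Set.Ioc a b, ‖F r‖^2*r := by ring
      _ ≤ (∫ r in Set.Ioc a b, D r) + (1/(m:ℝ))*B := by
          have h5 : (1/(m:ℝ)) * ∫ r in Set.Ioc a b, ‖F r‖^2*r ≤ (1/(m:ℝ))*B :=
            mul_le_mul_of_nonneg_left hF2B (by positivity)
          rw [← hsplit]
          linarith [hmono]
      _ = ‖g b‖^2 - ‖g a‖^2 + (1/(m:ℝ))*B := by rw [← hint_eq, hftc]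
      _ ≤ ‖g b‖^2 + (1/(m:ℝ))*B := by linarith
  -- decay of ‖g‖²
  have hg2 : Tendsto (fun x : ℝ => ‖g x‖^2) atTop (𝓝 0) := by
    have h1 : Tendsto (fun x : ℝ => ‖g x‖) atTop (𝓝 0) := by
      simpa using hdecay.norm
    simpa using h1.pow 2
  have hg2ev : ∀ᶠ x : ℝ in atTop, ‖g x‖^2 ≤ 1 :=
    (hg2.eventually (gt_mem_nhds one_pos)).mono (fun x hx => le_of_lt hx)
  -- bounded integrals ⇒ integrability on (1, ∞)
  have hqnorm : ∀ a b : ℝ, 0 < a → (∫ r in Set.Ioc a b, ‖q r‖) = ∫ r in Set.Ioc a b, q r := by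
    intro a b ha
    apply setIntegral_congr_fun measurableSet_Ioc
    intro r hr
    exact Real.norm_of_nonneg (hqnn r (lt_trans ha hr.1))
  have hint1 : IntegrableOn q (Set.Ioi 1) := by
    apply integrableOn_Ioi_of_intervalIntegral_norm_bounded
      ((1 + (1/(m:ℝ))*B)/(m:ℝ)) 1 (fun i => hIntq 1 i one_pos)
      (tendsto_id (α := ℝ) (x := atTop))
    filter_upwards [hg2ev, eventually_ge_atTop (1:ℝ)] with i h1 h2
    rw [intervalIntegral.integral_of_le h2, hqnorm 1 i one_pos]
    have h3 := key 1 i one_pos h2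
    rw [div_eq_inv_mul, ← one_div]
    have h4 : (1/(m:ℝ)) * ((m:ℝ) * ∫ r in Set.Ioc 1 i, q r)
        = ∫ r in Set.Ioc 1 i, q r := by field_simp
    calc (∫ r in Set.Ioc 1 i, q r)
        = (1/(m:ℝ)) * ((m:ℝ) * ∫ r in Set.Ioc 1 i, q r) := h4.symm
      _ ≤ (1/(m:ℝ)) * (‖g i‖^2 + (1/(m:ℝ))*B) :=
          mul_le_mul_of_nonneg_left h3 (by positivity)
      _ ≤ (1/(m:ℝ)) * (1 + (1/(m:ℝ))*B) := by
          apply mul_le_mul_of_nonneg_left _ (by positivity)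
          linarith
  -- integrability on (0, 1]
  have hint0 : IntegrableOn q (Set.Ioc 0 1) := by
    have hpos : ∀ n : ℕ, (0:ℝ) < 1/((n:ℝ)+1) := fun n => by positivity
    apply integrableOn_Ioc_of_intervalIntegral_norm_bounded
      (a := fun n : ℕ => 1/((n:ℝ)+1)) (b := fun _ : ℕ => (1:ℝ)) (l := atTop)
      (I := (‖g 1‖^2 + (1/(m:ℝ))*B)/(m:ℝ))
      (fun n => hIntq _ 1 (hpos n)) tendsto_one_div_add_atTop_nhds_zero_nat
      tendsto_const_nhds
    apply Filter.Eventually.of_forall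
    intro n
    have hle1 : 1/((n:ℝ)+1) ≤ 1 := by
      rw [div_le_one (by positivity)]; linarith [Nat.cast_nonneg (α := ℝ) n]
    have h3 := key _ 1 (hpos n) hle1
    have heq : (∫ r in Set.Ioc (1/((n:ℝ)+1)) 1, ‖q r‖)
        = ∫ r in Set.Ioc (1/((n:ℝ)+1)) 1, q r := hqnorm _ 1 (hpos n)
    rw [heq, le_div_iff₀ hm0]
    linarith [h3]
  have hIoiInt : IntegrableOn q (Set.Ioi 0) := by
    have hun : Set.Ioc (0:ℝ) 1 ∪ Set.Ioi 1 = Set.Ioi 0 :=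
      Set.Ioc_union_Ioi_eq_Ioi zero_le_one
    rw [← hun]
    exact hint0.union hint1
  refine ⟨hIoiInt, ?_⟩
  -- limit along the exhaustion Ioc (1/(n+1)) (n+1)
  set s : ℕ → Set ℝ := fun n => Set.Ioc (1/((n:ℝ)+1)) ((n:ℝ)+1) with hsdef
  have hsm : ∀ n, MeasurableSet (s n) := fun n => measurableSet_Ioc
  have hsmono : Monotone s := by
    intro i j hij
    apply Set.Ioc_subset_Ioc
    · apply one_div_le_one_div_of_le (by positivity)
      have : (i:ℝ) ≤ (j:ℝ) := Nat.cast_le.mpr hij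
      linarith
    · have : (i:ℝ) ≤ (j:ℝ) := Nat.cast_le.mpr hij
      linarith
  have hsunion : (⋃ n, s n) = Set.Ioi 0 := by
    ext x
    simp only [hsdef, Set.mem_iUnion, Set.mem_Ioc, Set.mem_Ioi]
    constructor
    · rintro ⟨n, h1, h2⟩
      exact lt_trans (by positivity) h1
    · intro hx
      obtain ⟨n, hn⟩ := exists_nat_gt (max (1/x) x)
      refine ⟨n, ?_, ?_⟩
      · have h1 : 1/x < (n:ℝ)+1 := by
          have := le_max_left (1/x) x
          linarith
        rw [div_lt_iff₀ (by positivity)]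
        have h2 := (div_lt_iff₀ hx).mp h1
        linarith
      · have := le_max_right (1/x) x
        linarith
  have htend : Tendsto (fun n => ∫ r in s n, q r) atTop (𝓝 (∫ r in Set.Ioi 0, q r)) := by
    have h1 := tendsto_setIntegral_of_monotone hsm hsmono (hsunion ▸ hIoiInt)
    rwa [hsunion] at h1
  have hseq : ∀ n : ℕ, (m:ℝ) * ∫ r in s n, q r ≤ ‖g ((n:ℝ)+1)‖^2 + (1/(m:ℝ))*B := by
    intro n
    apply key _ _ (by positivity)
    have h1 : 1/((n:ℝ)+1) ≤ 1 := by
      rw [div_le_one (by positivity)]; linarith [Nat.cast_nonneg (α := ℝ) n]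
    have h2 : (1:ℝ) ≤ (n:ℝ)+1 := by linarith [Nat.cast_nonneg (α := ℝ) n]
    linarith
  have hlim2 : Tendsto (fun n : ℕ => ‖g ((n:ℝ)+1)‖^2 + (1/(m:ℝ))*B) atTop
      (𝓝 (0 + (1/(m:ℝ))*B)) := by
    apply Tendsto.add _ tendsto_const_nhds
    apply hg2.comp
    exact tendsto_atTop_add_const_right atTop 1 tendsto_natCast_atTop_atTop
  have hfinal : (m:ℝ) * ∫ r in Set.Ioi (0:ℝ), q r ≤ 0 + (1/(m:ℝ))*B :=
    le_of_tendsto_of_tendsto' (htend.const_mul _) hlim2 hseq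
  -- conclusion
  set A : ℝ := ∫ r in Set.Ioi (0:ℝ), q r with hAdef
  have hAnn : 0 ≤ A :=
    setIntegral_nonneg measurableSet_Ioi (fun r hr => hqnn r hr)
  have hAB : A ≤ B * (1/(m:ℝ))^2 := by
    have h1 : (m:ℝ) * ((m:ℝ)*A) ≤ (m:ℝ)*((1/(m:ℝ))*B) :=
      mul_le_mul_of_nonneg_left (by linarith [hfinal]) hm0.le
    have h2 : (m:ℝ)*((1/(m:ℝ))*B) = B := by field_simp
    have h3 : (m:ℝ)^2 * A ≤ B := by nlinarith [h1, h2]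
    rw [← sub_nonneg]
    have h4 : B * (1/(m:ℝ))^2 - A = ((m:ℝ)^2)⁻¹ * (B - (m:ℝ)^2 * A) := by
      field_simp
    rw [h4]
    have h5 : (0:ℝ) ≤ ((m:ℝ)^2)⁻¹ := by positivity
    nlinarith [h3, h5]
  have hsq : Real.sqrt (2*π*A) ≤ Real.sqrt (2*π*B*(1/(m:ℝ))^2) := by
    apply Real.sqrt_le_sqrt
    have h2pi : (0:ℝ) ≤ 2*π := by positivity
    calc 2*π*A ≤ 2*π*(B*(1/(m:ℝ))^2) := mul_le_mul_of_nonneg_left hAB h2pi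
      _ = 2*π*B*(1/(m:ℝ))^2 := by ring
  calc Real.sqrt (2*π*A) ≤ Real.sqrt (2*π*B*(1/(m:ℝ))^2) := hsq
    _ = Real.sqrt (2*π*B) * Real.sqrt ((1/(m:ℝ))^2) := by
        rw [Real.sqrt_mul (by positivity)]
    _ = Real.sqrt (2*π*B) * (1/(m:ℝ)) := by
        rw [Real.sqrt_sq (by positivity)]
    _ = (1/(m:ℝ)) * Real.sqrt (2*π*B) := mul_comm _ _
end

section
/- For an m‑equivariant map u(r,θ) = e^{mθR} v(r) from ℝ² to the unit sphere S² ⊂ ℝ³ with finite energy E(u) = (1/2)∫_{ℝ²} |∇u|² dx, one has the identity E(u) = π ∫₀^∞ |v_r − (|m|/r) v × (Rv)|² r dr + 2π|m| (v₃(∞) − v₃(0)), where R is the generator of rotations about the third axis and v₃ denotes the third component of v. -/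
open MeasureTheory Real Set Filter

private lemma energy_alg (a r v0 v1 v2 p0 p1 p2 m : ℝ) (hr : r ≠ 0)
    (hS : v0^2 + v1^2 + v2^2 = 1) (hP : v0*p0 + v1*p1 + v2*p2 = 0)
    (ha2 : a^2 = m^2) :
    ((p0^2+p1^2+p2^2) + m^2 / r^2 * (v0^2+v1^2)) * r
      = ((p0 - (a/r)*(-(v0*v2)))^2 + (p1 - (a/r)*(-(v1*v2)))^2 + (p2 - (a/r)*(v0^2+v1^2))^2) * r
        + 2*a*p2 := by
  have key : (((p0^2+p1^2+p2^2) + m^2 / r^2 * (v0^2+v1^2)) * r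
      - (((p0 - (a/r)*(-(v0*v2)))^2 + (p1 - (a/r)*(-(v1*v2)))^2 + (p2 - (a/r)*(v0^2+v1^2))^2) * r
        + 2*a*p2)) * r
      = (2*a*p2*r - a^2*(v0^2+v1^2)) * (v0^2+v1^2+v2^2 - 1)
        - 2*a*v2*r * (v0*p0 + v1*p1 + v2*p2) - (v0^2+v1^2) * (a^2 - m^2) := by
    field_simp
    ring
  have h2 : (((p0^2+p1^2+p2^2) + m^2 / r^2 * (v0^2+v1^2)) * r
      - (((p0 - (a/r)*(-(v0*v2)))^2 + (p1 - (a/r)*(-(v1*v2)))^2 + (p2 - (a/r)*(v0^2+v1^2))^2) * r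
        + 2*a*p2)) * r = 0 := by rw [key, hS, hP, ha2]; ring
  rcases mul_eq_zero.mp h2 with h | h
  · linarith [sub_eq_zero.mp h]
  · exact absurd h hr

/-- Energy identity for m-equivariant maps: with E(u) = π∫₀^∞(|v_r|² + (m²/r²)(v₁²+v₂²)) r dr,
E(u) = π ∫₀^∞ |v_r − (|m|/r) v × (Rv)|² r dr + 2π|m|(v₃(∞) − v₃(0)). -/
theorem equivariant_energy_identity (m : ℤ) (hm : m ≠ 0) (v : ℝ → Fin 3 → ℝ)
    (hsphere : ∀ r ∈ Set.Ioi (0:ℝ), ∑ i, v r i ^ 2 = 1)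
    (hdiff : ∀ i, ∀ r ∈ Set.Ioi (0:ℝ), DifferentiableAt ℝ (fun t => v t i) r)
    (L0 Linf : ℝ)
    (hlim0 : Tendsto (fun r => v r 2) (nhdsWithin 0 (Set.Ioi 0)) (nhds L0))
    (hliminf : Tendsto (fun r => v r 2) atTop (nhds Linf))
    (hint : IntegrableOn (fun r =>
      ((∑ i, (deriv (fun t => v t i) r) ^ 2) +
        (m : ℝ) ^ 2 / r ^ 2 * ((v r 0) ^ 2 + (v r 1) ^ 2)) * r) (Set.Ioi 0)) :
    π * ∫ r in Set.Ioi (0:ℝ),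
        ((∑ i, (deriv (fun t => v t i) r) ^ 2) +
          (m : ℝ) ^ 2 / r ^ 2 * ((v r 0) ^ 2 + (v r 1) ^ 2)) * r
    = π * (∫ r in Set.Ioi (0:ℝ),
        (∑ i, (deriv (fun t => v t i) r -
          (|(m : ℝ)| / r) * crossProduct (v r) ![-(v r 1), v r 0, 0] i) ^ 2) * r)
      + 2 * π * |(m : ℝ)| * (Linf - L0) := by
  set a : ℝ := |(m : ℝ)| with ha_def
  have ha0 : 0 < a := abs_pos.mpr (by exact_mod_cast hm)
  have ha2 : a ^ 2 = (m : ℝ) ^ 2 := sq_abs _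
  set d : ℝ → ℝ := fun r => deriv (fun t => v t 2) r with hd_def
  set f : ℝ → ℝ := fun r =>
      ((∑ i, (deriv (fun t => v t i) r) ^ 2) +
        (m : ℝ) ^ 2 / r ^ 2 * ((v r 0) ^ 2 + (v r 1) ^ 2)) * r with hf_def
  set g : ℝ → ℝ := fun r =>
      (∑ i, (deriv (fun t => v t i) r -
        (|(m : ℝ)| / r) * crossProduct (v r) ![-(v r 1), v r 0, 0] i) ^ 2) * r with hg_def
  -- orthogonality v ⟂ v'
  have horth : ∀ r ∈ Set.Ioi (0:ℝ),
      v r 0 * deriv (fun t => v t 0) r + v r 1 * deriv (fun t => v t 1) r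
        + v r 2 * deriv (fun t => v t 2) r = 0 := by
    intro r hr
    have hsum : HasDerivAt (fun t => ∑ i, v t i ^ 2)
        (∑ i : Fin 3, 2 * v r i * deriv (fun t => v t i) r) r := by
      apply HasDerivAt.fun_sum
      intro i _
      simpa [mul_comm, mul_assoc, mul_left_comm] using ((hdiff i r hr).hasDerivAt).fun_pow 2
    have hev : (fun t => ∑ i, v t i ^ 2) =ᶠ[nhds r] (fun _ => (1:ℝ)) := by
      filter_upwards [isOpen_Ioi.mem_nhds hr] with t ht using hsphere t ht
    have h0 : deriv (fun t => ∑ i, v t i ^ 2) r = 0 := by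
      rw [hev.deriv_eq]; simp
    have h1 := hsum.deriv
    rw [h0] at h1
    have h2 : ∑ i : Fin 3, 2 * v r i * deriv (fun t => v t i) r = 0 := h1.symm
    rw [Fin.sum_univ_three] at h2
    linarith
  -- pointwise identities
  have hkey : ∀ r ∈ Set.Ioi (0:ℝ), f r = g r + 2 * a * d r := by
    intro r hr
    have hr' : (r:ℝ) ≠ 0 := ne_of_gt hr
    have hS := hsphere r hr
    rw [Fin.sum_univ_three] at hS
    have hP := horth r hr
    simp only [hf_def, hg_def, hd_def, Fin.sum_univ_three, cross_apply]
    simp only [Matrix.cons_val_zero, Matrix.cons_val_one, Matrix.head_cons,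
      Matrix.cons_val_two, Matrix.tail_cons]
    have := energy_alg a r (v r 0) (v r 1) (v r 2)
      (deriv (fun t => v t 0) r) (deriv (fun t => v t 1) r) (deriv (fun t => v t 2) r)
      (m : ℝ) hr' hS hP ha2
    rw [ha_def]
    ring_nf
    ring_nf at this
    linarith
  have hkey' : ∀ r ∈ Set.Ioi (0:ℝ), f r + 2 * a * d r =
      (((deriv (fun t => v t 0) r) - (-a/r)*(-(v r 0 * v r 2)))^2
        + ((deriv (fun t => v t 1) r) - (-a/r)*(-(v r 1 * v r 2)))^2
        + ((deriv (fun t => v t 2) r) - (-a/r)*((v r 0)^2+(v r 1)^2))^2) * r := by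
    intro r hr
    have hr' : (r:ℝ) ≠ 0 := ne_of_gt hr
    have hS := hsphere r hr
    rw [Fin.sum_univ_three] at hS
    have hP := horth r hr
    have ha2' : (-a) ^ 2 = (m : ℝ) ^ 2 := by rw [neg_pow]; simpa using ha2
    have := energy_alg (-a) r (v r 0) (v r 1) (v r 2)
      (deriv (fun t => v t 0) r) (deriv (fun t => v t 1) r) (deriv (fun t => v t 2) r)
      (m : ℝ) hr' hS hP ha2'
    simp only [hf_def, hd_def, Fin.sum_univ_three]
    linarith
  -- nonnegativity of g
  have hgnn : ∀ r ∈ Set.Ioi (0:ℝ), 0 ≤ g r := by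
    intro r hr
    apply mul_nonneg _ (le_of_lt hr)
    exact Finset.sum_nonneg fun i _ => sq_nonneg _
  have hfplus : ∀ r ∈ Set.Ioi (0:ℝ), 0 ≤ f r + 2 * a * d r := by
    intro r hr
    rw [hkey' r hr]
    apply mul_nonneg _ (le_of_lt hr)
    positivity
  -- bound |2 a d| ≤ f on Ioi 0
  have hbound : ∀ r ∈ Set.Ioi (0:ℝ), |2 * a * d r| ≤ f r := by
    intro r hr
    have h1 := hkey r hr
    have h2 := hgnn r hr
    have h3 := hfplus r hr
    rw [abs_le]
    constructor <;> linarith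
  -- integrability of 2 a d
  have h2ad_int : IntegrableOn (fun r => 2 * a * d r) (Set.Ioi 0) := by
    apply Integrable.mono' hint
    · exact ((measurable_deriv _).const_mul (2 * a)).aestronglyMeasurable.restrict
    · filter_upwards [ae_restrict_mem measurableSet_Ioi] with r hr
      rw [Real.norm_eq_abs]
      exact hbound r hr
  have hd_int : IntegrableOn d (Set.Ioi 0) := by
    have := h2ad_int.const_mul (1 / (2 * a))
    apply this.congr
    filter_upwards with r
    field_simp
  -- g integrable
  have hg_int : IntegrableOn g (Set.Ioi 0) := by
    apply (hint.sub h2ad_int).congr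
    filter_upwards [ae_restrict_mem measurableSet_Ioi] with r hr
    have := hkey r hr
    simp only [Pi.sub_apply]
    linarith
  -- FTC via substitution r = exp t
  have hexp_deriv : ∀ t : ℝ, HasDerivAt (fun s => v (Real.exp s) 2)
      (d (Real.exp t) * Real.exp t) t := fun t =>
    ((hdiff 2 _ (Real.exp_pos t)).hasDerivAt).comp t (Real.hasDerivAt_exp t)
  have himg : Real.exp '' (Set.univ : Set ℝ) = Set.Ioi 0 := by
    rw [Set.image_univ, Real.range_exp]
  have hderivW : ∀ x ∈ (Set.univ : Set ℝ),
      HasDerivWithinAt Real.exp (Real.exp x) Set.univ x :=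
    fun x _ => (Real.hasDerivAt_exp x).hasDerivWithinAt
  have hinj : Set.InjOn Real.exp Set.univ := Real.exp_injective.injOn
  have hFint : Integrable (fun t => d (Real.exp t) * Real.exp t) := by
    have h := (integrableOn_image_iff_integrableOn_abs_deriv_smul
      MeasurableSet.univ hderivW hinj d)
    rw [himg] at h
    have h2 := h.mp hd_int
    rw [integrableOn_univ] at h2
    apply h2.congr
    filter_upwards with t
    rw [smul_eq_mul, abs_of_pos (Real.exp_pos t)]
    ring
  have hbot : Tendsto (fun t => v (Real.exp t) 2) atBot (nhds L0) := by
    apply hlim0.comp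
    exact tendsto_nhdsWithin_of_tendsto_nhds_of_eventually_within _
      Real.tendsto_exp_atBot (Eventually.of_forall fun t => Real.exp_pos t)
  have htop : Tendsto (fun t => v (Real.exp t) 2) atTop (nhds Linf) :=
    hliminf.comp Real.tendsto_exp_atTop
  have hFTC : ∫ t : ℝ, d (Real.exp t) * Real.exp t = Linf - L0 :=
    integral_of_hasDerivAt_of_tendsto hexp_deriv hFint hbot htop
  have hd_val : ∫ r in Set.Ioi (0:ℝ), d r = Linf - L0 := by
    have h := integral_image_eq_integral_abs_deriv_smul
      MeasurableSet.univ hderivW hinj d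
    rw [himg] at h
    rw [h, Measure.restrict_univ]
    rw [← hFTC]
    congr 1
    funext t
    rw [smul_eq_mul, abs_of_pos (Real.exp_pos t)]
    ring
  -- assemble
  have hsplit : ∫ r in Set.Ioi (0:ℝ), f r
      = (∫ r in Set.Ioi (0:ℝ), g r) + 2 * a * (Linf - L0) := by
    have h1 : ∫ r in Set.Ioi (0:ℝ), f r
        = ∫ r in Set.Ioi (0:ℝ), (g r + 2 * a * d r) := by
      apply setIntegral_congr_fun measurableSet_Ioi
      intro r hr
      exact hkey r hr
    rw [h1, integral_add hg_int (hd_int.const_mul (2 * a)),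
      MeasureTheory.integral_const_mul, hd_val]
  calc π * ∫ r in Set.Ioi (0:ℝ), f r
      = π * ((∫ r in Set.Ioi (0:ℝ), g r) + 2 * a * (Linf - L0)) := by rw [hsplit]
    _ = π * (∫ r in Set.Ioi (0:ℝ), g r) + 2 * π * a * (Linf - L0) := by ring
end

section
/- Every m‑equivariant finite‑energy map u = e^{mθR} v(r) with v(0) = −k̂ and v(∞) = k̂ satisfies E(u) ≥ 4π|m|, with equality if and only if v_r = (|m|/r) v × (Rv) for a.e. r; in particular equality holds for the harmonic map profile h(r) = (h₁(r), 0, h₃(r)) with h₁(r) = 2/(r^{|m|} + r^{-|m|}) and h₃(r) = (r^{|m|} − r^{-|m|})/(r^{|m|} + r^{-|m|}). -/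
open MeasureTheory Real Set Filter

lemma harmonic_profile_eq (a : ℝ) (r : ℝ) (hr : 0 < r) (i : Fin 3) :
    deriv (fun t =>
      (![2 / (t ^ a + t ^ (-a)), 0,
         (t ^ a - t ^ (-a)) / (t ^ a + t ^ (-a))] : Fin 3 → ℝ) i) r =
    (a / r) * crossProduct
      (![2 / (r ^ a + r ^ (-a)), 0, (r ^ a - r ^ (-a)) / (r ^ a + r ^ (-a))])
      ![-(0 : ℝ), 2 / (r ^ a + r ^ (-a)), 0] i := by
  have hrne : r ≠ 0 := hr.ne'
  have hpos : 0 < r ^ a + r ^ (-a) :=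
    add_pos (Real.rpow_pos_of_pos hr a) (Real.rpow_pos_of_pos hr (-a))
  have hne : r ^ a + r ^ (-a) ≠ 0 := hpos.ne'
  have hmul : r ^ a * r ^ (-a) = 1 := by
    rw [← Real.rpow_add hr]; simp
  have h1 : HasDerivAt (fun t : ℝ => t ^ a) (a * r ^ a / r) r := by
    have := Real.hasDerivAt_rpow_const (x := r) (p := a) (Or.inl hrne)
    convert this using 1
    rw [Real.rpow_sub hr, Real.rpow_one]; ring
  have h2 : HasDerivAt (fun t : ℝ => t ^ (-a)) (-(a * r ^ (-a)) / r) r := by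
    have := Real.hasDerivAt_rpow_const (x := r) (p := -a) (Or.inl hrne)
    convert this using 1
    rw [Real.rpow_sub hr, Real.rpow_one]; ring
  have hs : HasDerivAt (fun t : ℝ => t ^ a + t ^ (-a))
      ((a * r ^ a - a * r ^ (-a)) / r) r := by
    exact (h1.fun_add h2).congr_deriv (by ring)
  have hd : HasDerivAt (fun t : ℝ => t ^ a - t ^ (-a))
      ((a * r ^ a + a * r ^ (-a)) / r) r := by
    exact (h1.fun_sub h2).congr_deriv (by ring)
  fin_cases i <;> simp only [Fin.zero_eta, Fin.mk_one, Fin.reduceFinMk]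
  · simp only [Matrix.cons_val_zero, cross_apply, Matrix.cons_val_one, Matrix.head_cons,
      Matrix.cons_val_two, Matrix.tail_cons, Fin.isValue]
    have := ((hasDerivAt_const r (2:ℝ)).fun_div hs hne).deriv
    rw [this]
    field_simp
    ring_nf
  · simp only [Matrix.cons_val_one, Matrix.head_cons, cross_apply, Matrix.cons_val_zero,
      Matrix.cons_val_two, Matrix.tail_cons, Fin.isValue]
    simp [deriv_const]
  · simp only [Matrix.cons_val_two, Matrix.tail_cons, Matrix.head_cons, cross_apply,
      Matrix.cons_val_zero, Matrix.cons_val_one, Fin.isValue]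
    have := (hd.fun_div hs hne).deriv
    rw [this]
    field_simp
    ring_nf
    linear_combination (4*a) * hmul

/-- Bogomolny pointwise identity. -/
lemma bogo_id (a r p q s p' q' s' : ℝ) (hr : 0 < r)
    (h1 : p^2 + q^2 + s^2 = 1) (h2 : p*p' + q*q' + s*s' = 0) :
    ((p'^2 + q'^2 + s'^2) + a^2 / r^2 * (p^2 + q^2)) * r =
    ((p' - a/r * (q*0 - s*p))^2 + (q' - a/r * (s*(-q) - p*0))^2
      + (s' - a/r * (p*p - q*(-q)))^2) * r + 2*a*s' := by
  have hr0 : r ≠ 0 := hr.ne'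
  have hinv : r * r⁻¹ = 1 := mul_inv_cancel₀ hr0
  linear_combination (2*r*(a/r)*s' - r*(a/r)^2*(p^2+q^2)) * h1 - (2*r*(a/r)*s) * h2
    + (2*a*s') * hinv

/-- Sum of squares identity for the complementary Bogomolny term. -/
lemma bogo_sos (a r p q s p' q' s' : ℝ) (hr : 0 < r)
    (h1 : p^2 + q^2 + s^2 = 1) :
    2 * (((p'^2 + q'^2 + s'^2) + a^2 / r^2 * (p^2 + q^2)) * r)
      - ((p' - a/r * (q*0 - s*p))^2 + (q' - a/r * (s*(-q) - p*0))^2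
      + (s' - a/r * (p*p - q*(-q)))^2) * r
      = ((p' + a/r * (q*0 - s*p))^2 + (q' + a/r * (s*(-q) - p*0))^2
      + (s' + a/r * (p*p - q*(-q)))^2) * r := by
  have hr0 : r ≠ 0 := hr.ne'
  linear_combination (-(2*r*(a/r)^2*(p^2+q^2))) * h1

/-- Energy lower bound E(u) ≥ 4π|m| for m-equivariant finite-energy maps with
v(0) = −k̂, v(∞) = k̂, with equality iff v_r = (|m|/r) v × Rv a.e.; in particular
the harmonic map profile h = (h₁,0,h₃) satisfies this first-order equation. -/
theorem equivariant_energy_lower_bound (m : ℤ) (hm : m ≠ 0) (v : ℝ → Fin 3 → ℝ)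
    (hsphere : ∀ r ∈ Set.Ioi (0:ℝ), ∑ i, v r i ^ 2 = 1)
    (hdiff : ∀ i, ∀ r ∈ Set.Ioi (0:ℝ), DifferentiableAt ℝ (fun t => v t i) r)
    (hlim0 : Tendsto v (nhdsWithin 0 (Set.Ioi 0)) (nhds ![0, 0, -1]))
    (hliminf : Tendsto v atTop (nhds ![0, 0, 1]))
    (hint : IntegrableOn (fun r =>
      ((∑ i, (deriv (fun t => v t i) r) ^ 2) +
        (m : ℝ) ^ 2 / r ^ 2 * ((v r 0) ^ 2 + (v r 1) ^ 2)) * r) (Set.Ioi 0)) :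
    (4 * π * |(m : ℝ)| ≤ π * ∫ r in Set.Ioi (0:ℝ),
        ((∑ i, (deriv (fun t => v t i) r) ^ 2) +
          (m : ℝ) ^ 2 / r ^ 2 * ((v r 0) ^ 2 + (v r 1) ^ 2)) * r) ∧
    ((π * ∫ r in Set.Ioi (0:ℝ),
        ((∑ i, (deriv (fun t => v t i) r) ^ 2) +
          (m : ℝ) ^ 2 / r ^ 2 * ((v r 0) ^ 2 + (v r 1) ^ 2)) * r) = 4 * π * |(m : ℝ)| ↔
      (∀ᵐ r ∂(volume.restrict (Set.Ioi (0:ℝ))), ∀ i,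
        deriv (fun t => v t i) r =
          (|(m : ℝ)| / r) * crossProduct (v r) ![-(v r 1), v r 0, 0] i)) ∧
    (∀ r ∈ Set.Ioi (0:ℝ), ∀ i,
      deriv (fun t =>
        (![2 / (t ^ |(m : ℝ)| + t ^ (-|(m : ℝ)|)), 0,
           (t ^ |(m : ℝ)| - t ^ (-|(m : ℝ)|)) / (t ^ |(m : ℝ)| + t ^ (-|(m : ℝ)|))] :
          Fin 3 → ℝ) i) r =
      (|(m : ℝ)| / r) * crossProduct
        (![2 / (r ^ |(m : ℝ)| + r ^ (-|(m : ℝ)|)), 0,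
           (r ^ |(m : ℝ)| - r ^ (-|(m : ℝ)|)) / (r ^ |(m : ℝ)| + r ^ (-|(m : ℝ)|))])
        ![-(0 : ℝ), 2 / (r ^ |(m : ℝ)| + r ^ (-|(m : ℝ)|)), 0] i) := by
  have hm' : (m:ℝ) ≠ 0 := Int.cast_ne_zero.mpr hm
  have ha : 0 < |(m:ℝ)| := abs_pos.mpr hm'
  set a : ℝ := |(m:ℝ)| with ha_def
  have ha2 : a ^ 2 = (m:ℝ) ^ 2 := sq_abs _
  set F : ℝ → ℝ := fun r => ((∑ i, (deriv (fun t => v t i) r) ^ 2) +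
      (m : ℝ) ^ 2 / r ^ 2 * ((v r 0) ^ 2 + (v r 1) ^ 2)) * r with hF
  set Q : ℝ → ℝ := fun r => (∑ i, (deriv (fun t => v t i) r -
      a / r * (crossProduct (v r)) ![-(v r 1), v r 0, 0] i) ^ 2) * r with hQdef
  -- orthogonality from the sphere constraint
  have hortho : ∀ r ∈ Ioi (0:ℝ),
      v r 0 * deriv (fun t => v t 0) r + v r 1 * deriv (fun t => v t 1) r
        + v r 2 * deriv (fun t => v t 2) r = 0 := by
    intro r hr
    have hsum : HasDerivAt (fun t => ∑ i, v t i ^ 2)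
        (∑ i, 2 * v r i * deriv (fun t => v t i) r) r := by
      apply HasDerivAt.fun_sum
      intro i _
      have h := (hdiff i r hr).hasDerivAt
      simpa [pow_one] using h.fun_pow 2
    have heq : (fun t => ∑ i, v t i ^ 2) =ᶠ[nhds r] fun _ => (1:ℝ) := by
      filter_upwards [Ioi_mem_nhds hr] with t ht using hsphere t ht
    have h0 : HasDerivAt (fun t => ∑ i, v t i ^ 2) 0 r :=
      (hasDerivAt_const r (1:ℝ)).congr_of_eventuallyEq heq
    have h := hsum.unique h0
    rw [Fin.sum_univ_three] at h
    linarith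
  -- pointwise Bogomolny decomposition
  have hpoint : ∀ r ∈ Ioi (0:ℝ),
      F r = Q r + 2 * a * deriv (fun t => v t 2) r := by
    intro r hr
    have h1 := hsphere r hr
    rw [Fin.sum_univ_three] at h1
    have h2 := hortho r hr
    simp only [hF, hQdef, Fin.sum_univ_three, cross_apply, Matrix.cons_val_zero,
      Matrix.cons_val_one, Matrix.head_cons, Matrix.cons_val_two, Matrix.tail_cons]
    rw [← ha2]
    linear_combination bogo_id a r (v r 0) (v r 1) (v r 2) (deriv (fun t => v t 0) r)
      (deriv (fun t => v t 1) r) (deriv (fun t => v t 2) r) hr h1 h2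
  -- nonnegativity and comparison
  have hQnonneg : ∀ r ∈ Ioi (0:ℝ), 0 ≤ Q r := by
    intro r hr
    exact mul_nonneg (Finset.sum_nonneg fun i _ => sq_nonneg _) (le_of_lt hr)
  have hQle : ∀ r ∈ Ioi (0:ℝ), Q r ≤ 2 * F r := by
    intro r hr
    have h1 := hsphere r hr
    rw [Fin.sum_univ_three] at h1
    have hsos := bogo_sos a r (v r 0) (v r 1) (v r 2) (deriv (fun t => v t 0) r)
      (deriv (fun t => v t 1) r) (deriv (fun t => v t 2) r) hr h1
    have h2F : 2 * F r - Q r = ((deriv (fun t => v t 0) r + a/r * (v r 1*0 - v r 2*(v r 0)))^2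
        + (deriv (fun t => v t 1) r + a/r * (v r 2*(-(v r 1)) - v r 0*0))^2
        + (deriv (fun t => v t 2) r + a/r * (v r 0*(v r 0) - v r 1*(-(v r 1))))^2) * r := by
      simp only [hF, hQdef, Fin.sum_univ_three, cross_apply, Matrix.cons_val_zero,
        Matrix.cons_val_one, Matrix.head_cons, Matrix.cons_val_two, Matrix.tail_cons]
      rw [← ha2]
      linear_combination hsos
    nlinarith [h2F, mul_nonneg (by positivity :
      (0:ℝ) ≤ (deriv (fun t => v t 0) r + a/r * (v r 1*0 - v r 2*(v r 0)))^2
        + (deriv (fun t => v t 1) r + a/r * (v r 2*(-(v r 1)) - v r 0*0))^2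
        + (deriv (fun t => v t 2) r + a/r * (v r 0*(v r 0) - v r 1*(-(v r 1))))^2) hr.le]
  -- measurability of Q
  have hvm : ∀ i : Fin 3, AEMeasurable (fun r => v r i) (volume.restrict (Ioi 0)) := fun i =>
    ContinuousOn.aemeasurable
      (fun r hr => ((hdiff i r hr).continuousAt).continuousWithinAt) measurableSet_Ioi
  have hdm : ∀ i : Fin 3, AEMeasurable (fun r => deriv (fun t => v t i) r)
      (volume.restrict (Ioi 0)) := fun i => (measurable_deriv _).aemeasurable
  have hQm : AEStronglyMeasurable Q (volume.restrict (Ioi 0)) := by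
    apply AEMeasurable.aestronglyMeasurable
    simp only [hQdef, Fin.sum_univ_three, cross_apply, Matrix.cons_val_zero,
      Matrix.cons_val_one, Matrix.head_cons, Matrix.cons_val_two, Matrix.tail_cons]
    have hid : AEMeasurable (fun r : ℝ => r) (volume.restrict (Ioi 0)) := aemeasurable_id
    have hdiv : AEMeasurable (fun r : ℝ => a / r) (volume.restrict (Ioi 0)) :=
      aemeasurable_const.div aemeasurable_id
    have m0 : AEMeasurable (fun r : ℝ => deriv (fun t => v t 0) r
        - a / r * (v r 1 * 0 - v r 2 * v r 0)) (volume.restrict (Ioi 0)) :=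
      (hdm 0).sub (hdiv.mul (((hvm 1).mul aemeasurable_const).sub ((hvm 2).mul (hvm 0))))
    have m1 : AEMeasurable (fun r : ℝ => deriv (fun t => v t 1) r
        - a / r * (v r 2 * -v r 1 - v r 0 * 0)) (volume.restrict (Ioi 0)) :=
      (hdm 1).sub (hdiv.mul (((hvm 2).mul (hvm 1).neg).sub ((hvm 0).mul aemeasurable_const)))
    have m2 : AEMeasurable (fun r : ℝ => deriv (fun t => v t 2) r
        - a / r * (v r 0 * v r 0 - v r 1 * -v r 1)) (volume.restrict (Ioi 0)) :=
      (hdm 2).sub (hdiv.mul (((hvm 0).mul (hvm 0)).sub ((hvm 1).mul (hvm 1).neg)))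
    exact (((m0.pow_const 2).add (m1.pow_const 2)).add (m2.pow_const 2)).mul hid
  -- integrability of Q and of the derivative of the third component
  have hQint : IntegrableOn Q (Ioi 0) := by
    apply Integrable.mono' (hint.const_mul 2) hQm
    filter_upwards [ae_restrict_mem measurableSet_Ioi] with r hr
    rw [Real.norm_eq_abs, abs_of_nonneg (hQnonneg r hr)]
    exact hQle r hr
  have hd2int : IntegrableOn (fun r => deriv (fun t => v t 2) r) (Ioi 0) := by
    have h : IntegrableOn (fun r => (F r - Q r) / (2*a)) (Ioi 0) := (hint.sub hQint).div_const _
    apply h.congr_fun ?_ measurableSet_Ioi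
    intro r hr
    show (F r - Q r) / (2 * a) = deriv (fun t => v t 2) r
    rw [hpoint r hr]
    field_simp
    ring
  -- fundamental theorem of calculus : ∫ v₃' = 2
  have hFTC : ∫ r in Ioi (0:ℝ), deriv (fun t => v t 2) r = 2 := by
    have hexpderiv : ∀ x ∈ (univ : Set ℝ), HasDerivWithinAt Real.exp (Real.exp x) univ x :=
      fun x _ => (Real.hasDerivAt_exp x).hasDerivWithinAt
    have hinj : InjOn Real.exp univ := Real.exp_injective.injOn
    have himg : Real.exp '' univ = Ioi (0:ℝ) := by rw [image_univ, Real.range_exp]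
    have hchg := integral_image_eq_integral_abs_deriv_smul MeasurableSet.univ hexpderiv hinj
        (fun r => deriv (fun t => v t 2) r)
    rw [himg, setIntegral_univ] at hchg
    have hg : ∀ x : ℝ, HasDerivAt (fun y => v (Real.exp y) 2)
        (deriv (fun t => v t 2) (Real.exp x) * Real.exp x) x := fun x =>
      ((hdiff 2 (Real.exp x) (Real.exp_pos x)).hasDerivAt).comp x (Real.hasDerivAt_exp x)
    have hint2 : Integrable (fun x => |Real.exp x| • deriv (fun t => v t 2) (Real.exp x)) := by
      rw [← integrableOn_univ,
        ← integrableOn_image_iff_integrableOn_abs_deriv_smul MeasurableSet.univ hexpderiv hinj]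
      rwa [himg]
    have hint3 : Integrable (fun x => deriv (fun t => v t 2) (Real.exp x) * Real.exp x) := by
      apply hint2.congr
      filter_upwards with x
      rw [abs_of_pos (Real.exp_pos x), smul_eq_mul, mul_comm]
    have htop : Tendsto (fun x => v (Real.exp x) 2) atTop (nhds 1) := by
      have h2 : Tendsto (fun r => v r 2) atTop (nhds 1) := by
        have := ((continuous_apply (2 : Fin 3)).tendsto _).comp hliminf
        simpa [Function.comp_def] using this
      exact h2.comp Real.tendsto_exp_atTop
    have hbot : Tendsto (fun x => v (Real.exp x) 2) atBot (nhds (-1)) := by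
      have h0 : Tendsto (fun r => v r 2) (nhdsWithin 0 (Ioi 0)) (nhds (-1)) := by
        have := ((continuous_apply (2 : Fin 3)).tendsto _).comp hlim0
        simpa [Function.comp_def] using this
      have hexp : Tendsto Real.exp atBot (nhdsWithin 0 (Ioi 0)) := by
        apply tendsto_nhdsWithin_of_tendsto_nhds_of_eventually_within _ Real.tendsto_exp_atBot
        exact Eventually.of_forall fun x => Real.exp_pos x
      exact h0.comp hexp
    have hFTC0 := integral_of_hasDerivAt_of_tendsto hg hint3 hbot htop
    rw [hchg]
    rw [show (1:ℝ) - (-1) = 2 by norm_num] at hFTC0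
    rw [← hFTC0]
    congr 1
    ext x
    rw [abs_of_pos (Real.exp_pos x), smul_eq_mul, mul_comm]
  -- splitting the energy integral
  have hsplit : ∫ r in Ioi (0:ℝ), F r = (∫ r in Ioi (0:ℝ), Q r) + 4 * a := by
    have heq : ∫ r in Ioi (0:ℝ), F r
        = ∫ r in Ioi (0:ℝ), (Q r + 2 * a * deriv (fun t => v t 2) r) :=
      setIntegral_congr_fun measurableSet_Ioi fun r hr => hpoint r hr
    rw [heq, integral_add hQint (hd2int.const_mul (2*a)), integral_const_mul, hFTC]
    ring
  have hQInn : 0 ≤ ∫ r in Ioi (0:ℝ), Q r := setIntegral_nonneg measurableSet_Ioi hQnonneg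
  refine ⟨?_, ?_, ?_⟩
  · rw [hsplit]
    nlinarith [pi_pos, hQInn]
  · constructor
    · intro h
      have h0 : ∫ r in Ioi (0:ℝ), Q r = 0 := by
        rw [hsplit] at h
        have hπ := pi_pos
        nlinarith
      have hnonneg : 0 ≤ᵐ[volume.restrict (Ioi (0:ℝ))] Q := by
        filter_upwards [ae_restrict_mem measurableSet_Ioi] with r hr using hQnonneg r hr
      have hae : Q =ᵐ[volume.restrict (Ioi (0:ℝ))] 0 :=
        (integral_eq_zero_iff_of_nonneg_ae hnonneg hQint).mp h0
      filter_upwards [hae, ae_restrict_mem measurableSet_Ioi] with r hQ0 hr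
      intro i
      have hr0 : r ≠ 0 := (ne_of_gt hr)
      have hsum0 : ∑ j, (deriv (fun t => v t j) r -
          a / r * (crossProduct (v r)) ![-(v r 1), v r 0, 0] j) ^ 2 = 0 := by
        have : Q r = 0 := hQ0
        simp only [hQdef] at this
        rcases mul_eq_zero.mp this with h | h
        · exact h
        · exact absurd h hr0
      have hterm := (Finset.sum_eq_zero_iff_of_nonneg (fun j _ => sq_nonneg _)).mp
        hsum0 i (Finset.mem_univ i)
      have := pow_eq_zero_iff (n := 2) (by norm_num) |>.mp hterm
      linarith [sub_eq_zero.mp this]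
    · intro h
      have h0 : ∫ r in Ioi (0:ℝ), Q r = 0 := by
        rw [integral_eq_zero_iff_of_nonneg_ae ?_ hQint]
        · filter_upwards [h] with r hr
          simp only [Pi.zero_apply, hQdef]
          rw [Finset.sum_eq_zero fun i _ => by rw [hr i]; ring, zero_mul]
        · filter_upwards [ae_restrict_mem measurableSet_Ioi] with r hr using hQnonneg r hr
      rw [hsplit, h0]
      ring
  · intro r hr i
    exact harmonic_profile_eq a r hr i
end

section
/- The explicit profile h(r) = (2/(r^m + r^{-m}), 0, (r^m − r^{-m})/(r^m + r^{-m})) for m ≥ 1 satisfies |h(r)| ≡ 1, (h₁)_r = −(m/r) h₁ h₃, and (h₃)_r = (m/r) h₁². -/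
open Real Set

/-- The harmonic map profile h(r) = (2/(r^m+r^{-m}), 0, (r^m−r^{-m})/(r^m+r^{-m}))
satisfies |h| ≡ 1, (h₁)_r = −(m/r)h₁h₃, (h₃)_r = (m/r)h₁². -/
theorem harmonic_profile_identities (m : ℕ) (hm : 1 ≤ m) :
    ∀ r ∈ Set.Ioi (0:ℝ),
      (2 / (r ^ (m:ℝ) + r ^ (-(m:ℝ)))) ^ 2 +
        ((r ^ (m:ℝ) - r ^ (-(m:ℝ))) / (r ^ (m:ℝ) + r ^ (-(m:ℝ)))) ^ 2 = 1 ∧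
      deriv (fun t : ℝ => 2 / (t ^ (m:ℝ) + t ^ (-(m:ℝ)))) r =
        -((m:ℝ) / r) * (2 / (r ^ (m:ℝ) + r ^ (-(m:ℝ)))) *
          ((r ^ (m:ℝ) - r ^ (-(m:ℝ))) / (r ^ (m:ℝ) + r ^ (-(m:ℝ)))) ∧
      deriv (fun t : ℝ => (t ^ (m:ℝ) - t ^ (-(m:ℝ))) / (t ^ (m:ℝ) + t ^ (-(m:ℝ)))) r =
        ((m:ℝ) / r) * (2 / (r ^ (m:ℝ) + r ^ (-(m:ℝ)))) ^ 2 := by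
  intro r hr
  have hr0 : (0:ℝ) < r := hr
  have ha : (0:ℝ) < r ^ (m:ℝ) := Real.rpow_pos_of_pos hr0 _
  have hb : (0:ℝ) < r ^ (-(m:ℝ)) := Real.rpow_pos_of_pos hr0 _
  have hs : (0:ℝ) < r ^ (m:ℝ) + r ^ (-(m:ℝ)) := by linarith
  have hab : r ^ (m:ℝ) * r ^ (-(m:ℝ)) = 1 := by
    rw [← Real.rpow_add hr0]; simp
  have hA : HasDerivAt (fun t : ℝ => t ^ (m:ℝ)) ((m:ℝ) * r ^ ((m:ℝ) - 1)) r :=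
    Real.hasDerivAt_rpow_const (Or.inl hr0.ne')
  have hB : HasDerivAt (fun t : ℝ => t ^ (-(m:ℝ))) ((-(m:ℝ)) * r ^ ((-(m:ℝ)) - 1)) r :=
    Real.hasDerivAt_rpow_const (Or.inl hr0.ne')
  have hS : HasDerivAt (fun t : ℝ => t ^ (m:ℝ) + t ^ (-(m:ℝ)))
      ((m:ℝ) * r ^ ((m:ℝ) - 1) + (-(m:ℝ)) * r ^ ((-(m:ℝ)) - 1)) r := hA.add hB
  have hD : HasDerivAt (fun t : ℝ => t ^ (m:ℝ) - t ^ (-(m:ℝ)))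
      ((m:ℝ) * r ^ ((m:ℝ) - 1) - (-(m:ℝ)) * r ^ ((-(m:ℝ)) - 1)) r := hA.sub hB
  have hpow1 : r ^ ((m:ℝ) - 1) = r ^ (m:ℝ) / r := by
    rw [Real.rpow_sub hr0, Real.rpow_one]
  have hpow2 : r ^ ((-(m:ℝ)) - 1) = r ^ (-(m:ℝ)) / r := by
    rw [Real.rpow_sub hr0, Real.rpow_one]
  have hbinv : r ^ (-(m:ℝ)) = (r ^ m)⁻¹ := by
    rw [← Real.rpow_natCast r m, ← Real.rpow_neg hr0.le]
  have hm0 : r ^ m ≠ 0 := (pow_pos hr0 m).ne'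
  refine ⟨?_, ?_, ?_⟩
  · rw [hbinv, Real.rpow_natCast]
    have h4 : (r ^ m)⁻¹ * r ^ m = 1 := inv_mul_cancel₀ hm0
    field_simp
    ring
  · have h1 : HasDerivAt (fun t : ℝ => 2 / (t ^ (m:ℝ) + t ^ (-(m:ℝ))))
        ((0 * (r ^ (m:ℝ) + r ^ (-(m:ℝ))) -
          2 * ((m:ℝ) * r ^ ((m:ℝ) - 1) + (-(m:ℝ)) * r ^ ((-(m:ℝ)) - 1))) /
            (r ^ (m:ℝ) + r ^ (-(m:ℝ))) ^ 2) r :=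
      (hasDerivAt_const r (2:ℝ)).div hS hs.ne'
    rw [h1.deriv, hpow1, hpow2, hbinv]
    field_simp
    ring
  · have h3 : HasDerivAt (fun t : ℝ => (t ^ (m:ℝ) - t ^ (-(m:ℝ))) / (t ^ (m:ℝ) + t ^ (-(m:ℝ))))
        ((((m:ℝ) * r ^ ((m:ℝ) - 1) - (-(m:ℝ)) * r ^ ((-(m:ℝ)) - 1)) *
            (r ^ (m:ℝ) + r ^ (-(m:ℝ))) -
          (r ^ (m:ℝ) - r ^ (-(m:ℝ))) *
            ((m:ℝ) * r ^ ((m:ℝ) - 1) + (-(m:ℝ)) * r ^ ((-(m:ℝ)) - 1))) /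
            (r ^ (m:ℝ) + r ^ (-(m:ℝ))) ^ 2) r := hD.div hS hs.ne'
    rw [h3.deriv, hpow1, hpow2, hbinv, Real.rpow_natCast]
    field_simp
    ring
end

section
/- If ṽ : ℝ → S² satisfies Ẽ(ṽ) := (1/2)∫_ℝ (|ṽ'|² + ṽ₁² + ṽ₂²) dy < ∞, then Ẽ(ṽ) = (1/2)∫_ℝ |ṽ' − ṽ × Rṽ|² dy + (ṽ₃(∞) − ṽ₃(−∞)); in particular if ṽ(−∞) = −k̂ and ṽ(∞) = k̂ then Ẽ(ṽ) ≥ 2, with equality iff ṽ' = ṽ × Rṽ a.e. -/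
open MeasureTheory Real Set Filter

/-- Energy identity and topological lower bound in the y-variable:
Ẽ(ṽ) = (1/2)∫|ṽ' − ṽ×Rṽ|² dy + (ṽ₃(∞) − ṽ₃(−∞)); if ṽ(−∞) = −k̂ and ṽ(∞) = k̂ then
Ẽ(ṽ) ≥ 2, with equality iff ṽ' = ṽ × Rṽ a.e. -/
theorem energy_identity_y_variable (v : ℝ → Fin 3 → ℝ)
    (hsphere : ∀ y : ℝ, ∑ i, v y i ^ 2 = 1)
    (hdiff : ∀ i, Differentiable ℝ (fun t => v t i))
    (hint : Integrable (fun y =>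
      (∑ i, (deriv (fun t => v t i) y) ^ 2) + (v y 0) ^ 2 + (v y 1) ^ 2))
    (a b : Fin 3 → ℝ)
    (hlimbot : Tendsto v atBot (nhds a))
    (hlimtop : Tendsto v atTop (nhds b)) :
    ((1 / 2) * (∫ y : ℝ,
        ((∑ i, (deriv (fun t => v t i) y) ^ 2) + (v y 0) ^ 2 + (v y 1) ^ 2))
      = (1 / 2) * (∫ y : ℝ, ∑ i,
          (deriv (fun t => v t i) y -
            crossProduct (v y) ![-(v y 1), v y 0, 0] i) ^ 2)
        + (b 2 - a 2)) ∧
    (a = ![0, 0, -1] → b = ![0, 0, 1] →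
      (2 ≤ (1 / 2) * ∫ y : ℝ,
          ((∑ i, (deriv (fun t => v t i) y) ^ 2) + (v y 0) ^ 2 + (v y 1) ^ 2)) ∧
      ((1 / 2) * (∫ y : ℝ,
          ((∑ i, (deriv (fun t => v t i) y) ^ 2) + (v y 0) ^ 2 + (v y 1) ^ 2)) = 2 ↔
        ∀ᵐ y : ℝ, ∀ i, deriv (fun t => v t i) y =
          crossProduct (v y) ![-(v y 1), v y 0, 0] i)) := by
  -- orthogonality v · v' = 0
  have hp : ∀ y : ℝ, v y 0 * deriv (fun t => v t 0) y + v y 1 * deriv (fun t => v t 1) y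
      + v y 2 * deriv (fun t => v t 2) y = 0 := by
    intro y
    have h0 := ((hdiff 0) y).hasDerivAt
    have h1 := ((hdiff 1) y).hasDerivAt
    have h2 := ((hdiff 2) y).hasDerivAt
    have hsum := ((h0.pow 2).add ((h1.pow 2).add (h2.pow 2)))
    have hconst : (fun t => (v t 0) ^ 2 + ((v t 1) ^ 2 + (v t 2) ^ 2)) = fun _ => (1 : ℝ) := by
      funext t
      have := hsphere t
      rw [Fin.sum_univ_three] at this
      linarith
    change HasDerivAt (fun t => (v t 0) ^ 2 + ((v t 1) ^ 2 + (v t 2) ^ 2)) _ y at hsum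
    rw [hconst] at hsum
    have h0' := hsum.unique (hasDerivAt_const y 1)
    simp only [Nat.reduceSub, pow_one] at h0'
    norm_num at h0'
    linarith
  have hs3 : ∀ y : ℝ, (v y 0) ^ 2 + (v y 1) ^ 2 + (v y 2) ^ 2 = 1 := by
    intro y; have := hsphere y; rw [Fin.sum_univ_three] at this; linarith
  -- key pointwise identity
  have key : ∀ y : ℝ, (∑ i, (deriv (fun t => v t i) y) ^ 2) + (v y 0) ^ 2 + (v y 1) ^ 2
      = (∑ i, (deriv (fun t => v t i) y -
            crossProduct (v y) ![-(v y 1), v y 0, 0] i) ^ 2)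
        + 2 * deriv (fun t => v t 2) y := by
    intro y
    have hs := hs3 y
    have hpy := hp y
    simp only [cross_apply, Fin.sum_univ_three, Matrix.cons_val_zero, Matrix.cons_val_one,
      Matrix.head_cons, Matrix.cons_val_two, Matrix.tail_cons]
    linear_combination (2 * deriv (fun t => v t 2) y - v y 0 ^ 2 - v y 1 ^ 2) * hs
      - 2 * v y 2 * hpy
  -- second identity: G + 2 d2 is a sum of squares
  have key2 : ∀ y : ℝ, (∑ i, (deriv (fun t => v t i) y) ^ 2) + (v y 0) ^ 2 + (v y 1) ^ 2
      + 2 * deriv (fun t => v t 2) y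
      = (deriv (fun t => v t 0) y - v y 0 * v y 2) ^ 2
        + (deriv (fun t => v t 1) y - v y 1 * v y 2) ^ 2
        + (deriv (fun t => v t 2) y + ((v y 0) ^ 2 + (v y 1) ^ 2)) ^ 2 := by
    intro y
    have hs := hs3 y
    have hpy := hp y
    rw [Fin.sum_univ_three]
    linear_combination 2 * v y 2 * hpy
      - (2 * deriv (fun t => v t 2) y + v y 0 ^ 2 + v y 1 ^ 2) * hs
  set d2 : ℝ → ℝ := fun y => deriv (fun t => v t 2) y with hd2
  set G : ℝ → ℝ := fun y =>
    (∑ i, (deriv (fun t => v t i) y) ^ 2) + (v y 0) ^ 2 + (v y 1) ^ 2 with hG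
  have hGnn : ∀ y, 0 ≤ G y := by
    intro y
    have : 0 ≤ ∑ i, (deriv (fun t => v t i) y) ^ 2 :=
      Finset.sum_nonneg fun i _ => sq_nonneg _
    simp only [hG]
    positivity
  -- integrability of d2
  have hd2int : Integrable d2 := by
    refine Integrable.mono' hint (measurable_deriv _).aestronglyMeasurable ?_
    refine Eventually.of_forall fun y => ?_
    rw [Real.norm_eq_abs, abs_le]
    have hds : (0:ℝ) ≤ ∑ i, (deriv (fun t => v t i) y) ^ 2 :=
      Finset.sum_nonneg fun i _ => sq_nonneg _
    constructor
    · have h2 := key2 y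
      simp only [hG, hd2]
      nlinarith [sq_nonneg (deriv (fun t => v t 0) y - v y 0 * v y 2),
        sq_nonneg (deriv (fun t => v t 1) y - v y 1 * v y 2),
        sq_nonneg (deriv (fun t => v t 2) y + ((v y 0) ^ 2 + (v y 1) ^ 2)),
        hds, sq_nonneg (v y 0), sq_nonneg (v y 1)]
    · have h1 := key y
      have hSnn : 0 ≤ ∑ i, (deriv (fun t => v t i) y -
          crossProduct (v y) ![-(v y 1), v y 0, 0] i) ^ 2 :=
        Finset.sum_nonneg fun i _ => sq_nonneg _
      simp only [hG, hd2]
      nlinarith [h1, hSnn, hds, sq_nonneg (v y 0), sq_nonneg (v y 1)]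
  -- FTC on ℝ
  have hft : ∫ y : ℝ, d2 y = b 2 - a 2 := by
    refine integral_of_hasDerivAt_of_tendsto (f := fun y => v y 2)
      (fun x => ((hdiff 2) x).hasDerivAt) hd2int ?_ ?_
    · exact ((continuous_apply (2 : Fin 3)).tendsto a).comp hlimbot
    · exact ((continuous_apply (2 : Fin 3)).tendsto b).comp hlimtop
  set S : ℝ → ℝ := fun y => ∑ i, (deriv (fun t => v t i) y -
      crossProduct (v y) ![-(v y 1), v y 0, 0] i) ^ 2 with hS
  have hSeq : ∀ y, S y = G y - 2 * d2 y := by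
    intro y; have := key y; simp only [hS, hG, hd2]; linarith
  have hSint : Integrable S := by
    have h1 : Integrable (fun y => G y - 2 * d2 y) := hint.sub (hd2int.const_mul 2)
    exact h1.congr (Eventually.of_forall fun y => (hSeq y).symm)
  have hSval : ∫ y : ℝ, S y = (∫ y : ℝ, G y) - 2 * (b 2 - a 2) := by
    have : ∫ y : ℝ, S y = ∫ y : ℝ, (G y - 2 * d2 y) :=
      integral_congr_ae (Eventually.of_forall fun y => hSeq y)
    rw [this, integral_sub hint (hd2int.const_mul 2), integral_const_mul, hft]
  have hSnn : ∀ y, 0 ≤ S y := fun y => Finset.sum_nonneg fun i _ => sq_nonneg _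
  have main : (1 / 2) * (∫ y : ℝ, G y) = (1 / 2) * (∫ y : ℝ, S y) + (b 2 - a 2) := by
    rw [hSval]; ring
  refine ⟨main, fun ha hb => ?_⟩
  have ha2 : a 2 = -1 := by rw [ha]; rfl
  have hb2 : b 2 = 1 := by rw [hb]; rfl
  rw [ha2, hb2] at main
  have hSi_nn : 0 ≤ ∫ y : ℝ, S y := integral_nonneg hSnn
  constructor
  · linarith [main]
  · constructor
    · intro h
      have hzero : ∫ y : ℝ, S y = 0 := by linarith [main, h]
      have := (integral_eq_zero_iff_of_nonneg hSnn hSint).mp hzero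
      filter_upwards [this] with y hy
      intro i
      have hterm := (Finset.sum_eq_zero_iff_of_nonneg
        (fun i (_ : i ∈ Finset.univ) => sq_nonneg (deriv (fun t => v t i) y -
          crossProduct (v y) ![-(v y 1), v y 0, 0] i))).mp hy i (Finset.mem_univ i)
      have hz := sq_eq_zero_iff.mp hterm
      linarith [sub_eq_zero.mp hz]
    · intro h
      have hzero : ∫ y : ℝ, S y = 0 := by
        refine integral_eq_zero_of_ae ?_
        filter_upwards [h] with y hy
        simp only [hS, Pi.zero_apply]
        exact Finset.sum_eq_zero fun i _ => by rw [hy i]; ring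
      linarith [main, hzero]
end

section
/- The unique H¹_loc solution w : ℝ → S² of the ODE system w' = w × (Rw) with w(0) = (1,0,0)ᵀ is w(y) = (sech y, 0, tanh y)ᵀ. -/
open Real Set

lemma abs_tanh_le_one' (x : ℝ) : |Real.tanh x| ≤ 1 := by
  rw [Real.tanh_eq_sinh_div_cosh, abs_div, abs_of_pos (Real.cosh_pos x),
    div_le_one (Real.cosh_pos x), abs_le]
  rw [Real.sinh_eq, Real.cosh_eq]
  constructor <;> nlinarith [Real.exp_pos x, Real.exp_pos (-x)]

lemma hasDerivAt_tanh' (x : ℝ) :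
    HasDerivAt Real.tanh (1 - Real.tanh x ^ 2) x := by
  have hc := Real.cosh_pos x
  have h := (Real.hasDerivAt_sinh x).div (Real.hasDerivAt_cosh x) hc.ne'
  have heq : (Real.cosh x * Real.cosh x - Real.sinh x * Real.sinh x) / Real.cosh x ^ 2
      = 1 - Real.tanh x ^ 2 := by
    rw [Real.tanh_eq_sinh_div_cosh, div_pow]
    have := Real.cosh_sq_sub_sinh_sq x
    field_simp
  rw [heq] at h
  exact h.congr_of_eventuallyEq
    (by filter_upwards with y using Real.tanh_eq_sinh_div_cosh y)

/-- Gronwall-type vanishing lemma, forward time. -/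
lemma zero_of_deriv_abs_le_fwd (f : ℝ → ℝ) (hf : Differentiable ℝ f) (h0 : f 0 = 0)
    (hb : ∀ y, |deriv f y| ≤ 2 * |f y|) : ∀ t ≥ 0, f t = 0 := by
  intro t ht
  have := norm_le_gronwallBound_of_norm_deriv_right_le (f := f) (f' := deriv f)
    (δ := 0) (K := 2) (ε := 0) (a := 0) (b := t)
    (hf.continuous.continuousOn)
    (fun x _ => (hf x).hasDerivAt.hasDerivWithinAt)
    (by simp [h0])
    (fun x _ => by simpa using hb x)
    t ⟨ht, le_refl t⟩
  rw [gronwallBound_ε0] at this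
  simpa using this

lemma zero_of_deriv_abs_le (f : ℝ → ℝ) (hf : Differentiable ℝ f) (h0 : f 0 = 0)
    (hb : ∀ y, |deriv f y| ≤ 2 * |f y|) : ∀ t, f t = 0 := by
  intro t
  rcases le_or_gt 0 t with ht | ht
  · exact zero_of_deriv_abs_le_fwd f hf h0 hb t ht
  · set g : ℝ → ℝ := fun s => f (-s) with hg
    have hgd : Differentiable ℝ g := hf.comp differentiable_neg
    have hgb : ∀ y, |deriv g y| ≤ 2 * |g y| := by
      intro y
      have : deriv g y = -deriv f (-y) := deriv_comp_neg f y
      rw [this, abs_neg]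
      exact hb (-y)
    have := zero_of_deriv_abs_le_fwd g hgd (by simpa [hg] using h0) hgb (-t) (by linarith)
    simpa [hg] using this

/-- The unique solution w : ℝ → S² of w' = w × (Rw), w(0) = (1,0,0), is
w(y) = (sech y, 0, tanh y). -/
theorem ode_uniqueness_sech_tanh (w : ℝ → Fin 3 → ℝ)
    (hsphere : ∀ y : ℝ, ∑ i, w y i ^ 2 = 1)
    (hdiff : ∀ i, Differentiable ℝ (fun t => w t i))
    (hode : ∀ y : ℝ, ∀ i, deriv (fun t => w t i) y =
      crossProduct (w y) ![-(w y 1), w y 0, 0] i)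
    (hinit : w 0 = ![1, 0, 0]) :
    ∀ y : ℝ, w y = ![(Real.cosh y)⁻¹, 0, Real.tanh y] := by
  have hsum : ∀ y, w y 0 ^ 2 + w y 1 ^ 2 + w y 2 ^ 2 = 1 := by
    intro y; have := hsphere y; rwa [Fin.sum_univ_three] at this
  -- expand the ODE
  have hd0 : ∀ y, deriv (fun t => w t 0) y = -(w y 2 * w y 0) := by
    intro y; have := hode y 0; simpa [crossProduct] using this
  have hd1 : ∀ y, deriv (fun t => w t 1) y = -(w y 2 * w y 1) := by
    intro y; have := hode y 1
    simp [crossProduct] at this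
    linarith [this]
  have hd2 : ∀ y, deriv (fun t => w t 2) y = 1 - w y 2 ^ 2 := by
    intro y; have := hode y 2
    simp [crossProduct] at this
    have h := hsum y
    nlinarith [this]
  have habs2 : ∀ y, |w y 2| ≤ 1 := by
    intro y
    have h := hsum y
    nlinarith [sq_nonneg (w y 0), sq_nonneg (w y 1), sq_abs (w y 2), abs_nonneg (w y 2)]
  -- step 1 : w 2 = tanh
  have hw2 : ∀ y, w y 2 = Real.tanh y := by
    have hddiff : Differentiable ℝ (fun y => w y 2 - Real.tanh y) :=
      (hdiff 2).sub (fun y => (hasDerivAt_tanh' y).differentiableAt)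
    have key := zero_of_deriv_abs_le (fun y => w y 2 - Real.tanh y) hddiff
      (by simp [hinit, Real.tanh_zero])
      (by
        intro y
        have hder : deriv (fun y => w y 2 - Real.tanh y) y
            = (1 - w y 2 ^ 2) - (1 - Real.tanh y ^ 2) := by
          rw [deriv_fun_sub (hdiff 2 y) (hasDerivAt_tanh' y).differentiableAt, hd2,
            (hasDerivAt_tanh' y).deriv]
        rw [hder]
        have : (1 - w y 2 ^ 2) - (1 - Real.tanh y ^ 2)
            = -((w y 2 + Real.tanh y) * (w y 2 - Real.tanh y)) := by ring
        rw [this, abs_neg, abs_mul]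
        have h1 : |w y 2 + Real.tanh y| ≤ 2 := by
          have := habs2 y; have := abs_tanh_le_one' y
          calc |w y 2 + Real.tanh y| ≤ |w y 2| + |Real.tanh y| := abs_add_le _ _
            _ ≤ 2 := by linarith
        exact mul_le_mul_of_nonneg_right h1 (abs_nonneg _))
    intro y
    have := key y
    linarith
  -- step 2 : for linear components, w i * cosh is constant
  have hgconst : ∀ (i : Fin 3),
      (∀ z, deriv (fun t => w t i) z = -(w z 2 * w z i)) →
      ∀ y, w y i * Real.cosh y = w 0 i := by
    intro i hdi y
    have hderiv : ∀ z, deriv (fun t => w t i * Real.cosh t) z = 0 := by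
      intro z
      have hprod := ((hdiff i z).hasDerivAt.mul (Real.hasDerivAt_cosh z))
      rw [show deriv (fun t => w t i * Real.cosh t) z = _ from hprod.deriv, hdi z, hw2 z, Real.tanh_eq_sinh_div_cosh]
      have := (Real.cosh_pos z).ne'
      field_simp
      ring
    have hc := is_const_of_deriv_eq_zero
      (f := fun t => w t i * Real.cosh t)
      ((hdiff i).mul Real.differentiable_cosh) hderiv y 0
    simpa [Real.cosh_zero] using hc
  intro y
  have hcpos := Real.cosh_pos y
  funext i
  fin_cases i
  · have h := hgconst 0 hd0 y
    rw [hinit] at h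
    simp only [Matrix.cons_val_zero] at h ⊢
    show w y 0 = (Real.cosh y)⁻¹
    field_simp
    linarith
  · have h := hgconst 1 hd1 y
    rw [hinit] at h
    simp only [Matrix.cons_val_one, Matrix.head_cons] at h ⊢
    rcases mul_eq_zero.mp h with h' | h'
    · exact h'
    · exact absurd h' hcpos.ne'
  · simpa using hw2 y
end

section
/- There is a constant C such that: if v : (0,∞) → S² gives an m‑equivariant finite energy map u = e^{mθR}v with v(0) = −k̂, v(∞) = k̂, and E(u) = 4πm + ε₀, then the total variation of the third component v₃ on (0,∞) satisfies T_{(0,∞)}(v₃) ≤ 2 + ε₀/(2πm). -/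
open MeasureTheory Real Set Filter

/-- Total variation bound: if E(u) = 4πm + ε₀ for an m-equivariant finite-energy map
with v(0) = −k̂, v(∞) = k̂, then the total variation of v₃ on (0,∞) is at most
2 + ε₀/(2πm). -/
theorem total_variation_bound (m : ℕ) (hm : 1 ≤ m) (ε₀ : ℝ) (hε₀ : 0 ≤ ε₀)
    (v : ℝ → Fin 3 → ℝ)
    (hsphere : ∀ r ∈ Set.Ioi (0:ℝ), ∑ i, v r i ^ 2 = 1)
    (hdiff : ∀ i, ∀ r ∈ Set.Ioi (0:ℝ), DifferentiableAt ℝ (fun t => v t i) r)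
    (hlim0 : Tendsto v (nhdsWithin 0 (Set.Ioi 0)) (nhds ![0, 0, -1]))
    (hliminf : Tendsto v atTop (nhds ![0, 0, 1]))
    (hint : IntegrableOn (fun r =>
      ((∑ i, (deriv (fun t => v t i) r) ^ 2) +
        (m : ℝ) ^ 2 / r ^ 2 * ((v r 0) ^ 2 + (v r 1) ^ 2)) * r) (Set.Ioi 0))
    (hE : π * ∫ r in Set.Ioi (0:ℝ),
        ((∑ i, (deriv (fun t => v t i) r) ^ 2) +
          (m : ℝ) ^ 2 / r ^ 2 * ((v r 0) ^ 2 + (v r 1) ^ 2)) * r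
      = 4 * π * (m : ℝ) + ε₀) :
    eVariationOn (fun r => v r 2) (Set.Ioi 0) ≤
      ENNReal.ofReal (2 + ε₀ / (2 * π * (m : ℝ))) := by
  have hm' : (0:ℝ) < m := by exact_mod_cast hm
  have hπ : (0:ℝ) < π := Real.pi_pos
  set e : ℝ → ℝ := fun r =>
      ((∑ i, (deriv (fun t => v t i) r) ^ 2) +
        (m : ℝ) ^ 2 / r ^ 2 * ((v r 0) ^ 2 + (v r 1) ^ 2)) * r with he_def
  -- orthogonality relation from the sphere constraint
  have horth : ∀ r ∈ Ioi (0:ℝ),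
      v r 0 * deriv (fun t => v t 0) r + v r 1 * deriv (fun t => v t 1) r
        + v r 2 * deriv (fun t => v t 2) r = 0 := by
    intro r hr
    have hD : HasDerivAt (fun t => ∑ i, v t i ^ 2)
        (∑ i, (2:ℕ) * v r i ^ 1 * deriv (fun t => v t i) r) r := by
      apply HasDerivAt.fun_sum
      intro i _
      exact (hdiff i r hr).hasDerivAt.pow 2
    have hEE : (fun t => ∑ i, v t i ^ 2) =ᶠ[nhds r] fun _ => (1:ℝ) := by
      filter_upwards [isOpen_Ioi.mem_nhds hr] with t ht using hsphere t ht
    have hD0 : HasDerivAt (fun t => ∑ i, v t i ^ 2) 0 r :=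
      (hasDerivAt_const r (1:ℝ)).congr_of_eventuallyEq hEE
    have huniq := hD.unique hD0
    rw [Fin.sum_univ_three] at huniq
    simp only [pow_one, Nat.cast_ofNat] at huniq
    linarith
  -- pointwise key inequality
  have hkey : ∀ r ∈ Ioi (0:ℝ), 2 * (m:ℝ) * |deriv (fun t => v t 2) r| ≤ e r := by
    intro r hr
    have hr0 : (0:ℝ) < r := hr
    have hO := horth r hr
    have hS := hsphere r hr
    rw [Fin.sum_univ_three] at hS
    set a := deriv (fun t => v t 0) r with ha
    set b := deriv (fun t => v t 1) r with hb
    set c := deriv (fun t => v t 2) r with hc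
    set x := v r 0
    set y := v r 1
    set z := v r 2
    have h1 : z * c = -(x * a + y * b) := by linarith
    have h2 : (z*c)^2 = (x*a + y*b)^2 := by rw [h1]; ring
    have hc2 : c^2 ≤ (x^2 + y^2) * (a^2 + b^2 + c^2) := by
      nlinarith [sq_nonneg (x*b - y*a), sq_nonneg c]
    have hS3 : (0:ℝ) ≤ a^2 + b^2 + c^2 := by positivity
    set S : ℝ := a^2 + b^2 + c^2 with hSdef
    set ρ2 : ℝ := x^2 + y^2 with hρ
    have hρ0 : (0:ℝ) ≤ ρ2 := by positivity
    have h4 : 4 * (m:ℝ)^2 * r^2 * c^2 ≤ (S * r^2 + (m:ℝ)^2 * ρ2)^2 := by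
      have h5 : 4 * (m:ℝ)^2 * r^2 * c^2 ≤ 4 * (m:ℝ)^2 * r^2 * (ρ2 * S) :=
        mul_le_mul_of_nonneg_left hc2 (by positivity)
      nlinarith [sq_nonneg (S * r^2 - (m:ℝ)^2 * ρ2)]
    have h4' : (2 * (m:ℝ) * r * |c|)^2 ≤ (S * r^2 + (m:ℝ)^2 * ρ2)^2 := by
      calc (2 * (m:ℝ) * r * |c|)^2 = 4 * (m:ℝ)^2 * r^2 * c^2 := by
            rw [mul_pow, sq_abs]; ring
        _ ≤ _ := h4
    have hR : (0:ℝ) ≤ S * r^2 + (m:ℝ)^2 * ρ2 := by positivity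
    have h6 : 2 * (m:ℝ) * r * |c| ≤ S * r^2 + (m:ℝ)^2 * ρ2 := by
      have := Real.sqrt_le_sqrt h4'
      rwa [Real.sqrt_sq (by positivity), Real.sqrt_sq hR] at this
    have heq : e r = (S * r^2 + (m:ℝ)^2 * ρ2) / r := by
      rw [he_def]
      simp only [Fin.sum_univ_three]
      rw [← ha, ← hb, ← hc]
      field_simp
      ring
    rw [heq, le_div_iff₀ hr0]
    linarith
  -- e is nonneg on Ioi 0
  have he_nonneg : ∀ r ∈ Ioi (0:ℝ), 0 ≤ e r := by
    intro r hr
    calc (0:ℝ) ≤ 2 * (m:ℝ) * |deriv (fun t => v t 2) r| := by positivity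
      _ ≤ e r := hkey r hr
  -- integrability of |deriv v₃|
  have hmeas : AEStronglyMeasurable (fun r => |deriv (fun t => v t 2) r|)
      (volume.restrict (Ioi (0:ℝ))) :=
    ((measurable_deriv _).abs).aestronglyMeasurable
  have hint_abs : IntegrableOn (fun r => |deriv (fun t => v t 2) r|) (Ioi 0) := by
    apply Integrable.mono' (hint.div_const (2*(m:ℝ))) hmeas
    filter_upwards [ae_restrict_mem measurableSet_Ioi] with r hr
    rw [Real.norm_eq_abs, abs_abs, le_div_iff₀ (by positivity : (0:ℝ) < 2*(m:ℝ))]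
    have := hkey r hr
    linarith
  have hint_d : IntegrableOn (fun r => deriv (fun t => v t 2) r) (Ioi 0) := by
    apply Integrable.mono' hint_abs (measurable_deriv _).aestronglyMeasurable
    filter_upwards with r using le_of_eq (Real.norm_eq_abs _)
  -- value of the energy integral
  have hI : ∫ r in Ioi (0:ℝ), e r = 4 * (m:ℝ) + ε₀ / π := by
    field_simp
    linarith
  -- bound on ∫ |deriv v₃|
  have hIbound : ∫ r in Ioi (0:ℝ), |deriv (fun t => v t 2) r|
      ≤ 2 + ε₀ / (2 * π * (m:ℝ)) := by
    have h1 : ∫ r in Ioi (0:ℝ), 2 * (m:ℝ) * |deriv (fun t => v t 2) r|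
        ≤ ∫ r in Ioi (0:ℝ), e r := by
      apply setIntegral_mono_on ((hint_abs.const_mul _)) hint measurableSet_Ioi
      intro r hr
      exact hkey r hr
    rw [integral_const_mul, hI] at h1
    have h2 : ∫ r in Ioi (0:ℝ), |deriv (fun t => v t 2) r|
        ≤ (4 * (m:ℝ) + ε₀ / π) / (2 * (m:ℝ)) := by
      rw [le_div_iff₀ (by positivity : (0:ℝ) < 2*(m:ℝ))]
      linarith
    have h3 : (4 * (m:ℝ) + ε₀ / π) / (2 * (m:ℝ)) = 2 + ε₀ / (2 * π * (m:ℝ)) := by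
      field_simp
      ring
    linarith [h2, h3.le, h3.ge]
  -- FTC: variation over an interval
  have hftc : ∀ a b : ℝ, 0 < a → a ≤ b →
      |v b 2 - v a 2| ≤ ∫ r in Ioc a b, |deriv (fun t => v t 2) r| := by
    intro a b ha hab
    have hsub : Ioc a b ⊆ Ioi (0:ℝ) := fun t ht => lt_trans ha ht.1
    have hii : IntervalIntegrable (fun r => deriv (fun t => v t 2) r) volume a b := by
      rw [intervalIntegrable_iff_integrableOn_Ioc_of_le hab]
      exact hint_d.mono_set hsub
    have heq : ∫ t in a..b, deriv (fun t => v t 2) t = v b 2 - v a 2 := by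
      apply intervalIntegral.integral_deriv_eq_sub
      · intro t ht
        rw [uIcc_of_le hab] at ht
        exact hdiff 2 t (lt_of_lt_of_le ha ht.1)
      · exact hii
    rw [← heq]
    calc |∫ t in a..b, deriv (fun t => v t 2) t|
        ≤ ∫ t in a..b, |deriv (fun t => v t 2) t| :=
          intervalIntegral.abs_integral_le_integral_abs hab
      _ = ∫ r in Ioc a b, |deriv (fun t => v t 2) r| :=
          intervalIntegral.integral_of_le hab
  -- conclude: bound each partition sum
  refine iSup_le ?_
  rintro ⟨n, u, hu, hus⟩
  simp only
  have hchain : ∀ k : ℕ,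
      ∑ i ∈ Finset.range k, edist (v (u (i+1)) 2) (v (u i) 2)
        ≤ ENNReal.ofReal (∫ r in Ioc (u 0) (u k), |deriv (fun t => v t 2) r|) := by
    intro k
    induction k with
    | zero => simp
    | succ k ih =>
      rw [Finset.sum_range_succ]
      have habs_nonneg : ∀ s : Set ℝ,
          (0:ℝ) ≤ ∫ r in s, |deriv (fun t => v t 2) r| :=
        fun s => integral_nonneg fun r => abs_nonneg _
      have h1 : edist (v (u (k+1)) 2) (v (u k) 2)
          ≤ ENNReal.ofReal (∫ r in Ioc (u k) (u (k+1)), |deriv (fun t => v t 2) r|) := by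
        rw [edist_dist, Real.dist_eq]
        exact ENNReal.ofReal_le_ofReal (hftc (u k) (u (k+1)) (hus k) (hu (Nat.le_succ k)))
      calc ∑ i ∈ Finset.range k, edist (v (u (i+1)) 2) (v (u i) 2)
            + edist (v (u (k+1)) 2) (v (u k) 2)
          ≤ ENNReal.ofReal (∫ r in Ioc (u 0) (u k), |deriv (fun t => v t 2) r|)
            + ENNReal.ofReal (∫ r in Ioc (u k) (u (k+1)), |deriv (fun t => v t 2) r|) :=
            add_le_add ih h1
        _ = ENNReal.ofReal ((∫ r in Ioc (u 0) (u k), |deriv (fun t => v t 2) r|)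
            + ∫ r in Ioc (u k) (u (k+1)), |deriv (fun t => v t 2) r|) :=
            (ENNReal.ofReal_add (habs_nonneg _) (habs_nonneg _)).symm
        _ = ENNReal.ofReal (∫ r in Ioc (u 0) (u (k+1)), |deriv (fun t => v t 2) r|) := by
            congr 1
            rw [← Ioc_union_Ioc_eq_Ioc (hu (Nat.zero_le k)) (hu (Nat.le_succ k)),
              setIntegral_union (Set.Ioc_disjoint_Ioc_of_le le_rfl) measurableSet_Ioc
                (hint_abs.mono_set fun t ht => lt_trans (hus 0) ht.1)
                (hint_abs.mono_set fun t ht => lt_trans (hus k) ht.1)]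
  calc ∑ i ∈ Finset.range n, edist (v (u (i+1)) 2) (v (u i) 2)
      ≤ ENNReal.ofReal (∫ r in Ioc (u 0) (u n), |deriv (fun t => v t 2) r|) := hchain n
    _ ≤ ENNReal.ofReal (∫ r in Ioi (0:ℝ), |deriv (fun t => v t 2) r|) := by
        apply ENNReal.ofReal_le_ofReal
        apply setIntegral_mono_set hint_abs
        · filter_upwards with r using abs_nonneg _
        · exact HasSubset.Subset.eventuallyLE fun t ht => lt_trans (hus 0) ht.1
    _ ≤ ENNReal.ofReal (2 + ε₀ / (2 * π * (m:ℝ))) := ENNReal.ofReal_le_ofReal hIbound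
end
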